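/- arXiv:2302.08131 — 4 statements merged into one kernel-verified Lean document; each statement's English description precedes it below -/
import Mathlib

section
/- In a weak Hopf algebra, the Haar integral, if it exists, is unique: if h and h' are both Haar integrals, then h = h'. -/
open TensorProduct

/-- A weak Hopf algebra over a commutative ring `R`: an `R`-algebra `W` together with
a coalgebra structure `(comul, counit)` which is multiplicative but only weakly unital
and counital, and an antipode `S` satisfying the weak Hopf axioms
`μ∘(id⊗S)∘Δ = ε_L`, `μ∘(S⊗id)∘Δ = ε_R` and `S(h) = Σ S(h⁽¹⁾)h⁽²⁾S(h⁽³⁾)`,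
where `ε_L(h) = (ε⊗id)(Δ(1)(h⊗1))` and `ε_R(h) = (id⊗ε)((1⊗h)Δ(1))`. -/
structure WeakHopf (R : Type*) (W : Type*) [CommRing R] [Ring W] [Algebra R W] where
  comul : W →ₗ[R] W ⊗[R] W
  counit : W →ₗ[R] R
  antipode : W →ₗ[R] W
  coassoc :
    (TensorProduct.assoc R W W W).toLinearMap ∘ₗ comul.rTensor W ∘ₗ comul
      = comul.lTensor W ∘ₗ comul
  counit_comul_left :
    (TensorProduct.lid R W).toLinearMap ∘ₗ counit.rTensor W ∘ₗ comul = LinearMap.id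
  counit_comul_right :
    (TensorProduct.rid R W).toLinearMap ∘ₗ counit.lTensor W ∘ₗ comul = LinearMap.id
  comul_mul : ∀ u v : W, comul (u * v) = comul u * comul v
  weak_counit_mul : ∀ u v w : W,
    counit (u * v * w)
      = LinearMap.mul' R R
          ((TensorProduct.map (counit ∘ₗ LinearMap.mulLeft R u)
            (counit ∘ₗ LinearMap.mulRight R w)) (comul v))
  weak_counit_mul' : ∀ u v w : W,
    counit (u * v * w)
      = LinearMap.mul' R R
          ((TensorProduct.map (counit ∘ₗ LinearMap.mulLeft R u)
            (counit ∘ₗ LinearMap.mulRight R w)) ((TensorProduct.comm R W W) (comul v)))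
  weak_comul_one :
    (comul.rTensor W) (comul 1)
      = (comul 1 ⊗ₜ[R] (1 : W))
          * ((TensorProduct.assoc R W W W).symm ((1 : W) ⊗ₜ[R] comul 1))
  weak_comul_one' :
    (comul.rTensor W) (comul 1)
      = ((TensorProduct.assoc R W W W).symm ((1 : W) ⊗ₜ[R] comul 1))
          * (comul 1 ⊗ₜ[R] (1 : W))
  antipode_left : ∀ h : W,
    LinearMap.mul' R W ((antipode.lTensor W) (comul h))
      = (TensorProduct.lid R W) ((counit.rTensor W) (comul 1 * (h ⊗ₜ[R] (1 : W))))
  antipode_right : ∀ h : W,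
    LinearMap.mul' R W ((antipode.rTensor W) (comul h))
      = (TensorProduct.rid R W) ((counit.lTensor W) (((1 : W) ⊗ₜ[R] h) * comul 1))
  antipode_mid : ∀ h : W,
    antipode h
      = LinearMap.mul' R W ((LinearMap.rTensor W (LinearMap.mul' R W))
          ((TensorProduct.map (TensorProduct.map antipode LinearMap.id) antipode)
            ((comul.rTensor W) (comul h))))

namespace WeakHopf

variable {R : Type*} {W : Type*} [CommRing R] [Ring W] [Algebra R W]

/-- The left counital map `ε_L(h) = (ε⊗id)(Δ(1)(h⊗1)) = Σ ε(1⁽¹⁾h)1⁽²⁾`. -/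
noncomputable def epsL (H : WeakHopf R W) : W →ₗ[R] W :=
  (TensorProduct.lid R W).toLinearMap ∘ₗ H.counit.rTensor W ∘ₗ
    LinearMap.mulLeft R (H.comul 1) ∘ₗ (TensorProduct.mk R W W).flip 1

/-- The right counital map `ε_R(h) = (id⊗ε)((1⊗h)Δ(1)) = Σ 1⁽¹⁾ε(h1⁽²⁾)`. -/
noncomputable def epsR (H : WeakHopf R W) : W →ₗ[R] W :=
  (TensorProduct.rid R W).toLinearMap ∘ₗ H.counit.lTensor W ∘ₗ
    LinearMap.mulRight R (H.comul 1) ∘ₗ TensorProduct.mk R W W 1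

/-- A left integral: `x·l = ε_L(x)·l` for all `x`. -/
def IsLeftIntegral (H : WeakHopf R W) (l : W) : Prop := ∀ x : W, x * l = H.epsL x * l

/-- A right integral: `r·x = r·ε_R(x)` for all `x`. -/
def IsRightIntegral (H : WeakHopf R W) (r : W) : Prop := ∀ x : W, r * x = r * H.epsR x

/-- A Haar integral: a two-sided integral which is two-sided normalized. -/
def IsHaar (H : WeakHopf R W) (h : W) : Prop :=
  H.IsLeftIntegral h ∧ H.IsRightIntegral h ∧ H.epsL h = 1 ∧ H.epsR h = 1

end WeakHopf

/-- In a weak Hopf algebra, the Haar integral, if it exists, is unique. -/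
theorem haar_integral_unique {R : Type*} {W : Type*} [CommRing R] [Ring W] [Algebra R W]
    (H : WeakHopf R W) (h h' : W) (hh : H.IsHaar h) (hh' : H.IsHaar h') :
    h = h' := by
  obtain ⟨_, hr, hL, _⟩ := hh
  obtain ⟨hl', _, _, hR'⟩ := hh'
  have key : h * h' = h' := by rw [hl' h, hL, one_mul]
  rw [← key, hr h', hR', mul_one]
end

section
/- In a weak Hopf algebra W, for any y ∈ W_R and h ∈ W, the identity ε_L(h)·S(y) = ε_L(y·h) holds. -/
open TensorProduct

section Aux

variable {R : Type*} {W : Type*} [CommRing R] [Ring W] [Algebra R W]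
variable (H : WeakHopf R W) (s : Finset (W × W))

theorem aux_epsL (hs : H.comul 1 = ∑ p ∈ s, p.1 ⊗ₜ[R] p.2) (x : W) :
    H.epsL x = ∑ p ∈ s, H.counit (p.1 * x) • p.2 := by
  simp only [WeakHopf.epsL, LinearMap.comp_apply, LinearMap.flip_apply,
    TensorProduct.mk_apply, LinearMap.mulLeft_apply, hs, Finset.sum_mul,
    Algebra.TensorProduct.tmul_mul_tmul, mul_one, map_sum, LinearMap.rTensor_tmul,
    LinearEquiv.coe_coe, TensorProduct.lid_tmul]

theorem aux_epsR (hs : H.comul 1 = ∑ p ∈ s, p.1 ⊗ₜ[R] p.2) (x : W) :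
    H.epsR x = ∑ p ∈ s, H.counit (x * p.2) • p.1 := by
  simp only [WeakHopf.epsR, LinearMap.comp_apply, TensorProduct.mk_apply,
    LinearMap.mulRight_apply, hs, Finset.mul_sum,
    Algebra.TensorProduct.tmul_mul_tmul, one_mul, map_sum, LinearMap.lTensor_tmul,
    LinearEquiv.coe_coe, TensorProduct.rid_tmul]

theorem aux_counit_epsL (hs : H.comul 1 = ∑ p ∈ s, p.1 ⊗ₜ[R] p.2) (x h : W) :
    H.counit (x * H.epsL h) = H.counit (x * h) := by
  have key := H.weak_counit_mul' x 1 h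
  rw [mul_one] at key
  rw [key, hs, aux_epsL H s hs]
  simp only [map_sum, TensorProduct.comm_tmul, TensorProduct.map_tmul,
    LinearMap.comp_apply, LinearMap.mulLeft_apply, LinearMap.mulRight_apply,
    LinearMap.mul'_apply, Finset.mul_sum, mul_smul_comm, map_smul, smul_eq_mul]
  exact Finset.sum_congr rfl fun p _ => mul_comm _ _

theorem aux_epsL_epsL (hs : H.comul 1 = ∑ p ∈ s, p.1 ⊗ₜ[R] p.2) (x h : W) :
    H.epsL (x * H.epsL h) = H.epsL (x * h) := by
  rw [aux_epsL H s hs (x * H.epsL h), aux_epsL H s hs (x * h)]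
  exact Finset.sum_congr rfl fun p _ => by
    rw [← mul_assoc, ← mul_assoc, aux_counit_epsL H s hs]

theorem aux_E (hs : H.comul 1 = ∑ p ∈ s, p.1 ⊗ₜ[R] p.2) :
    (H.comul.rTensor W) (H.comul 1)
      = ∑ p ∈ s, ∑ q ∈ s, (p.1 ⊗ₜ[R] (p.2 * q.1)) ⊗ₜ[R] q.2 := by
  rw [H.weak_comul_one, hs]
  rw [TensorProduct.sum_tmul, TensorProduct.tmul_sum, map_sum, Finset.sum_mul_sum]
  simp only [TensorProduct.assoc_symm_tmul, Algebra.TensorProduct.tmul_mul_tmul,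
    mul_one, one_mul]

theorem aux_E' (hs : H.comul 1 = ∑ p ∈ s, p.1 ⊗ₜ[R] p.2) :
    (H.comul.rTensor W) (H.comul 1)
      = ∑ p ∈ s, ∑ q ∈ s, (q.1 ⊗ₜ[R] (p.1 * q.2)) ⊗ₜ[R] p.2 := by
  rw [H.weak_comul_one', hs]
  rw [TensorProduct.sum_tmul, TensorProduct.tmul_sum, map_sum, Finset.sum_mul_sum]
  simp only [TensorProduct.assoc_symm_tmul, Algebra.TensorProduct.tmul_mul_tmul,
    mul_one, one_mul]

end Aux
section Aux2

variable {R : Type*} {W : Type*} [CommRing R] [Ring W] [Algebra R W]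
variable (H : WeakHopf R W) (s : Finset (W × W))

theorem aux_comul_epsL (hs : H.comul 1 = ∑ p ∈ s, p.1 ⊗ₜ[R] p.2) (h : W) :
    H.comul (H.epsL h) = ∑ q ∈ s, (H.epsL h * q.1) ⊗ₜ[R] q.2 := by
  have hco := LinearMap.congr_fun H.coassoc 1
  simp only [LinearMap.comp_apply, LinearEquiv.coe_coe] at hco
  rw [aux_E H s hs] at hco
  rw [hs] at hco
  simp only [map_sum, LinearMap.lTensor_tmul, TensorProduct.assoc_tmul] at hco
  have key := congrArg (((TensorProduct.lid R (W ⊗[R] W)).toLinearMap ∘ₗ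
      (H.counit ∘ₗ LinearMap.mulRight R h).rTensor (W ⊗[R] W))) hco
  simp only [map_sum, LinearMap.comp_apply, LinearMap.rTensor_tmul, LinearEquiv.coe_coe,
    TensorProduct.lid_tmul, LinearMap.mulRight_apply] at key
  calc H.comul (H.epsL h)
      = ∑ p ∈ s, H.counit (p.1 * h) • H.comul p.2 := by
        rw [aux_epsL H s hs h, map_sum]; simp only [map_smul]
    _ = ∑ p ∈ s, ∑ q ∈ s, H.counit (p.1 * h) • ((p.2 * q.1) ⊗ₜ[R] q.2) := key.symm
    _ = ∑ q ∈ s, (H.epsL h * q.1) ⊗ₜ[R] q.2 := by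
        rw [Finset.sum_comm, aux_epsL H s hs h]
        simp only [Finset.sum_mul, smul_mul_assoc, TensorProduct.sum_tmul,
          TensorProduct.smul_tmul']

theorem aux_comul_epsR (hs : H.comul 1 = ∑ p ∈ s, p.1 ⊗ₜ[R] p.2) (g : W) :
    H.comul (H.epsR g) = ∑ q ∈ s, q.1 ⊗ₜ[R] (H.epsR g * q.2) := by
  have hE := aux_E' H s hs
  rw [hs] at hE
  simp only [map_sum, LinearMap.rTensor_tmul] at hE
  have key := congrArg (((TensorProduct.rid R (W ⊗[R] W)).toLinearMap ∘ₗ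
      (H.counit ∘ₗ LinearMap.mulLeft R g).lTensor (W ⊗[R] W))) hE
  simp only [map_sum, LinearMap.comp_apply, LinearMap.lTensor_tmul, LinearEquiv.coe_coe,
    TensorProduct.rid_tmul, LinearMap.mulLeft_apply] at key
  calc H.comul (H.epsR g)
      = ∑ p ∈ s, H.counit (g * p.2) • H.comul p.1 := by
        rw [aux_epsR H s hs g, map_sum]; simp only [map_smul]
    _ = ∑ p ∈ s, ∑ q ∈ s, H.counit (g * p.2) • (q.1 ⊗ₜ[R] (p.1 * q.2)) := key
    _ = ∑ q ∈ s, q.1 ⊗ₜ[R] (H.epsR g * q.2) := by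
        rw [Finset.sum_comm, aux_epsR H s hs g]
        simp only [Finset.sum_mul, smul_mul_assoc, TensorProduct.tmul_sum,
          TensorProduct.tmul_smul, TensorProduct.smul_tmul']

theorem aux_sum_antipode (hs : H.comul 1 = ∑ p ∈ s, p.1 ⊗ₜ[R] p.2) :
    ∑ p ∈ s, H.antipode p.1 * p.2 = 1 := by
  have h1 := H.antipode_right 1
  have h2 := LinearMap.congr_fun H.counit_comul_right 1
  simp only [LinearMap.comp_apply, LinearEquiv.coe_coe, LinearMap.id_apply] at h2
  rw [hs] at h1 h2
  simp only [Finset.mul_sum, Algebra.TensorProduct.tmul_mul_tmul, one_mul, map_sum,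
    LinearMap.rTensor_tmul, LinearMap.lTensor_tmul, LinearMap.mul'_apply,
    LinearEquiv.coe_coe, TensorProduct.rid_tmul] at h1 h2
  exact h1.trans h2

theorem aux_antipode_epsR (hs : H.comul 1 = ∑ p ∈ s, p.1 ⊗ₜ[R] p.2) (g : W) :
    H.antipode (H.epsR g) = ∑ q ∈ s, q.1 * H.antipode (H.epsR g * q.2) := by
  have hE := aux_E H s hs
  rw [hs] at hE
  simp only [map_sum, LinearMap.rTensor_tmul] at hE
  have hΔy : (H.comul.rTensor W) (H.comul (H.epsR g))
      = ∑ p ∈ s, ∑ q ∈ s, (p.1 ⊗ₜ[R] (p.2 * q.1)) ⊗ₜ[R] (H.epsR g * q.2) := by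
    have hmap := congrArg ((LinearMap.mulLeft R (H.epsR g)).lTensor (W ⊗[R] W)) hE
    simp only [map_sum, LinearMap.lTensor_tmul, LinearMap.mulLeft_apply] at hmap
    rw [aux_comul_epsR H s hs g, map_sum]
    simp only [LinearMap.rTensor_tmul]
    exact hmap
  rw [H.antipode_mid (H.epsR g), hΔy]
  simp only [map_sum, TensorProduct.map_tmul, LinearMap.rTensor_tmul, LinearMap.mul'_apply,
    LinearMap.id_coe, id_eq]
  have hfac : (∑ p ∈ s, H.antipode p.1 * p.2)
        * (∑ q ∈ s, q.1 * H.antipode (H.epsR g * q.2))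
      = ∑ q ∈ s, q.1 * H.antipode (H.epsR g * q.2) := by
    rw [aux_sum_antipode H s hs, one_mul]
  rw [← hfac, Finset.sum_mul_sum]
  exact Finset.sum_congr rfl fun p _ => Finset.sum_congr rfl fun q _ => by
    simp only [mul_assoc]

theorem aux_antipode_left (x : W) :
    LinearMap.mul' R W ((H.antipode.lTensor W) (H.comul x)) = H.epsL x := by
  rw [H.antipode_left x, WeakHopf.epsL]
  simp only [LinearMap.comp_apply, LinearMap.flip_apply, TensorProduct.mk_apply,
    LinearMap.mulLeft_apply, LinearEquiv.coe_coe]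

theorem aux_theta (y' : W) (u : W ⊗[R] W) :
    LinearMap.mul' R W ((H.antipode.lTensor W) ((1 ⊗ₜ[R] y') * u))
      = LinearMap.mul' R W (((H.antipode ∘ₗ LinearMap.mulLeft R y').lTensor W) u) := by
  induction u using TensorProduct.induction_on with
  | zero => simp
  | tmul c d =>
      simp [Algebra.TensorProduct.tmul_mul_tmul, LinearMap.lTensor_tmul,
        LinearMap.mul'_apply]
  | add u v hu hv => rw [mul_add, map_add, map_add, map_add, map_add, hu, hv]

end Aux2

/-- In a weak Hopf algebra, for any `y ∈ W_R = ε_R(W)` and any `h ∈ W`,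
`ε_L(h)·S(y) = ε_L(y·h)`. -/
theorem epsL_mul_antipode {R : Type*} {W : Type*} [CommRing R] [Ring W] [Algebra R W]
    (H : WeakHopf R W) :
    ∀ y ∈ Set.range ⇑H.epsR, ∀ h : W, H.epsL h * H.antipode y = H.epsL (y * h) := by
  rintro y ⟨g, rfl⟩ h
  obtain ⟨s, hs⟩ := TensorProduct.exists_finset (H.comul 1)
  have key : ∀ z : W, LinearMap.mul' R W
      (((H.antipode ∘ₗ LinearMap.mulLeft R (H.epsR g)).lTensor W) (H.comul z))
      = H.epsL (H.epsR g * z) := by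
    intro z
    have hone : H.comul (H.epsR g * z) = (1 ⊗ₜ[R] H.epsR g) * H.comul z := by
      rw [H.comul_mul, aux_comul_epsR H s hs g]
      have h2 : (∑ q ∈ s, q.1 ⊗ₜ[R] (H.epsR g * q.2))
          = (1 ⊗ₜ[R] H.epsR g) * H.comul 1 := by
        rw [hs, Finset.mul_sum]
        simp only [Algebra.TensorProduct.tmul_mul_tmul, one_mul]
      rw [h2, mul_assoc, ← H.comul_mul, one_mul]
    rw [← aux_theta H (H.epsR g) (H.comul z), ← hone, aux_antipode_left H]
  have expand : H.epsL h * H.antipode (H.epsR g)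
      = LinearMap.mul' R W (((H.antipode ∘ₗ LinearMap.mulLeft R (H.epsR g)).lTensor W)
          (H.comul (H.epsL h))) := by
    rw [aux_antipode_epsR H s hs g, Finset.mul_sum, aux_comul_epsL H s hs h]
    simp only [map_sum, LinearMap.lTensor_tmul, LinearMap.comp_apply,
      LinearMap.mulLeft_apply, LinearMap.mul'_apply]
    exact Finset.sum_congr rfl fun q _ => (mul_assoc _ _ _).symm
  rw [expand, key (H.epsL h), aux_epsL_epsL H s hs]
end

section
/- In the quantum double D(W) of a weak Hopf algebra W, the element [ε⊗1_W] is a two-sided unit: [ε⊗1_W][φ⊗h] = [φ⊗h] = [φ⊗h][ε⊗1_W] for all φ ∈ Ŵ, h ∈ W. -/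
open TensorProduct

/-! ## The quantum double `D(W)` in operator form

For a finite-dimensional weak Hopf algebra `W` over a field, the vector space
`Ŵ^{cop} ⊗ W` is canonically identified with `End(W) = W →ₗ[k] W` via
`φ ⊗ h ↦ (x ↦ φ(x)·h)` (a rank-one operator).  Under this identification the
multiplication
`(φ⊗h)(ψ⊗g) = Σ_{(h),(ψ)} φψ⁽²⁾ ⊗ h⁽²⁾g ⟨ψ⁽¹⁾, S⁻¹(h⁽³⁾)⟩⟨ψ⁽³⁾, h⁽¹⁾⟩`
becomes (using `Σ_{(ψ)} ψ⁽¹⁾(a)ψ⁽²⁾(x)ψ⁽³⁾(c) = ψ(a·x·c)`, the dual coproduct being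
dual to the multiplication of `W`) the operator product
`(F•G)(x) = Σ_{(x)} Σ_{(F(x⁽¹⁾))} F(x⁽¹⁾)⁽²⁾ · G(S⁻¹(F(x⁽¹⁾)⁽³⁾) · x⁽²⁾ · F(x⁽¹⁾)⁽¹⁾)`,
which is `mulD` below.  The quantum double `D(W)` is the quotient of this algebra by
the two-sided ideal `J` (`Jideal` below). -/

namespace WeakHopf

variable {k : Type*} {W : Type*} [Field k] [Ring W] [Algebra k W]

/-- The rank-one operator `φ ⊗ h : x ↦ φ(x)·h`, representing the element `φ ⊗ h` of
`Ŵ^{cop} ⊗ W`. -/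
noncomputable def rkOne (φ : Module.Dual k W) (h : W) : W →ₗ[k] W := φ.smulRight h

/-- The multiplication of `Ŵ^{cop} ⊗ W` in operator form (see the module docstring). -/
noncomputable def mulD (H : WeakHopf k W) (Sinv : W →ₗ[k] W) (F G : W →ₗ[k] W) :
    W →ₗ[k] W :=
  LinearMap.mul' k W
  ∘ₗ LinearMap.lTensor W
      (G ∘ₗ LinearMap.mul' k W ∘ₗ LinearMap.rTensor W (LinearMap.mul' k W))
  ∘ₗ (TensorProduct.comm k ((W ⊗[k] W) ⊗[k] W) W).toLinearMap
  ∘ₗ (TensorProduct.assoc k (W ⊗[k] W) W W).symm.toLinearMap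
  ∘ₗ (TensorProduct.comm k (W ⊗[k] W) (W ⊗[k] W)).toLinearMap
  ∘ₗ (TensorProduct.assoc k (W ⊗[k] W) W W).toLinearMap
  ∘ₗ LinearMap.rTensor W
      (LinearMap.lTensor (W ⊗[k] W) Sinv ∘ₗ LinearMap.rTensor W H.comul ∘ₗ H.comul ∘ₗ F)
  ∘ₗ H.comul

/-- The unit `[ε ⊗ 1_W]` of `Ŵ^{cop} ⊗ W`. -/
noncomputable def unitD (H : WeakHopf k W) : W →ₗ[k] W := rkOne H.counit 1

/-- The convolution multiplication on `Ŵ`: `(φψ)(x) = Σ φ(x⁽¹⁾)ψ(x⁽²⁾)`. -/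
noncomputable def cmul (H : WeakHopf k W) (φ ψ : Module.Dual k W) : Module.Dual k W :=
  LinearMap.mul' k k ∘ₗ TensorProduct.map φ ψ ∘ₗ H.comul

/-- The generators of the ideal `J`:
`φ ⊗ xh − φ·(x⇀ε) ⊗ h` for `x ∈ W_L`, and `φ ⊗ yh − φ·(ε↼y) ⊗ h` for `y ∈ W_R`,
where `(x⇀ε)(w) = ε(wx)` and `(ε↼y)(w) = ε(yw)`. -/
noncomputable def Jgen (H : WeakHopf k W) : Set (W →ₗ[k] W) :=
  {F | ∃ φ : Module.Dual k W, ∃ x h : W, x ∈ Set.range ⇑H.epsL ∧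
      F = rkOne φ (x * h)
            - rkOne (H.cmul φ (H.counit ∘ₗ LinearMap.mulRight k x)) h}
  ∪ {F | ∃ φ : Module.Dual k W, ∃ y h : W, y ∈ Set.range ⇑H.epsR ∧
      F = rkOne φ (y * h)
            - rkOne (H.cmul φ (H.counit ∘ₗ LinearMap.mulLeft k y)) h}

/-- The linear span `J` of the generators `Jgen`. -/
noncomputable def Jideal (H : WeakHopf k W) : Submodule k (W →ₗ[k] W) :=
  Submodule.span k (Jgen H)

end WeakHopf

namespace WeakHopf

set_option synthInstance.maxHeartbeats 1000000
set_option maxHeartbeats 1600000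

variable {k : Type*} {W : Type*} [Field k] [Ring W] [Algebra k W]

/-- A chosen finite representation of a tensor. -/
noncomputable def rep (x : W ⊗[k] W) : Finset (W × W) :=
  (TensorProduct.exists_finset x).choose

lemma rep_spec (x : W ⊗[k] W) : x = ∑ p ∈ rep x, p.1 ⊗ₜ[k] p.2 :=
  (TensorProduct.exists_finset x).choose_spec

variable (H : WeakHopf k W)

lemma comul_one_mul (h : W) : H.comul 1 * H.comul h = H.comul h := by
  rw [← H.comul_mul, one_mul]

lemma comul_mul_one (h : W) : H.comul h * H.comul 1 = H.comul h := by
  rw [← H.comul_mul, mul_one]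

lemma counit_fold_left {z : W} {t : Finset (W × W)}
    (ht : H.comul z = ∑ p ∈ t, p.1 ⊗ₜ[k] p.2) :
    ∑ p ∈ t, H.counit p.1 • p.2 = z := by
  have h1 := DFunLike.congr_fun H.counit_comul_left z
  simp only [LinearMap.coe_comp, LinearEquiv.coe_coe, Function.comp_apply,
    LinearMap.id_coe, id_eq] at h1
  rw [ht] at h1
  simpa [map_sum] using h1

lemma counit_fold_right {z : W} {t : Finset (W × W)}
    (ht : H.comul z = ∑ p ∈ t, p.1 ⊗ₜ[k] p.2) :
    ∑ p ∈ t, H.counit p.2 • p.1 = z := by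
  have h1 := DFunLike.congr_fun H.counit_comul_right z
  simp only [LinearMap.coe_comp, LinearEquiv.coe_coe, Function.comp_apply,
    LinearMap.id_coe, id_eq] at h1
  rw [ht] at h1
  simpa [map_sum] using h1

lemma epsL_apply (h : W) :
    H.epsL h = (TensorProduct.lid k W) ((H.counit.rTensor W) (H.comul 1 * (h ⊗ₜ[k] 1))) := by
  simp [WeakHopf.epsL]

lemma epsR_apply (h : W) :
    H.epsR h = (TensorProduct.rid k W) ((H.counit.lTensor W) (((1:W) ⊗ₜ[k] h) * H.comul 1)) := by
  simp [WeakHopf.epsR]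

lemma epsL_repr {s : Finset (W × W)} (hs : H.comul 1 = ∑ p ∈ s, p.1 ⊗ₜ[k] p.2) (h : W) :
    H.epsL h = ∑ p ∈ s, H.counit (p.1 * h) • p.2 := by
  rw [epsL_apply, hs, Finset.sum_mul]
  simp [Algebra.TensorProduct.tmul_mul_tmul, map_sum]

lemma epsR_repr {s : Finset (W × W)} (hs : H.comul 1 = ∑ p ∈ s, p.1 ⊗ₜ[k] p.2) (h : W) :
    H.epsR h = ∑ p ∈ s, H.counit (h * p.2) • p.1 := by
  rw [epsR_apply, hs, Finset.mul_sum]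
  simp [Algebra.TensorProduct.tmul_mul_tmul, map_sum]

/-- the contraction `(a⊗b)⊗c ↦ (ε b • a) ⊗ c`. -/
noncomputable def cmid : ((W ⊗[k] W) ⊗[k] W) →ₗ[k] W ⊗[k] W :=
  LinearMap.rTensor W ((TensorProduct.rid k W).toLinearMap ∘ₗ (H : WeakHopf k W).counit.lTensor W)

lemma cmid_tmul (a b c : W) : H.cmid ((a ⊗ₜ[k] b) ⊗ₜ[k] c) = H.counit b • a ⊗ₜ[k] c := by
  simp [cmid, TensorProduct.smul_tmul']

lemma cmid_comul2 (h : W) :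
    H.cmid ((H.comul.rTensor W) (H.comul h)) = H.comul h := by
  rw [cmid, ← LinearMap.comp_apply, ← LinearMap.rTensor_comp, LinearMap.comp_assoc,
    H.counit_comul_right, LinearMap.rTensor_id, LinearMap.id_apply]

lemma comul2_one_eq' {s : Finset (W × W)} (hs : H.comul 1 = ∑ p ∈ s, p.1 ⊗ₜ[k] p.2) :
    (H.comul.rTensor W) (H.comul 1)
      = ∑ p ∈ s, ∑ q ∈ s, (p.1 ⊗ₜ[k] (q.1 * p.2)) ⊗ₜ[k] q.2 := by
  rw [H.weak_comul_one', hs]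
  rw [TensorProduct.tmul_sum, TensorProduct.sum_tmul]
  simp only [map_sum, TensorProduct.assoc_symm_tmul]
  rw [Finset.sum_mul_sum]
  simp only [Algebra.TensorProduct.tmul_mul_tmul, one_mul, mul_one]
  rw [Finset.sum_comm]

lemma comul2_one_eq {s : Finset (W × W)} (hs : H.comul 1 = ∑ p ∈ s, p.1 ⊗ₜ[k] p.2) :
    (H.comul.rTensor W) (H.comul 1)
      = ∑ p ∈ s, ∑ q ∈ s, (p.1 ⊗ₜ[k] (p.2 * q.1)) ⊗ₜ[k] q.2 := by
  rw [H.weak_comul_one, hs]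
  rw [TensorProduct.tmul_sum, TensorProduct.sum_tmul]
  simp only [map_sum, TensorProduct.assoc_symm_tmul]
  rw [Finset.sum_mul_sum]
  simp only [Algebra.TensorProduct.tmul_mul_tmul, one_mul, mul_one]

lemma comul_one_double {s : Finset (W × W)} (hs : H.comul 1 = ∑ p ∈ s, p.1 ⊗ₜ[k] p.2) :
    H.comul 1 = ∑ p ∈ s, ∑ q ∈ s, H.counit (q.1 * p.2) • (p.1 ⊗ₜ[k] q.2) := by
  have h1 := H.cmid_comul2 1
  rw [comul2_one_eq' H hs] at h1
  rw [← h1]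
  simp [cmid_tmul]

lemma L1 : (LinearMap.lTensor W H.epsL) (H.comul 1) = H.comul 1 := by
  obtain ⟨s, hs⟩ : ∃ s : Finset (W × W), H.comul 1 = ∑ p ∈ s, p.1 ⊗ₜ[k] p.2 := ⟨_, rep_spec _⟩
  conv_lhs => rw [hs]
  rw [map_sum]
  simp only [LinearMap.lTensor_tmul]
  simp only [epsL_repr H hs, TensorProduct.tmul_sum]
  conv_rhs => rw [comul_one_double H hs]
  simp [TensorProduct.tmul_smul]

lemma L2 : (LinearMap.rTensor W H.epsR) (H.comul 1) = H.comul 1 := by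
  obtain ⟨s, hs⟩ : ∃ s : Finset (W × W), H.comul 1 = ∑ p ∈ s, p.1 ⊗ₜ[k] p.2 := ⟨_, rep_spec _⟩
  conv_lhs => rw [hs]
  rw [map_sum]
  simp only [LinearMap.rTensor_tmul]
  simp only [epsR_repr H hs, TensorProduct.sum_tmul]
  conv_rhs => rw [comul_one_double H hs, Finset.sum_comm]
  simp [TensorProduct.smul_tmul']


lemma c2_comul (z : W) :
    ((TensorProduct.rid k W).toLinearMap ∘ₗ H.counit.lTensor W) (H.comul z) = z := by
  have h1 := DFunLike.congr_fun H.counit_comul_right z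
  simpa using h1

lemma c1_comul (z : W) :
    ((TensorProduct.lid k W).toLinearMap ∘ₗ H.counit.rTensor W) (H.comul z) = z := by
  have h1 := DFunLike.congr_fun H.counit_comul_left z
  simpa using h1

noncomputable def cmid' : (W ⊗[k] (W ⊗[k] W)) →ₗ[k] W ⊗[k] W :=
  LinearMap.lTensor W ((TensorProduct.lid k W).toLinearMap ∘ₗ (H : WeakHopf k W).counit.rTensor W)

lemma cmid'_tmul (a b c : W) : H.cmid' (a ⊗ₜ[k] (b ⊗ₜ[k] c)) = H.counit b • a ⊗ₜ[k] c := by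
  simp [cmid', TensorProduct.tmul_smul, TensorProduct.smul_tmul']

lemma I1 (h : W) :
    (LinearMap.lTensor W H.epsL) (H.comul h) = H.comul 1 * (h ⊗ₜ[k] 1) := by
  obtain ⟨s, hs⟩ : ∃ s : Finset (W × W), H.comul 1 = ∑ p ∈ s, p.1 ⊗ₜ[k] p.2 := ⟨_, rep_spec _⟩
  obtain ⟨t, ht⟩ : ∃ t : Finset (W × W), H.comul h = ∑ p ∈ t, p.1 ⊗ₜ[k] p.2 := ⟨_, rep_spec _⟩
  have key : (TensorProduct.assoc k W W W).symm ((1:W) ⊗ₜ[k] H.comul 1) * (H.comul h ⊗ₜ[k] (1:W))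
      = (H.comul.rTensor W) (H.comul 1) * (H.comul h ⊗ₜ[k] (1:W)) := by
    rw [H.weak_comul_one', mul_assoc, Algebra.TensorProduct.tmul_mul_tmul, one_mul,
      comul_one_mul H h]
  have e2 : H.cmid ((TensorProduct.assoc k W W W).symm ((1:W) ⊗ₜ[k] H.comul 1)
        * (H.comul h ⊗ₜ[k] (1:W)))
      = (LinearMap.lTensor W H.epsL) (H.comul h) := by
    conv_lhs => rw [hs, ht]
    conv_rhs => rw [ht]
    rw [TensorProduct.tmul_sum, TensorProduct.sum_tmul]
    simp only [map_sum, TensorProduct.assoc_symm_tmul]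
    rw [Finset.sum_mul_sum]
    simp only [Algebra.TensorProduct.tmul_mul_tmul, one_mul, mul_one, map_sum, cmid_tmul,
      LinearMap.lTensor_tmul]
    simp only [epsL_repr H hs, TensorProduct.tmul_sum, TensorProduct.tmul_smul]
    try rw [Finset.sum_comm]
  have e3 : H.cmid ((H.comul.rTensor W) (H.comul 1) * (H.comul h ⊗ₜ[k] (1:W)))
      = H.comul 1 * (h ⊗ₜ[k] 1) := by
    conv_lhs => rw [hs]
    conv_rhs => rw [hs]
    rw [map_sum, Finset.sum_mul]
    simp only [LinearMap.rTensor_tmul]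
    rw [Finset.sum_mul]
    simp only [Algebra.TensorProduct.tmul_mul_tmul, mul_one, ← H.comul_mul]
    simp only [cmid, LinearMap.rTensor_tmul, map_sum]
    simp only [c2_comul]
  rw [← e2, key, e3]

lemma I2 (h : W) :
    (LinearMap.rTensor W H.epsR) (H.comul h) = ((1:W) ⊗ₜ[k] h) * H.comul 1 := by
  obtain ⟨s, hs⟩ : ∃ s : Finset (W × W), H.comul 1 = ∑ p ∈ s, p.1 ⊗ₜ[k] p.2 := ⟨_, rep_spec _⟩
  obtain ⟨t, ht⟩ : ∃ t : Finset (W × W), H.comul h = ∑ p ∈ t, p.1 ⊗ₜ[k] p.2 := ⟨_, rep_spec _⟩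
  have claim : ((1:W) ⊗ₜ[k] H.comul 1) * (TensorProduct.assoc k W W W) (H.comul 1 ⊗ₜ[k] (1:W))
      = (TensorProduct.assoc k W W W) ((H.comul.rTensor W) (H.comul 1)) := by
    conv_rhs => rw [comul2_one_eq' H hs]
    conv_lhs => rw [hs]
    rw [TensorProduct.tmul_sum, TensorProduct.sum_tmul]
    simp only [map_sum, TensorProduct.assoc_tmul]
    rw [Finset.sum_mul_sum]
    simp only [Algebra.TensorProduct.tmul_mul_tmul, one_mul, mul_one]
    rw [Finset.sum_comm]
  have key : ((1:W) ⊗ₜ[k] H.comul h) * (TensorProduct.assoc k W W W) (H.comul 1 ⊗ₜ[k] (1:W))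
      = ((1:W) ⊗ₜ[k] H.comul h) * (TensorProduct.assoc k W W W) ((H.comul.rTensor W) (H.comul 1)) := by
    conv_lhs => rw [← comul_mul_one H h]
    have split : ((1:W) ⊗ₜ[k] (H.comul h * H.comul 1))
        = ((1:W) ⊗ₜ[k] H.comul h) * ((1:W) ⊗ₜ[k] H.comul 1) := by
      rw [Algebra.TensorProduct.tmul_mul_tmul, one_mul]
    rw [split, mul_assoc, claim]
  have e2 : H.cmid' (((1:W) ⊗ₜ[k] H.comul h) * (TensorProduct.assoc k W W W) (H.comul 1 ⊗ₜ[k] (1:W)))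
      = (LinearMap.rTensor W H.epsR) (H.comul h) := by
    conv_lhs => rw [hs, ht]
    conv_rhs => rw [ht]
    rw [TensorProduct.tmul_sum, TensorProduct.sum_tmul]
    simp only [map_sum, TensorProduct.assoc_tmul]
    rw [Finset.sum_mul_sum]
    simp only [Algebra.TensorProduct.tmul_mul_tmul, one_mul, mul_one, map_sum, cmid'_tmul,
      LinearMap.rTensor_tmul]
    simp only [epsR_repr H hs, TensorProduct.sum_tmul, TensorProduct.smul_tmul']
    try rw [Finset.sum_comm]
  have coas : (TensorProduct.assoc k W W W) ((H.comul.rTensor W) (H.comul 1))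
      = (LinearMap.lTensor W H.comul) (H.comul 1) := by
    have h1 := DFunLike.congr_fun H.coassoc 1
    simpa using h1
  have e3 : H.cmid' (((1:W) ⊗ₜ[k] H.comul h) * (TensorProduct.assoc k W W W) ((H.comul.rTensor W) (H.comul 1)))
      = ((1:W) ⊗ₜ[k] h) * H.comul 1 := by
    rw [coas]
    conv_lhs => rw [hs]
    conv_rhs => rw [hs]
    rw [map_sum, Finset.mul_sum]
    simp only [LinearMap.lTensor_tmul]
    rw [Finset.mul_sum]
    simp only [Algebra.TensorProduct.tmul_mul_tmul, one_mul, ← H.comul_mul]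
    simp only [cmid', LinearMap.lTensor_tmul, map_sum]
    simp only [c1_comul]
  rw [← e2, key, e3]


lemma D4a {s : Finset (W × W)} (hs : H.comul 1 = ∑ p ∈ s, p.1 ⊗ₜ[k] p.2) (x y : W) :
    H.counit (x * y) = ∑ p ∈ s, H.counit (x * p.1) * H.counit (p.2 * y) := by
  have h1 := H.weak_counit_mul x 1 y
  rw [mul_one, hs] at h1
  simpa [map_sum] using h1

lemma D4b {s : Finset (W × W)} (hs : H.comul 1 = ∑ p ∈ s, p.1 ⊗ₜ[k] p.2) (x y : W) :
    H.counit (x * y) = ∑ p ∈ s, H.counit (x * p.2) * H.counit (p.1 * y) := by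
  have h1 := H.weak_counit_mul' x 1 y
  rw [mul_one, hs] at h1
  simpa [map_sum] using h1

lemma counit_mul_epsL (w y : W) : H.counit (w * H.epsL y) = H.counit (w * y) := by
  obtain ⟨s, hs⟩ : ∃ s : Finset (W × W), H.comul 1 = ∑ p ∈ s, p.1 ⊗ₜ[k] p.2 := ⟨_, rep_spec _⟩
  rw [epsL_repr H hs y, Finset.mul_sum, map_sum, D4b H hs w y]
  simp only [mul_smul_comm, map_smul, smul_eq_mul]
  exact Finset.sum_congr rfl fun p _ => mul_comm _ _

lemma counit_epsR_mul (x w : W) : H.counit (H.epsR x * w) = H.counit (x * w) := by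
  obtain ⟨s, hs⟩ : ∃ s : Finset (W × W), H.comul 1 = ∑ p ∈ s, p.1 ⊗ₜ[k] p.2 := ⟨_, rep_spec _⟩
  rw [epsR_repr H hs x, Finset.sum_mul, map_sum, D4b H hs x w]
  simp only [smul_mul_assoc, map_smul, smul_eq_mul]

lemma D5 (h : W) : LinearMap.mul' k W ((H.epsL.rTensor W) (H.comul h)) = h := by
  obtain ⟨s, hs⟩ : ∃ s : Finset (W × W), H.comul 1 = ∑ p ∈ s, p.1 ⊗ₜ[k] p.2 := ⟨_, rep_spec _⟩
  obtain ⟨t, ht⟩ : ∃ t : Finset (W × W), H.comul h = ∑ p ∈ t, p.1 ⊗ₜ[k] p.2 := ⟨_, rep_spec _⟩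
  have h2 : H.comul 1 * H.comul h
      = ∑ p ∈ s, ∑ r ∈ t, (p.1 * r.1) ⊗ₜ[k] (p.2 * r.2) := by
    conv_lhs => rw [hs, ht]
    rw [Finset.sum_mul_sum]
    simp [Algebra.TensorProduct.tmul_mul_tmul]
  have h3 := c1_comul H h
  rw [← comul_one_mul H h, h2] at h3
  simp only [map_sum, LinearMap.coe_comp, LinearEquiv.coe_coe, Function.comp_apply,
    LinearMap.rTensor_tmul, TensorProduct.lid_tmul] at h3
  conv_lhs => rw [ht]
  rw [map_sum, map_sum]
  simp only [LinearMap.rTensor_tmul, LinearMap.mul'_apply]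
  calc ∑ r ∈ t, H.epsL r.1 * r.2
      = ∑ r ∈ t, ∑ p ∈ s, H.counit (p.1 * r.1) • (p.2 * r.2) := by
        refine Finset.sum_congr rfl fun r _ => ?_
        rw [epsL_repr H hs, Finset.sum_mul]
        exact Finset.sum_congr rfl fun p _ => smul_mul_assoc _ _ _
    _ = h := by rw [Finset.sum_comm]; exact h3

lemma D12 (a b : W) {t : Finset (W × W)} (ht : H.comul a = ∑ r ∈ t, r.1 ⊗ₜ[k] r.2) :
    H.epsL (a * b) = ∑ r ∈ t, H.counit (r.2 * b) • H.epsL r.1 := by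
  obtain ⟨s, hs⟩ : ∃ s : Finset (W × W), H.comul 1 = ∑ p ∈ s, p.1 ⊗ₜ[k] p.2 := ⟨_, rep_spec _⟩
  rw [epsL_repr H hs (a*b)]
  have hper : ∀ p : W × W, H.counit (p.1 * (a * b))
      = ∑ r ∈ t, H.counit (p.1 * r.1) * H.counit (r.2 * b) := by
    intro p
    have h1 := H.weak_counit_mul p.1 a b
    rw [ht] at h1
    rw [mul_assoc] at h1
    simpa [map_sum] using h1
  simp only [hper, Finset.sum_smul]
  rw [Finset.sum_comm]
  refine Finset.sum_congr rfl fun r _ => ?_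
  rw [epsL_repr H hs, Finset.smul_sum]
  refine Finset.sum_congr rfl fun p _ => ?_
  rw [smul_smul, mul_comm]

lemma B9 (h : W) :
    LinearMap.mul' k W ((H.antipode.lTensor W) (H.comul h)) = H.epsL h := by
  rw [H.antipode_left, epsL_apply]

lemma B10 (h : W) :
    LinearMap.mul' k W ((H.antipode.rTensor W) (H.comul h)) = H.epsR h := by
  rw [H.antipode_right, epsR_apply]

lemma fold_B9 {z : W} {t : Finset (W × W)} (ht : H.comul z = ∑ m ∈ t, m.1 ⊗ₜ[k] m.2) :
    ∑ m ∈ t, m.1 * H.antipode m.2 = H.epsL z := by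
  have h1 := B9 H z
  rw [ht] at h1
  simpa [map_sum] using h1

lemma fold_B10 {z : W} {t : Finset (W × W)} (ht : H.comul z = ∑ m ∈ t, m.1 ⊗ₜ[k] m.2) :
    ∑ m ∈ t, H.antipode m.1 * m.2 = H.epsR z := by
  have h1 := B10 H z
  rw [ht] at h1
  simpa [map_sum] using h1

lemma SepsL (z : W) :
    LinearMap.mul' k W ((TensorProduct.map H.antipode H.epsL) (H.comul z)) = H.antipode z := by
  obtain ⟨t, ht⟩ : ∃ t : Finset (W × W), H.comul z = ∑ p ∈ t, p.1 ⊗ₜ[k] p.2 := ⟨_, rep_spec _⟩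
  have coas : (H.comul.rTensor W) (H.comul z)
      = (TensorProduct.assoc k W W W).symm ((LinearMap.lTensor W H.comul) (H.comul z)) := by
    have h1 := DFunLike.congr_fun H.coassoc z
    simp only [LinearMap.coe_comp, LinearEquiv.coe_coe, Function.comp_apply] at h1
    rw [← h1, LinearEquiv.symm_apply_apply]
  have rhs_eq : H.antipode z
      = ∑ m ∈ t, H.antipode m.1 * H.epsL m.2 := by
    conv_lhs => rw [H.antipode_mid z, coas]
    conv_lhs => rw [ht]
    rw [map_sum, map_sum]
    simp only [LinearMap.lTensor_tmul]
    rw [map_sum, map_sum, map_sum]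
    refine Finset.sum_congr rfl fun m _ => ?_
    obtain ⟨u, hn⟩ : ∃ u : Finset (W × W), H.comul m.2 = ∑ p ∈ u, p.1 ⊗ₜ[k] p.2 := ⟨_, rep_spec _⟩
    rw [hn, TensorProduct.tmul_sum]
    rw [map_sum, map_sum, map_sum, map_sum]
    simp only [TensorProduct.assoc_symm_tmul, TensorProduct.map_tmul,
      LinearMap.rTensor_tmul, LinearMap.mul'_apply, LinearMap.id_coe, id_eq]
    rw [← fold_B9 H hn, Finset.mul_sum]
    exact Finset.sum_congr rfl fun n _ => by rw [mul_assoc]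
  rw [rhs_eq]
  conv_lhs => rw [ht]
  rw [map_sum, map_sum]
  simp [TensorProduct.map_tmul]

lemma SepsR (z : W) :
    LinearMap.mul' k W ((TensorProduct.map H.epsR H.antipode) (H.comul z)) = H.antipode z := by
  obtain ⟨t, ht⟩ : ∃ t : Finset (W × W), H.comul z = ∑ p ∈ t, p.1 ⊗ₜ[k] p.2 := ⟨_, rep_spec _⟩
  have rhs_eq : H.antipode z
      = ∑ m ∈ t, H.epsR m.1 * H.antipode m.2 := by
    conv_lhs => rw [H.antipode_mid z]
    conv_lhs => rw [ht]
    rw [map_sum, map_sum, map_sum, map_sum]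
    refine Finset.sum_congr rfl fun m _ => ?_
    obtain ⟨u, hn⟩ : ∃ u : Finset (W × W), H.comul m.1 = ∑ p ∈ u, p.1 ⊗ₜ[k] p.2 := ⟨_, rep_spec _⟩
    rw [LinearMap.rTensor_tmul, hn, TensorProduct.sum_tmul]
    rw [map_sum, map_sum, map_sum]
    simp only [TensorProduct.map_tmul, LinearMap.rTensor_tmul, LinearMap.mul'_apply,
      LinearMap.id_coe, id_eq]
    rw [← fold_B10 H hn, Finset.sum_mul]
  rw [rhs_eq]
  conv_lhs => rw [ht]
  rw [map_sum, map_sum]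
  simp [TensorProduct.map_tmul]

lemma COMM (a b : W) : H.epsR a * H.epsL b = H.epsL b * H.epsR a := by
  obtain ⟨s, hs⟩ : ∃ s : Finset (W × W), H.comul 1 = ∑ p ∈ s, p.1 ⊗ₜ[k] p.2 := ⟨_, rep_spec _⟩
  have star := (comul2_one_eq H hs).symm.trans (comul2_one_eq' H hs)
  set f1 : (W ⊗[k] W) →ₗ[k] W :=
    (TensorProduct.lid k W).toLinearMap ∘ₗ
      LinearMap.rTensor W (H.counit ∘ₗ LinearMap.mulRight k b) with hf1
  set U : ((W ⊗[k] W) ⊗[k] W) →ₗ[k] W :=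
    (TensorProduct.rid k W).toLinearMap ∘ₗ
      TensorProduct.map f1 (H.counit ∘ₗ LinearMap.mulLeft k a) with hU
  have hU1 := congrArg U star
  have hcalc : ∀ (x m c : W), U ((x ⊗ₜ[k] m) ⊗ₜ[k] c)
      = (H.counit (x * b) * H.counit (a * c)) • m := by
    intro x m c
    simp only [hU, hf1, LinearMap.coe_comp, LinearEquiv.coe_coe, Function.comp_apply,
      TensorProduct.map_tmul, LinearMap.rTensor_tmul, TensorProduct.lid_tmul,
      TensorProduct.rid_tmul, LinearMap.mulRight_apply, LinearMap.mulLeft_apply,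
      TensorProduct.smul_tmul', map_smul, smul_eq_mul]
    rw [smul_smul, mul_comm]
  simp only [map_sum, hcalc] at hU1
  calc H.epsR a * H.epsL b
      = ∑ p ∈ s, ∑ q ∈ s,
          (H.counit (p.1 * b) * H.counit (a * q.2)) • (q.1 * p.2) := by
        rw [epsR_repr H hs, epsL_repr H hs, Finset.sum_mul_sum]
        rw [Finset.sum_comm]
        refine Finset.sum_congr rfl fun p _ => Finset.sum_congr rfl fun q _ => ?_
        rw [smul_mul_assoc, mul_smul_comm, smul_smul, mul_comm (H.counit (a*q.2))]
    _ = ∑ p ∈ s, ∑ q ∈ s,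
          (H.counit (p.1 * b) * H.counit (a * q.2)) • (p.2 * q.1) := hU1.symm
    _ = H.epsL b * H.epsR a := by
        rw [epsL_repr H hs, epsR_repr H hs, Finset.sum_mul_sum]
        refine Finset.sum_congr rfl fun p _ => Finset.sum_congr rfl fun q _ => ?_
        rw [smul_mul_assoc, mul_smul_comm, smul_smul]

lemma COMM' (y : W) :
    H.comul 1 * ((1:W) ⊗ₜ[k] H.epsR y) = ((1:W) ⊗ₜ[k] H.epsR y) * H.comul 1 := by
  have l1 := L1 H
  conv_lhs => rw [← l1]
  conv_rhs => rw [← l1]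
  obtain ⟨s, hs⟩ : ∃ s : Finset (W × W), H.comul 1 = ∑ p ∈ s, p.1 ⊗ₜ[k] p.2 := ⟨_, rep_spec _⟩
  rw [hs, map_sum, Finset.sum_mul, Finset.mul_sum]
  simp only [LinearMap.lTensor_tmul, Algebra.TensorProduct.tmul_mul_tmul, mul_one, one_mul]
  exact Finset.sum_congr rfl fun p _ => by rw [COMM]

lemma G1 (y : W) : H.comul (H.epsL y) = H.comul 1 * (H.epsL y ⊗ₜ[k] 1) := by
  obtain ⟨s, hs⟩ : ∃ s : Finset (W × W), H.comul 1 = ∑ p ∈ s, p.1 ⊗ₜ[k] p.2 := ⟨_, rep_spec _⟩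
  set V : (W ⊗[k] (W ⊗[k] W)) →ₗ[k] W ⊗[k] W :=
    (TensorProduct.lid k (W ⊗[k] W)).toLinearMap ∘ₗ
      LinearMap.rTensor (W ⊗[k] W) (H.counit ∘ₗ LinearMap.mulRight k y) with hV
  have coas : (LinearMap.lTensor W H.comul) (H.comul 1)
      = (TensorProduct.assoc k W W W) ((H.comul.rTensor W) (H.comul 1)) := by
    have h1 := DFunLike.congr_fun H.coassoc 1
    simpa using h1.symm
  have hVt : ∀ (x : W) (T : W ⊗[k] W), V (x ⊗ₜ[k] T) = H.counit (x * y) • T := by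
    intro x T
    simp [hV]
  have route1 : V ((LinearMap.lTensor W H.comul) (H.comul 1)) = H.comul (H.epsL y) := by
    conv_lhs => rw [hs]
    rw [map_sum, map_sum]
    simp only [LinearMap.lTensor_tmul, hVt]
    rw [epsL_repr H hs y, map_sum]
    simp [map_smul]
  have route2 : V ((TensorProduct.assoc k W W W) ((H.comul.rTensor W) (H.comul 1)))
      = H.comul 1 * (H.epsL y ⊗ₜ[k] 1) := by
    rw [comul2_one_eq' H hs, epsL_repr H hs y]
    conv_rhs => rw [hs]
    simp only [map_sum, TensorProduct.assoc_tmul, hVt]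
    rw [TensorProduct.sum_tmul, Finset.sum_mul_sum]
    rw [Finset.sum_comm]
    refine Finset.sum_congr rfl fun p _ => Finset.sum_congr rfl fun q _ => ?_
    simp [Algebra.TensorProduct.tmul_mul_tmul, TensorProduct.smul_tmul',
      mul_smul_comm, smul_mul_assoc]
  rw [← route1, coas, route2]

lemma G2' (y : W) : H.comul (H.epsR y) = H.comul 1 * ((1:W) ⊗ₜ[k] H.epsR y) := by
  obtain ⟨s, hs⟩ : ∃ s : Finset (W × W), H.comul 1 = ∑ p ∈ s, p.1 ⊗ₜ[k] p.2 := ⟨_, rep_spec _⟩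
  set V : ((W ⊗[k] W) ⊗[k] W) →ₗ[k] W ⊗[k] W :=
    (TensorProduct.rid k (W ⊗[k] W)).toLinearMap ∘ₗ
      LinearMap.lTensor (W ⊗[k] W) (H.counit ∘ₗ LinearMap.mulLeft k y) with hV
  have hVt : ∀ (T : W ⊗[k] W) (c : W), V (T ⊗ₜ[k] c) = H.counit (y * c) • T := by
    intro T c
    simp [hV]
  have route1 : V ((H.comul.rTensor W) (H.comul 1)) = H.comul (H.epsR y) := by
    conv_lhs => rw [hs]
    rw [map_sum, map_sum]
    simp only [LinearMap.rTensor_tmul, hVt]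
    rw [epsR_repr H hs y, map_sum]
    simp [map_smul]
  have route2 : V ((H.comul.rTensor W) (H.comul 1))
      = H.comul 1 * ((1:W) ⊗ₜ[k] H.epsR y) := by
    rw [comul2_one_eq H hs, epsR_repr H hs y]
    conv_rhs => rw [hs]
    simp only [map_sum, hVt]
    rw [TensorProduct.tmul_sum, Finset.sum_mul_sum]
    refine Finset.sum_congr rfl fun p _ => Finset.sum_congr rfl fun q _ => ?_
    simp [Algebra.TensorProduct.tmul_mul_tmul, TensorProduct.tmul_smul, mul_smul_comm,
      TensorProduct.smul_tmul']
  rw [← route1, route2]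

lemma G2 (y : W) : H.comul (H.epsR y) = ((1:W) ⊗ₜ[k] H.epsR y) * H.comul 1 :=
  (G2' H y).trans (COMM' H y)

lemma epsR_one : H.epsR 1 = 1 := by
  obtain ⟨s, hs⟩ : ∃ s : Finset (W × W), H.comul 1 = ∑ p ∈ s, p.1 ⊗ₜ[k] p.2 := ⟨_, rep_spec _⟩
  rw [epsR_repr H hs]
  simpa [one_mul] using counit_fold_right H hs

lemma epsL_one : H.epsL 1 = 1 := by
  obtain ⟨s, hs⟩ : ∃ s : Finset (W × W), H.comul 1 = ∑ p ∈ s, p.1 ⊗ₜ[k] p.2 := ⟨_, rep_spec _⟩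
  rw [epsL_repr H hs]
  simpa [mul_one] using counit_fold_left H hs

lemma S_one : H.antipode 1 = 1 := by
  have h1 := SepsL H 1
  rw [← LinearMap.rTensor_comp_lTensor, LinearMap.comp_apply, L1 H, B10 H 1, epsR_one H] at h1
  exact h1.symm


lemma fold_SepsL {z : W} {t : Finset (W × W)} (ht : H.comul z = ∑ m ∈ t, m.1 ⊗ₜ[k] m.2) :
    ∑ m ∈ t, H.antipode m.1 * H.epsL m.2 = H.antipode z := by
  have h1 := SepsL H z
  rw [ht] at h1
  simpa [map_sum] using h1

lemma fold_SepsR {z : W} {t : Finset (W × W)} (ht : H.comul z = ∑ m ∈ t, m.1 ⊗ₜ[k] m.2) :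
    ∑ m ∈ t, H.epsR m.1 * H.antipode m.2 = H.antipode z := by
  have h1 := SepsR H z
  rw [ht] at h1
  simpa [map_sum] using h1

lemma fold_D5 {z : W} {t : Finset (W × W)} (ht : H.comul z = ∑ m ∈ t, m.1 ⊗ₜ[k] m.2) :
    ∑ m ∈ t, H.epsL m.1 * m.2 = z := by
  have h1 := D5 H z
  rw [ht] at h1
  simpa [map_sum] using h1

lemma fold_I2 {z : W} {t : Finset (W × W)} (ht : H.comul z = ∑ m ∈ t, m.1 ⊗ₜ[k] m.2) :
    ∑ m ∈ t, H.epsR m.1 ⊗ₜ[k] m.2 = ((1:W) ⊗ₜ[k] z) * H.comul 1 := by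
  have h1 := I2 H z
  rw [ht] at h1
  simpa [map_sum] using h1

lemma fold_I1 {z : W} {t : Finset (W × W)} (ht : H.comul z = ∑ m ∈ t, m.1 ⊗ₜ[k] m.2) :
    ∑ m ∈ t, m.1 ⊗ₜ[k] H.epsL m.2 = H.comul 1 * (z ⊗ₜ[k] 1) := by
  have h1 := I1 H z
  rw [ht] at h1
  simpa [map_sum] using h1

/-- reblocking of triple sums along coassociativity -/
lemma reblock3 {M : Type*} [AddCommMonoid M] [Module k M]
    (C : ((W ⊗[k] W) ⊗[k] W) →ₗ[k] M) {z : W} {t : Finset (W × W)}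
    (ht : H.comul z = ∑ r ∈ t, r.1 ⊗ₜ[k] r.2)
    {σ : W × W → Finset (W × W)} (hσ : ∀ r ∈ t, H.comul r.1 = ∑ m ∈ σ r, m.1 ⊗ₜ[k] m.2)
    {τ : W × W → Finset (W × W)} (hτ : ∀ r ∈ t, H.comul r.2 = ∑ m ∈ τ r, m.1 ⊗ₜ[k] m.2) :
    ∑ r ∈ t, ∑ m ∈ σ r, C ((m.1 ⊗ₜ[k] m.2) ⊗ₜ[k] r.2)
      = ∑ r ∈ t, ∑ m ∈ τ r, C ((r.1 ⊗ₜ[k] m.1) ⊗ₜ[k] m.2) := by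
  have e1 : (H.comul.rTensor W) (H.comul z)
      = ∑ r ∈ t, ∑ m ∈ σ r, (m.1 ⊗ₜ[k] m.2) ⊗ₜ[k] r.2 := by
    rw [ht, map_sum]
    refine Finset.sum_congr rfl fun r hr => ?_
    rw [LinearMap.rTensor_tmul, hσ r hr, TensorProduct.sum_tmul]
  have e2 : (H.comul.rTensor W) (H.comul z)
      = ∑ r ∈ t, ∑ m ∈ τ r, (r.1 ⊗ₜ[k] m.1) ⊗ₜ[k] m.2 := by
    have coas : (H.comul.rTensor W) (H.comul z)
        = (TensorProduct.assoc k W W W).symm ((LinearMap.lTensor W H.comul) (H.comul z)) := by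
      have h1 := DFunLike.congr_fun H.coassoc z
      simp only [LinearMap.coe_comp, LinearEquiv.coe_coe, Function.comp_apply] at h1
      rw [← h1, LinearEquiv.symm_apply_apply]
    rw [coas, ht, map_sum, map_sum]
    refine Finset.sum_congr rfl fun r hr => ?_
    rw [LinearMap.lTensor_tmul, hτ r hr, TensorProduct.tmul_sum, map_sum]
    simp [TensorProduct.assoc_symm_tmul]
  have e3 := congrArg C (e1.symm.trans e2)
  simpa [map_sum] using e3

/-- convolution of maps `W → W ⊗ W` -/
noncomputable def conv (F G : W →ₗ[k] W ⊗[k] W) : W →ₗ[k] W ⊗[k] W :=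
  LinearMap.mul' k (W ⊗[k] W) ∘ₗ TensorProduct.map F G ∘ₗ (H : WeakHopf k W).comul

lemma conv_apply (F G : W →ₗ[k] W ⊗[k] W) {z : W} {t : Finset (W × W)}
    (ht : H.comul z = ∑ m ∈ t, m.1 ⊗ₜ[k] m.2) :
    H.conv F G z = ∑ m ∈ t, F m.1 * G m.2 := by
  simp only [conv, LinearMap.coe_comp, Function.comp_apply]
  rw [ht]
  simp [map_sum]

/-- `ρ = τ∘(S⊗S)∘Δ` -/
noncomputable def rho : W →ₗ[k] W ⊗[k] W :=
  (TensorProduct.comm k W W).toLinearMap ∘ₗ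
    TensorProduct.map (H : WeakHopf k W).antipode H.antipode ∘ₗ H.comul

lemma rho_apply {z : W} {t : Finset (W × W)} (ht : H.comul z = ∑ m ∈ t, m.1 ⊗ₜ[k] m.2) :
    H.rho z = ∑ m ∈ t, H.antipode m.2 ⊗ₜ[k] H.antipode m.1 := by
  simp only [rho, LinearMap.coe_comp, Function.comp_apply]
  rw [ht]
  simp [map_sum]

lemma conv_assoc (F G K : W →ₗ[k] W ⊗[k] W) (h : W) :
    H.conv (H.conv F G) K h = H.conv F (H.conv G K) h := by
  obtain ⟨t, ht⟩ : ∃ t : Finset (W × W), H.comul h = ∑ p ∈ t, p.1 ⊗ₜ[k] p.2 := ⟨_, rep_spec _⟩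
  set C : ((W ⊗[k] W) ⊗[k] W) →ₗ[k] W ⊗[k] W :=
    LinearMap.mul' k (W ⊗[k] W) ∘ₗ
      TensorProduct.map (LinearMap.mul' k (W ⊗[k] W) ∘ₗ TensorProduct.map F G) K with hC
  have hCt : ∀ a b c : W, C ((a ⊗ₜ[k] b) ⊗ₜ[k] c) = F a * G b * K c := by
    intro a b c; simp [hC]
  rw [conv_apply H _ _ ht, conv_apply H _ _ ht]
  have lhs_eq : ∑ m ∈ t, H.conv F G m.1 * K m.2
      = ∑ m ∈ t, ∑ n ∈ rep (H.comul m.1), C ((n.1 ⊗ₜ[k] n.2) ⊗ₜ[k] m.2) := by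
    refine Finset.sum_congr rfl fun m _ => ?_
    rw [conv_apply H _ _ (rep_spec (H.comul m.1)), Finset.sum_mul]
    exact Finset.sum_congr rfl fun n _ => (hCt _ _ _).symm
  have rhs_eq : ∑ m ∈ t, F m.1 * H.conv G K m.2
      = ∑ m ∈ t, ∑ n ∈ rep (H.comul m.2), C ((m.1 ⊗ₜ[k] n.1) ⊗ₜ[k] n.2) := by
    refine Finset.sum_congr rfl fun m _ => ?_
    rw [conv_apply H _ _ (rep_spec (H.comul m.2)), Finset.mul_sum]
    refine Finset.sum_congr rfl fun n _ => ?_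
    rw [hCt, mul_assoc]
  rw [lhs_eq, rhs_eq]
  exact reblock3 H C ht (fun r _ => rep_spec _) (fun r _ => rep_spec _)

lemma c1 (h : W) :
    H.conv (H.comul ∘ₗ H.antipode) H.comul h = H.comul (H.epsR h) := by
  obtain ⟨t, ht⟩ : ∃ t : Finset (W × W), H.comul h = ∑ p ∈ t, p.1 ⊗ₜ[k] p.2 := ⟨_, rep_spec _⟩
  rw [conv_apply H _ _ ht, ← fold_B10 H ht, map_sum]
  refine Finset.sum_congr rfl fun m _ => ?_
  simp [H.comul_mul]

lemma c3 (h : W) :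
    H.conv (H.comul ∘ₗ H.antipode) (H.comul ∘ₗ H.epsL) h = H.comul (H.antipode h) := by
  obtain ⟨t, ht⟩ : ∃ t : Finset (W × W), H.comul h = ∑ p ∈ t, p.1 ⊗ₜ[k] p.2 := ⟨_, rep_spec _⟩
  rw [conv_apply H _ _ ht, ← fold_SepsL H ht, map_sum]
  refine Finset.sum_congr rfl fun m _ => ?_
  simp [H.comul_mul]

lemma c4 (h : W) : H.conv H.rho H.comul h = H.comul (H.epsR h) := by
  obtain ⟨t, ht⟩ : ∃ t : Finset (W × W), H.comul h = ∑ p ∈ t, p.1 ⊗ₜ[k] p.2 := ⟨_, rep_spec _⟩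
  obtain ⟨s, hs⟩ : ∃ s : Finset (W × W), H.comul 1 = ∑ p ∈ s, p.1 ⊗ₜ[k] p.2 := ⟨_, rep_spec _⟩
  rw [conv_apply H _ _ ht]
  set C1 : ((W ⊗[k] W) ⊗[k] W) →ₗ[k] W ⊗[k] W :=
    LinearMap.mul' k (W ⊗[k] W) ∘ₗ
      TensorProduct.map
        ((TensorProduct.comm k W W).toLinearMap ∘ₗ TensorProduct.map H.antipode H.antipode)
        H.comul with hC1
  have hC1t : ∀ a b c : W,
      C1 ((a ⊗ₜ[k] b) ⊗ₜ[k] c) = (H.antipode b ⊗ₜ[k] H.antipode a) * H.comul c := by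
    intro a b c; simp [hC1]
  have step1 : ∑ m ∈ t, H.rho m.1 * H.comul m.2
      = ∑ m ∈ t, ∑ n ∈ rep (H.comul m.1), C1 ((n.1 ⊗ₜ[k] n.2) ⊗ₜ[k] m.2) := by
    refine Finset.sum_congr rfl fun m _ => ?_
    rw [rho_apply H (rep_spec (H.comul m.1)), Finset.sum_mul]
    exact Finset.sum_congr rfl fun n _ => (hC1t _ _ _).symm
  rw [step1, reblock3 H C1 ht (fun r _ => rep_spec _) (fun r _ => rep_spec _)]
  have step2 : ∀ m : W × W, ∑ n ∈ rep (H.comul m.2), C1 ((m.1 ⊗ₜ[k] n.1) ⊗ₜ[k] n.2)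
      = ∑ n ∈ rep (H.comul m.2), H.epsR n.1 ⊗ₜ[k] (H.antipode m.1 * n.2) := by
    intro m
    set C2 : ((W ⊗[k] W) ⊗[k] W) →ₗ[k] W ⊗[k] W :=
      TensorProduct.map (LinearMap.mul' k W ∘ₗ H.antipode.rTensor W)
        (LinearMap.mulLeft k (H.antipode m.1)) with hC2
    have hC2t : ∀ a b c : W, C2 ((a ⊗ₜ[k] b) ⊗ₜ[k] c)
        = (H.antipode a * b) ⊗ₜ[k] (H.antipode m.1 * c) := by
      intro a b c; simp [hC2]
    have inner1 : ∑ n ∈ rep (H.comul m.2), C1 ((m.1 ⊗ₜ[k] n.1) ⊗ₜ[k] n.2)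
        = ∑ n ∈ rep (H.comul m.2), ∑ r ∈ rep (H.comul n.2), C2 ((n.1 ⊗ₜ[k] r.1) ⊗ₜ[k] r.2) := by
      refine Finset.sum_congr rfl fun n _ => ?_
      rw [hC1t]
      conv_lhs => rw [rep_spec (H.comul n.2), Finset.mul_sum]
      refine Finset.sum_congr rfl fun r _ => ?_
      rw [hC2t]
      simp [Algebra.TensorProduct.tmul_mul_tmul]
    rw [inner1, ← reblock3 H C2 (rep_spec (H.comul m.2)) (fun r _ => rep_spec _)
      (fun r _ => rep_spec _)]
    refine Finset.sum_congr rfl fun n _ => ?_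
    rw [← fold_B10 H (rep_spec (H.comul n.1)), TensorProduct.sum_tmul]
    exact Finset.sum_congr rfl fun v _ => (hC2t _ _ _)
  calc ∑ m ∈ t, ∑ n ∈ rep (H.comul m.2), C1 ((m.1 ⊗ₜ[k] n.1) ⊗ₜ[k] n.2)
      = ∑ m ∈ t, ∑ p ∈ s, p.1 ⊗ₜ[k] (H.antipode m.1 * (m.2 * p.2)) := by
        refine Finset.sum_congr rfl fun m _ => ?_
        rw [step2 m]
        have e1 : ∑ n ∈ rep (H.comul m.2), H.epsR n.1 ⊗ₜ[k] (H.antipode m.1 * n.2)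
            = (LinearMap.lTensor W (LinearMap.mulLeft k (H.antipode m.1)))
                ((H.epsR.rTensor W) (H.comul m.2)) := by
          conv_rhs => rw [rep_spec (H.comul m.2)]
          simp [map_sum]
        rw [e1, I2 H m.2, hs, Finset.mul_sum, map_sum]
        simp [Algebra.TensorProduct.tmul_mul_tmul]
    _ = H.comul (H.epsR h) := by
        rw [G2 H h, hs, Finset.mul_sum, Finset.sum_comm]
        refine Finset.sum_congr rfl fun p _ => ?_
        rw [← TensorProduct.tmul_sum, Algebra.TensorProduct.tmul_mul_tmul, one_mul]
        congr 1
        rw [← fold_B10 H ht, Finset.sum_mul]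
        exact Finset.sum_congr rfl fun m _ => (mul_assoc _ _ _).symm

lemma c5 (h : W) : H.conv H.comul H.rho h = H.comul (H.epsL h) := by
  obtain ⟨t, ht⟩ : ∃ t : Finset (W × W), H.comul h = ∑ p ∈ t, p.1 ⊗ₜ[k] p.2 := ⟨_, rep_spec _⟩
  obtain ⟨s, hs⟩ : ∃ s : Finset (W × W), H.comul 1 = ∑ p ∈ s, p.1 ⊗ₜ[k] p.2 := ⟨_, rep_spec _⟩
  rw [conv_apply H _ _ ht]
  set C1 : ((W ⊗[k] W) ⊗[k] W) →ₗ[k] W ⊗[k] W :=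
    LinearMap.mul' k (W ⊗[k] W) ∘ₗ
      TensorProduct.map H.comul
        ((TensorProduct.comm k W W).toLinearMap ∘ₗ TensorProduct.map H.antipode H.antipode) ∘ₗ
      (TensorProduct.assoc k W W W).toLinearMap with hC1
  have hC1t : ∀ a b c : W,
      C1 ((a ⊗ₜ[k] b) ⊗ₜ[k] c) = H.comul a * (H.antipode c ⊗ₜ[k] H.antipode b) := by
    intro a b c; simp [hC1]
  have step1 : ∑ m ∈ t, H.comul m.1 * H.rho m.2
      = ∑ m ∈ t, ∑ n ∈ rep (H.comul m.2), C1 ((m.1 ⊗ₜ[k] n.1) ⊗ₜ[k] n.2) := by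
    refine Finset.sum_congr rfl fun m _ => ?_
    rw [rho_apply H (rep_spec (H.comul m.2)), Finset.mul_sum]
    exact Finset.sum_congr rfl fun n _ => (hC1t _ _ _).symm
  rw [step1, ← reblock3 H C1 ht (fun r _ => rep_spec _) (fun r _ => rep_spec _)]
  have step2 : ∀ m : W × W, ∑ n ∈ rep (H.comul m.1), C1 ((n.1 ⊗ₜ[k] n.2) ⊗ₜ[k] m.2)
      = ∑ n ∈ rep (H.comul m.1), (n.1 * H.antipode m.2) ⊗ₜ[k] H.epsL n.2 := by
    intro m
    set C2 : ((W ⊗[k] W) ⊗[k] W) →ₗ[k] W ⊗[k] W :=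
      TensorProduct.map (LinearMap.mulRight k (H.antipode m.2))
          (LinearMap.mul' k W ∘ₗ LinearMap.lTensor W H.antipode) ∘ₗ
        (TensorProduct.assoc k W W W).toLinearMap with hC2
    have hC2t : ∀ a b c : W, C2 ((a ⊗ₜ[k] b) ⊗ₜ[k] c)
        = (a * H.antipode m.2) ⊗ₜ[k] (b * H.antipode c) := by
      intro a b c; simp [hC2]
    have inner1 : ∑ n ∈ rep (H.comul m.1), C1 ((n.1 ⊗ₜ[k] n.2) ⊗ₜ[k] m.2)
        = ∑ n ∈ rep (H.comul m.1), ∑ v ∈ rep (H.comul n.1), C2 ((v.1 ⊗ₜ[k] v.2) ⊗ₜ[k] n.2) := by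
      refine Finset.sum_congr rfl fun n _ => ?_
      rw [hC1t]
      conv_lhs => rw [rep_spec (H.comul n.1), Finset.sum_mul]
      refine Finset.sum_congr rfl fun v _ => ?_
      rw [hC2t]
      simp [Algebra.TensorProduct.tmul_mul_tmul]
    rw [inner1, reblock3 H C2 (rep_spec (H.comul m.1)) (fun r _ => rep_spec _)
      (fun r _ => rep_spec _)]
    refine Finset.sum_congr rfl fun n _ => ?_
    rw [← fold_B9 H (rep_spec (H.comul n.2)), TensorProduct.tmul_sum]
    exact Finset.sum_congr rfl fun w _ => (hC2t _ _ _)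
  calc ∑ m ∈ t, ∑ n ∈ rep (H.comul m.1), C1 ((n.1 ⊗ₜ[k] n.2) ⊗ₜ[k] m.2)
      = ∑ m ∈ t, ∑ p ∈ s, (p.1 * (m.1 * H.antipode m.2)) ⊗ₜ[k] p.2 := by
        refine Finset.sum_congr rfl fun m _ => ?_
        rw [step2 m]
        have e1 : ∑ n ∈ rep (H.comul m.1), (n.1 * H.antipode m.2) ⊗ₜ[k] H.epsL n.2
            = (LinearMap.rTensor W (LinearMap.mulRight k (H.antipode m.2)))
                ((LinearMap.lTensor W H.epsL) (H.comul m.1)) := by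
          conv_rhs => rw [rep_spec (H.comul m.1)]
          simp [map_sum]
        rw [e1, I1 H m.1, hs, Finset.sum_mul, map_sum]
        simp [Algebra.TensorProduct.tmul_mul_tmul, mul_assoc]
    _ = H.comul (H.epsL h) := by
        rw [G1 H h, hs, Finset.sum_mul, Finset.sum_comm]
        refine Finset.sum_congr rfl fun p _ => ?_
        rw [← TensorProduct.sum_tmul, Algebra.TensorProduct.tmul_mul_tmul, mul_one]
        congr 1
        rw [← fold_B9 H ht, Finset.mul_sum]


/-- intermediate form of `ρ * Δ` -/
lemma KL (z : W) : H.conv H.rho H.comul z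
    = ∑ m ∈ rep (H.comul z), ∑ n ∈ rep (H.comul m.2),
        H.epsR n.1 ⊗ₜ[k] (H.antipode m.1 * n.2) := by
  rw [conv_apply H _ _ (rep_spec (H.comul z))]
  set C1 : ((W ⊗[k] W) ⊗[k] W) →ₗ[k] W ⊗[k] W :=
    LinearMap.mul' k (W ⊗[k] W) ∘ₗ
      TensorProduct.map
        ((TensorProduct.comm k W W).toLinearMap ∘ₗ TensorProduct.map H.antipode H.antipode)
        H.comul with hC1
  have hC1t : ∀ a b c : W,
      C1 ((a ⊗ₜ[k] b) ⊗ₜ[k] c) = (H.antipode b ⊗ₜ[k] H.antipode a) * H.comul c := by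
    intro a b c; simp [hC1]
  have step1 : ∑ m ∈ rep (H.comul z), H.rho m.1 * H.comul m.2
      = ∑ m ∈ rep (H.comul z), ∑ n ∈ rep (H.comul m.1), C1 ((n.1 ⊗ₜ[k] n.2) ⊗ₜ[k] m.2) := by
    refine Finset.sum_congr rfl fun m _ => ?_
    rw [rho_apply H (rep_spec (H.comul m.1)), Finset.sum_mul]
    exact Finset.sum_congr rfl fun n _ => (hC1t _ _ _).symm
  rw [step1, reblock3 H C1 (rep_spec (H.comul z)) (fun r _ => rep_spec _) (fun r _ => rep_spec _)]
  refine Finset.sum_congr rfl fun m _ => ?_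
  set C2 : ((W ⊗[k] W) ⊗[k] W) →ₗ[k] W ⊗[k] W :=
    TensorProduct.map (LinearMap.mul' k W ∘ₗ H.antipode.rTensor W)
      (LinearMap.mulLeft k (H.antipode m.1)) with hC2
  have hC2t : ∀ a b c : W, C2 ((a ⊗ₜ[k] b) ⊗ₜ[k] c)
      = (H.antipode a * b) ⊗ₜ[k] (H.antipode m.1 * c) := by
    intro a b c; simp [hC2]
  have inner1 : ∑ n ∈ rep (H.comul m.2), C1 ((m.1 ⊗ₜ[k] n.1) ⊗ₜ[k] n.2)
      = ∑ n ∈ rep (H.comul m.2), ∑ r ∈ rep (H.comul n.2), C2 ((n.1 ⊗ₜ[k] r.1) ⊗ₜ[k] r.2) := by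
    refine Finset.sum_congr rfl fun n _ => ?_
    rw [hC1t]
    conv_lhs => rw [rep_spec (H.comul n.2), Finset.mul_sum]
    refine Finset.sum_congr rfl fun r _ => ?_
    rw [hC2t]
    simp [Algebra.TensorProduct.tmul_mul_tmul]
  rw [inner1, ← reblock3 H C2 (rep_spec (H.comul m.2)) (fun r _ => rep_spec _)
    (fun r _ => rep_spec _)]
  refine Finset.sum_congr rfl fun n _ => ?_
  rw [← fold_B10 H (rep_spec (H.comul n.1)), TensorProduct.sum_tmul]
  exact Finset.sum_congr rfl fun v _ => (hC2t _ _ _)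

/-- `ζ₀ = τ∘(S⊗ε_R)∘Δ` -/
noncomputable def zeta : W →ₗ[k] W ⊗[k] W :=
  (TensorProduct.comm k W W).toLinearMap ∘ₗ
    TensorProduct.map (H : WeakHopf k W).antipode H.epsR ∘ₗ H.comul

lemma zeta_apply {z : W} {t : Finset (W × W)} (ht : H.comul z = ∑ m ∈ t, m.1 ⊗ₜ[k] m.2) :
    H.zeta z = ∑ m ∈ t, H.epsR m.2 ⊗ₜ[k] H.antipode m.1 := by
  simp only [zeta, LinearMap.coe_comp, Function.comp_apply]
  rw [ht]
  simp [map_sum]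

lemma ACmain (h : W) :
    H.conv (H.conv H.rho H.comul) H.rho h = H.rho h := by
  obtain ⟨t, ht⟩ : ∃ t : Finset (W × W), H.comul h = ∑ p ∈ t, p.1 ⊗ₜ[k] p.2 := ⟨_, rep_spec _⟩
  obtain ⟨s, hs⟩ : ∃ s : Finset (W × W), H.comul 1 = ∑ p ∈ s, p.1 ⊗ₜ[k] p.2 := ⟨_, rep_spec _⟩
  rw [conv_apply H _ _ ht]
  -- C1 : (a⊗b)⊗c ↦ Φ(a) * (S c ⊗ S b), where Φ = ρ*Δ
  set C1 : ((W ⊗[k] W) ⊗[k] W) →ₗ[k] W ⊗[k] W :=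
    LinearMap.mul' k (W ⊗[k] W) ∘ₗ
      TensorProduct.map (H.conv H.rho H.comul)
        ((TensorProduct.comm k W W).toLinearMap ∘ₗ TensorProduct.map H.antipode H.antipode) ∘ₗ
      (TensorProduct.assoc k W W W).toLinearMap with hC1
  have hC1t : ∀ a b c : W, C1 ((a ⊗ₜ[k] b) ⊗ₜ[k] c)
      = H.conv H.rho H.comul a * (H.antipode c ⊗ₜ[k] H.antipode b) := by
    intro a b c; simp [hC1]
  have S1 : ∑ r ∈ t, H.conv H.rho H.comul r.1 * H.rho r.2
      = ∑ r ∈ t, ∑ q ∈ rep (H.comul r.2), C1 ((r.1 ⊗ₜ[k] q.1) ⊗ₜ[k] q.2) := by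
    refine Finset.sum_congr rfl fun r _ => ?_
    rw [rho_apply H (rep_spec (H.comul r.2)), Finset.mul_sum]
    exact Finset.sum_congr rfl fun q _ => (hC1t _ _ _).symm
  rw [S1, ← reblock3 H C1 ht (fun r _ => rep_spec _) (fun r _ => rep_spec _)]
  -- now Σ_r Σ_{u∈Δ(r.1)} Φ(u.1)*(S(r.2)⊗S(u.2))
  -- C3 x : (a⊗b)⊗c ↦ ζ(a) * (S x ⊗ (b * S c))
  set C3 : W → (((W ⊗[k] W) ⊗[k] W) →ₗ[k] W ⊗[k] W) := fun x =>
    LinearMap.mul' k (W ⊗[k] W) ∘ₗ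
      TensorProduct.map H.zeta
        (TensorProduct.mk k W W (H.antipode x) ∘ₗ
          (LinearMap.mul' k W ∘ₗ LinearMap.lTensor W H.antipode)) ∘ₗ
      (TensorProduct.assoc k W W W).toLinearMap with hC3
  have hC3t : ∀ x a b c : W, C3 x ((a ⊗ₜ[k] b) ⊗ₜ[k] c)
      = H.zeta a * (H.antipode x ⊗ₜ[k] (b * H.antipode c)) := by
    intro x a b c; simp [hC3]
  -- C6 x : (a⊗b)⊗c ↦ (εR b * S x) ⊗ (S a * εL c)
  set C6 : W → (((W ⊗[k] W) ⊗[k] W) →ₗ[k] W ⊗[k] W) := fun x =>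
    TensorProduct.map (LinearMap.mulRight k (H.antipode x) ∘ₗ H.epsR)
        (LinearMap.mul' k W ∘ₗ TensorProduct.map H.antipode H.epsL) ∘ₗ
      (TensorProduct.assoc k W W W).toLinearMap ∘ₗ
      LinearMap.rTensor W (TensorProduct.comm k W W).toLinearMap with hC6
  have hC6t : ∀ x a b c : W, C6 x ((a ⊗ₜ[k] b) ⊗ₜ[k] c)
      = (H.epsR b * H.antipode x) ⊗ₜ[k] (H.antipode a * H.epsL c) := by
    intro x a b c; simp [hC6]
  -- C7 x : (a⊗b)⊗c ↦ (εR c * S x) ⊗ (S a * εL b)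
  set C7 : W → (((W ⊗[k] W) ⊗[k] W) →ₗ[k] W ⊗[k] W) := fun x =>
    TensorProduct.map (LinearMap.mulRight k (H.antipode x) ∘ₗ H.epsR)
        (LinearMap.mul' k W ∘ₗ TensorProduct.map H.antipode H.epsL) ∘ₗ
      (TensorProduct.comm k (W ⊗[k] W) W).toLinearMap with hC7
  have hC7t : ∀ x a b c : W, C7 x ((a ⊗ₜ[k] b) ⊗ₜ[k] c)
      = (H.epsR c * H.antipode x) ⊗ₜ[k] (H.antipode a * H.epsL b) := by
    intro x a b c; simp [hC7]
  -- C8 : (a⊗b)⊗c ↦ (εR b * S c) ⊗ S a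
  set C8 : ((W ⊗[k] W) ⊗[k] W) →ₗ[k] W ⊗[k] W :=
    (TensorProduct.comm k W W).toLinearMap ∘ₗ
      TensorProduct.map H.antipode
        (LinearMap.mul' k W ∘ₗ TensorProduct.map H.epsR H.antipode) ∘ₗ
      (TensorProduct.assoc k W W W).toLinearMap with hC8
  have hC8t : ∀ a b c : W, C8 ((a ⊗ₜ[k] b) ⊗ₜ[k] c)
      = (H.epsR b * H.antipode c) ⊗ₜ[k] H.antipode a := by
    intro a b c; simp [hC8]
  have Smid : ∀ r : W × W, ∑ u ∈ rep (H.comul r.1), C1 ((u.1 ⊗ₜ[k] u.2) ⊗ₜ[k] r.2)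
      = ∑ u ∈ rep (H.comul r.1), C8 ((u.1 ⊗ₜ[k] u.2) ⊗ₜ[k] r.2) := by
    intro r
    -- step S3/S4 : expand Φ(u.1) and reblock inside u.1
    have S3 : ∀ u : W × W, C1 ((u.1 ⊗ₜ[k] u.2) ⊗ₜ[k] r.2)
        = ∑ m ∈ rep (H.comul u.1), C3 r.2 ((m.1 ⊗ₜ[k] m.2) ⊗ₜ[k] u.2) := by
      intro u
      rw [hC1t, KL H u.1, Finset.sum_mul]
      set C2 : ((W ⊗[k] W) ⊗[k] W) →ₗ[k] W ⊗[k] W :=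
        LinearMap.mulRight k (H.antipode r.2 ⊗ₜ[k] H.antipode u.2) ∘ₗ
          (TensorProduct.map H.epsR (LinearMap.mul' k W ∘ₗ H.antipode.rTensor W) ∘ₗ
            (TensorProduct.assoc k W W W).toLinearMap ∘ₗ
            LinearMap.rTensor W (TensorProduct.comm k W W).toLinearMap) with hC2
      have hC2t : ∀ a b c : W, C2 ((a ⊗ₜ[k] b) ⊗ₜ[k] c)
          = (H.epsR b ⊗ₜ[k] (H.antipode a * c)) * (H.antipode r.2 ⊗ₜ[k] H.antipode u.2) := by
        intro a b c; simp [hC2]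
      have e1 : ∑ m ∈ rep (H.comul u.1),
          (∑ n ∈ rep (H.comul m.2), H.epsR n.1 ⊗ₜ[k] (H.antipode m.1 * n.2))
            * (H.antipode r.2 ⊗ₜ[k] H.antipode u.2)
          = ∑ m ∈ rep (H.comul u.1), ∑ n ∈ rep (H.comul m.2),
              C2 ((m.1 ⊗ₜ[k] n.1) ⊗ₜ[k] n.2) := by
        refine Finset.sum_congr rfl fun m _ => ?_
        rw [Finset.sum_mul]
        exact Finset.sum_congr rfl fun n _ => (hC2t _ _ _).symm
      rw [e1, ← reblock3 H C2 (rep_spec (H.comul u.1)) (fun r _ => rep_spec _)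
        (fun r _ => rep_spec _)]
      refine Finset.sum_congr rfl fun m _ => ?_
      rw [hC3t, zeta_apply H (rep_spec (H.comul m.1)), Finset.sum_mul]
      refine Finset.sum_congr rfl fun v _ => ?_
      rw [hC2t]
      simp [Algebra.TensorProduct.tmul_mul_tmul, mul_assoc]
    simp only [S3]
    -- S6 : reblock at r.1 and fold to ζ(u.1)*(S r.2 ⊗ εL u.2)
    rw [reblock3 H (C3 r.2) (rep_spec (H.comul r.1)) (fun r _ => rep_spec _)
      (fun r _ => rep_spec _)]
    have S6 : ∀ u : W × W, ∑ w ∈ rep (H.comul u.2), C3 r.2 ((u.1 ⊗ₜ[k] w.1) ⊗ₜ[k] w.2)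
        = ∑ v ∈ rep (H.comul u.1), C6 r.2 ((v.1 ⊗ₜ[k] v.2) ⊗ₜ[k] u.2) := by
      intro u
      have l1 : ∑ w ∈ rep (H.comul u.2), C3 r.2 ((u.1 ⊗ₜ[k] w.1) ⊗ₜ[k] w.2)
          = H.zeta u.1 * (H.antipode r.2 ⊗ₜ[k] H.epsL u.2) := by
        rw [← fold_B9 H (rep_spec (H.comul u.2)), TensorProduct.tmul_sum, Finset.mul_sum]
        exact Finset.sum_congr rfl fun w _ => (hC3t _ _ _ _)
      rw [l1, zeta_apply H (rep_spec (H.comul u.1)), Finset.sum_mul]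
      refine Finset.sum_congr rfl fun v _ => ?_
      rw [hC6t]
      simp [Algebra.TensorProduct.tmul_mul_tmul]
    simp only [S6]
    -- S8 : reblock at r.1 again
    rw [reblock3 H (C6 r.2) (rep_spec (H.comul r.1)) (fun r _ => rep_spec _)
      (fun r _ => rep_spec _)]
    -- S9/S10 : I2 + D12 + fold, landing in C7 form
    have S9 : ∀ u : W × W, ∑ x ∈ rep (H.comul u.2), C6 r.2 ((u.1 ⊗ₜ[k] x.1) ⊗ₜ[k] x.2)
        = ∑ y ∈ rep (H.comul u.2), C7 r.2 ((u.1 ⊗ₜ[k] y.1) ⊗ₜ[k] y.2) := by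
      intro u
      set Psi : (W ⊗[k] W) →ₗ[k] W ⊗[k] W :=
        TensorProduct.map (LinearMap.mulRight k (H.antipode r.2))
          (LinearMap.mulLeft k (H.antipode u.1) ∘ₗ H.epsL) with hPsi
      have e1 : ∑ x ∈ rep (H.comul u.2), C6 r.2 ((u.1 ⊗ₜ[k] x.1) ⊗ₜ[k] x.2)
          = Psi ((H.epsR.rTensor W) (H.comul u.2)) := by
        conv_rhs => rw [rep_spec (H.comul u.2)]
        rw [map_sum, map_sum]
        refine Finset.sum_congr rfl fun x _ => ?_
        rw [hC6t]
        simp [hPsi]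
      rw [e1, I2 H u.2, hs, Finset.mul_sum, map_sum]
      have e2 : ∀ p : W × W, Psi (((1:W) ⊗ₜ[k] u.2) * (p.1 ⊗ₜ[k] p.2))
          = ∑ y ∈ rep (H.comul u.2),
              H.counit (y.2 * p.2) • ((p.1 * H.antipode r.2) ⊗ₜ[k] (H.antipode u.1 * H.epsL y.1)) := by
        intro p
        rw [Algebra.TensorProduct.tmul_mul_tmul, one_mul]
        rw [hPsi]
        simp only [TensorProduct.map_tmul, LinearMap.coe_comp, Function.comp_apply,
          LinearMap.mulRight_apply, LinearMap.mulLeft_apply]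
        rw [D12 H u.2 p.2 (rep_spec (H.comul u.2))]
        rw [Finset.mul_sum, TensorProduct.tmul_sum]
        refine Finset.sum_congr rfl fun y _ => ?_
        rw [mul_smul_comm, TensorProduct.tmul_smul]
      simp only [e2]
      rw [Finset.sum_comm]
      refine Finset.sum_congr rfl fun y _ => ?_
      rw [hC7t]
      have e3 : ∑ p ∈ s, H.counit (y.2 * p.2) •
          ((p.1 * H.antipode r.2) ⊗ₜ[k] (H.antipode u.1 * H.epsL y.1))
          = ((∑ p ∈ s, H.counit (y.2 * p.2) • p.1) * H.antipode r.2)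
              ⊗ₜ[k] (H.antipode u.1 * H.epsL y.1) := by
        rw [Finset.sum_mul, TensorProduct.sum_tmul]
        refine Finset.sum_congr rfl fun p _ => ?_
        rw [smul_mul_assoc, TensorProduct.smul_tmul']
      rw [e3, ← epsR_repr H hs]
    simp only [S9]
    -- S11 : reblock back and fold SεL
    rw [← reblock3 H (C7 r.2) (rep_spec (H.comul r.1)) (fun r _ => rep_spec _)
      (fun r _ => rep_spec _)]
    refine Finset.sum_congr rfl fun u _ => ?_
    have l2 : ∑ v ∈ rep (H.comul u.1), C7 r.2 ((v.1 ⊗ₜ[k] v.2) ⊗ₜ[k] u.2)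
        = (H.epsR u.2 * H.antipode r.2) ⊗ₜ[k] H.antipode u.1 := by
      rw [← fold_SepsL H (rep_spec (H.comul u.1)), TensorProduct.tmul_sum]
      exact Finset.sum_congr rfl fun v _ => (hC7t _ _ _ _)
    rw [l2, hC8t]
  simp only [Smid]
  -- S12 : final reblock at h and fold SεR
  rw [reblock3 H C8 ht (fun r _ => rep_spec _) (fun r _ => rep_spec _)]
  rw [rho_apply H ht]
  refine Finset.sum_congr rfl fun r _ => ?_
  rw [← fold_SepsR H (rep_spec (H.comul r.2)), TensorProduct.sum_tmul]
  exact Finset.sum_congr rfl fun w _ => (hC8t _ _ _)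

/-- anticomultiplicativity of the antipode -/
lemma AC (h : W) : H.comul (H.antipode h) = H.rho h := by
  have e1 : H.conv H.rho H.comul = H.conv (H.comul ∘ₗ H.antipode) H.comul := by
    refine LinearMap.ext fun z => ?_
    rw [c4 H z, c1 H z]
  have e2 : H.conv H.comul H.rho = H.comul ∘ₗ H.epsL := by
    refine LinearMap.ext fun z => ?_
    rw [c5 H z]; rfl
  calc H.comul (H.antipode h)
      = H.conv (H.comul ∘ₗ H.antipode) (H.comul ∘ₗ H.epsL) h := (c3 H h).symm
    _ = H.conv (H.comul ∘ₗ H.antipode) (H.conv H.comul H.rho) h := by rw [e2]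
    _ = H.conv (H.conv (H.comul ∘ₗ H.antipode) H.comul) H.rho h := (conv_assoc H _ _ _ h).symm
    _ = H.conv (H.conv H.rho H.comul) H.rho h := by rw [← e1]
    _ = H.rho h := ACmain H h


section Sinv

variable (Sinv : W →ₗ[k] W)
variable (hS₁ : Sinv ∘ₗ (H : WeakHopf k W).antipode = LinearMap.id)
variable (hS₂ : (H : WeakHopf k W).antipode ∘ₗ Sinv = LinearMap.id)

include hS₁ in
lemma Sinv_S (x : W) : Sinv (H.antipode x) = x := by
  have := DFunLike.congr_fun hS₁ x
  simpa using this

include hS₂ in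
lemma S_Sinv (x : W) : H.antipode (Sinv x) = x := by
  have := DFunLike.congr_fun hS₂ x
  simpa using this

include hS₂ in
lemma comul_eq_rho_Sinv (z : W) :
    H.comul z = H.rho (Sinv z) := by
  have h1 := AC H (Sinv z)
  rw [S_Sinv H Sinv hS₂ z] at h1
  exact h1

include hS₁ hS₂ in
lemma K_lemma {s : Finset (W × W)} (hs : H.comul 1 = ∑ p ∈ s, p.1 ⊗ₜ[k] p.2) :
    ∑ p ∈ s, Sinv p.2 * p.1 = 1 := by
  obtain ⟨u, hu⟩ : ∃ u : Finset (W × W), H.comul (Sinv 1) = ∑ p ∈ u, p.1 ⊗ₜ[k] p.2 :=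
    ⟨_, rep_spec _⟩
  have h1 := comul_eq_rho_Sinv H Sinv hS₂ 1
  rw [rho_apply H hu, hs] at h1
  set N : (W ⊗[k] W) →ₗ[k] W :=
    LinearMap.mul' k W ∘ₗ Sinv.rTensor W ∘ₗ (TensorProduct.comm k W W).toLinearMap with hN
  have hNt : ∀ a b : W, N (a ⊗ₜ[k] b) = Sinv b * a := by intro a b; simp [hN]
  have h2 := congrArg N h1
  simp only [map_sum, hNt] at h2
  rw [h2]
  have h3 : ∀ w : W × W, Sinv (H.antipode w.1) * H.antipode w.2 = w.1 * H.antipode w.2 := by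
    intro w; rw [Sinv_S H Sinv hS₁]
  simp only [h3]
  rw [fold_B9 H hu]
  have hinv1 : Sinv (1:W) = 1 := by
    conv_lhs => rw [← S_one H]
    rw [Sinv_S H Sinv hS₁]
  rw [hinv1, epsL_one H]

include hS₁ hS₂ in
lemma TL {z : W} {t : Finset (W × W)} (ht : H.comul z = ∑ m ∈ t, m.1 ⊗ₜ[k] m.2) :
    ∑ m ∈ t, Sinv (H.epsL m.2) * m.1 = z := by
  obtain ⟨s, hs⟩ : ∃ s : Finset (W × W), H.comul 1 = ∑ p ∈ s, p.1 ⊗ₜ[k] p.2 := ⟨_, rep_spec _⟩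
  have h1 := fold_I1 H ht
  have h2 : H.comul 1 * (z ⊗ₜ[k] 1) = ∑ p ∈ s, (p.1 * z) ⊗ₜ[k] p.2 := by
    rw [hs, Finset.sum_mul]
    simp [Algebra.TensorProduct.tmul_mul_tmul]
  rw [h2] at h1
  set N : (W ⊗[k] W) →ₗ[k] W :=
    LinearMap.mul' k W ∘ₗ Sinv.rTensor W ∘ₗ (TensorProduct.comm k W W).toLinearMap with hN
  have hNt : ∀ a b : W, N (a ⊗ₜ[k] b) = Sinv b * a := by intro a b; simp [hN]
  have h3 := congrArg N h1
  simp only [map_sum, hNt] at h3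
  rw [h3]
  calc ∑ p ∈ s, Sinv p.2 * (p.1 * z)
      = ∑ p ∈ s, Sinv p.2 * p.1 * z := by
        exact Finset.sum_congr rfl fun p _ => (mul_assoc _ _ _).symm
    _ = z := by rw [← Finset.sum_mul, K_lemma H Sinv hS₁ hS₂ hs, one_mul]

include hS₁ hS₂ in
lemma TRcore {z : W} {t : Finset (W × W)} (ht : H.comul z = ∑ m ∈ t, m.1 ⊗ₜ[k] m.2) :
    ∑ m ∈ t, H.epsR (Sinv m.2) * m.1 = z := by
  obtain ⟨u, hu⟩ : ∃ u : Finset (W × W), H.comul (Sinv z) = ∑ p ∈ u, p.1 ⊗ₜ[k] p.2 :=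
    ⟨_, rep_spec _⟩
  have h1 := comul_eq_rho_Sinv H Sinv hS₂ z
  rw [rho_apply H hu, ht] at h1
  set N : (W ⊗[k] W) →ₗ[k] W :=
    LinearMap.mul' k W ∘ₗ ((H.epsR ∘ₗ Sinv).rTensor W) ∘ₗ (TensorProduct.comm k W W).toLinearMap
    with hN
  have hNt : ∀ a b : W, N (a ⊗ₜ[k] b) = H.epsR (Sinv b) * a := by intro a b; simp [hN]
  have h2 := congrArg N h1
  simp only [map_sum, hNt] at h2
  rw [h2]
  have h3 : ∀ w : W × W, H.epsR (Sinv (H.antipode w.1)) * H.antipode w.2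
      = H.epsR w.1 * H.antipode w.2 := by
    intro w; rw [Sinv_S H Sinv hS₁]
  simp only [h3]
  rw [fold_SepsR H hu, S_Sinv H Sinv hS₂]

include hS₁ hS₂ in
lemma TRfinal {z : W} {t : Finset (W × W)} (ht : H.comul z = ∑ m ∈ t, m.1 ⊗ₜ[k] m.2)
    {σ : W × W → Finset (W × W)}
    (hσ : ∀ m ∈ t, H.comul m.1 = ∑ n ∈ σ m, n.1 ⊗ₜ[k] n.2) :
    ∑ m ∈ t, ∑ n ∈ σ m, H.epsL n.1 * H.epsR (Sinv m.2) * n.2 = z := by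
  calc ∑ m ∈ t, ∑ n ∈ σ m, H.epsL n.1 * H.epsR (Sinv m.2) * n.2
      = ∑ m ∈ t, H.epsR (Sinv m.2) * m.1 := by
        refine Finset.sum_congr rfl fun m hm => ?_
        calc ∑ n ∈ σ m, H.epsL n.1 * H.epsR (Sinv m.2) * n.2
            = ∑ n ∈ σ m, H.epsR (Sinv m.2) * (H.epsL n.1 * n.2) := by
              refine Finset.sum_congr rfl fun n _ => ?_
              rw [← COMM H (Sinv m.2) n.1, mul_assoc]
          _ = H.epsR (Sinv m.2) * m.1 := by
              rw [← Finset.mul_sum, fold_D5 H (hσ m hm)]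
    _ = z := TRcore H Sinv hS₁ hS₂ ht

end Sinv

lemma cmul_apply (φ ψ : Module.Dual k W) {z : W} {t : Finset (W × W)}
    (ht : H.comul z = ∑ m ∈ t, m.1 ⊗ₜ[k] m.2) :
    H.cmul φ ψ z = ∑ m ∈ t, φ m.1 * ψ m.2 := by
  simp only [cmul, LinearMap.coe_comp, Function.comp_apply]
  rw [ht]
  simp [map_sum]

lemma rkOne_apply (φ : Module.Dual k W) (h w : W) : rkOne φ h w = φ w • h := rfl

lemma rkOne_sum {ι : Type*} (s : Finset ι) (f : ι → Module.Dual k W) (h : W) :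
    ∑ i ∈ s, rkOne (f i) h = rkOne (∑ i ∈ s, f i) h := by
  refine LinearMap.ext fun w => ?_
  simp [rkOne_apply, Finset.sum_apply, Finset.sum_smul]

lemma strip1 (φ : Module.Dual k W) (x h : W) (hx : x ∈ Set.range ⇑H.epsL) :
    (Submodule.Quotient.mk (rkOne φ (x * h)) : (W →ₗ[k] W) ⧸ H.Jideal)
      = Submodule.Quotient.mk (rkOne (H.cmul φ (H.counit ∘ₗ LinearMap.mulRight k x)) h) := by
  rw [Submodule.Quotient.eq]
  exact Submodule.subset_span (Or.inl ⟨φ, x, h, hx, rfl⟩)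

lemma strip2 (φ : Module.Dual k W) (y h : W) (hy : y ∈ Set.range ⇑H.epsR) :
    (Submodule.Quotient.mk (rkOne φ (y * h)) : (W →ₗ[k] W) ⧸ H.Jideal)
      = Submodule.Quotient.mk (rkOne (H.cmul φ (H.counit ∘ₗ LinearMap.mulLeft k y)) h) := by
  rw [Submodule.Quotient.eq]
  exact Submodule.subset_span (Or.inr ⟨φ, y, h, hy, rfl⟩)


lemma wco_general {X Y : W ⊗[k] W} {sx sy : Finset (W × W)} {f₁ f₂ g₁ g₂ : W × W → W}
    (hX : X = ∑ p ∈ sx, f₁ p ⊗ₜ[k] f₂ p) (hY : Y = ∑ q ∈ sy, g₁ q ⊗ₜ[k] g₂ q) :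
    (X ⊗ₜ[k] (1:W)) * (TensorProduct.assoc k W W W).symm ((1:W) ⊗ₜ[k] Y)
      = ∑ p ∈ sx, ∑ q ∈ sy, (f₁ p ⊗ₜ[k] (f₂ p * g₁ q)) ⊗ₜ[k] g₂ q := by
  rw [hX, hY, TensorProduct.sum_tmul, TensorProduct.tmul_sum]
  simp only [map_sum, TensorProduct.assoc_symm_tmul]
  rw [Finset.sum_mul_sum]
  simp [Algebra.TensorProduct.tmul_mul_tmul]

lemma comul_one_epsL_repr {s : Finset (W × W)} (hs : H.comul 1 = ∑ p ∈ s, p.1 ⊗ₜ[k] p.2) :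
    H.comul 1 = ∑ p ∈ s, p.1 ⊗ₜ[k] H.epsL p.2 := by
  have h1 := L1 H
  rw [hs] at h1
  rw [map_sum] at h1
  simp only [LinearMap.lTensor_tmul] at h1
  exact hs.trans h1.symm

lemma comul_one_epsR_repr {s : Finset (W × W)} (hs : H.comul 1 = ∑ p ∈ s, p.1 ⊗ₜ[k] p.2) :
    H.comul 1 = ∑ p ∈ s, H.epsR p.1 ⊗ₜ[k] p.2 := by
  have h1 := L2 H
  rw [hs] at h1
  rw [map_sum] at h1
  simp only [LinearMap.rTensor_tmul] at h1
  exact hs.trans h1.symm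

lemma comul2_one_twist {s : Finset (W × W)} (hs : H.comul 1 = ∑ p ∈ s, p.1 ⊗ₜ[k] p.2) :
    (H.comul.rTensor W) (H.comul 1)
      = ∑ p ∈ s, ∑ q ∈ s, (p.1 ⊗ₜ[k] (H.epsL p.2 * H.epsR q.1)) ⊗ₜ[k] q.2 := by
  rw [H.weak_comul_one]
  exact wco_general (comul_one_epsL_repr H hs) (comul_one_epsR_repr H hs)

/-- the tail of the `mulD` composition -/
noncomputable def tailD (G : W →ₗ[k] W) : (((W ⊗[k] W) ⊗[k] W) ⊗[k] W) →ₗ[k] W :=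
  LinearMap.mul' k W
  ∘ₗ LinearMap.lTensor W
      (G ∘ₗ LinearMap.mul' k W ∘ₗ LinearMap.rTensor W (LinearMap.mul' k W))
  ∘ₗ (TensorProduct.comm k ((W ⊗[k] W) ⊗[k] W) W).toLinearMap
  ∘ₗ (TensorProduct.assoc k (W ⊗[k] W) W W).symm.toLinearMap
  ∘ₗ (TensorProduct.comm k (W ⊗[k] W) (W ⊗[k] W)).toLinearMap
  ∘ₗ (TensorProduct.assoc k (W ⊗[k] W) W W).toLinearMap

lemma tailD_tmul (G : W →ₗ[k] W) (a b c d : W) :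
    tailD G (((a ⊗ₜ[k] b) ⊗ₜ[k] c) ⊗ₜ[k] d) = b * G (c * d * a) := by
  simp [tailD, mul_assoc]

lemma mulD_eq (Sinv : W →ₗ[k] W) (F G : W →ₗ[k] W) (x : W) :
    H.mulD Sinv F G x
      = tailD G ((LinearMap.rTensor W
          (LinearMap.lTensor (W ⊗[k] W) Sinv ∘ₗ LinearMap.rTensor W H.comul ∘ₗ H.comul ∘ₗ F))
          (H.comul x)) := rfl

lemma left_formula (Sinv : W →ₗ[k] W) (φ : Module.Dual k W) (h : W)
    {s : Finset (W × W)} (hs : H.comul 1 = ∑ p ∈ s, p.1 ⊗ₜ[k] p.2) :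
    H.mulD Sinv (unitD H) (rkOne φ h)
      = ∑ p ∈ s, ∑ q ∈ s,
          rkOne (φ ∘ₗ LinearMap.mulRight k p.1 ∘ₗ LinearMap.mulLeft k (Sinv q.2))
            ((H.epsL p.2 * H.epsR q.1) * h) := by
  refine LinearMap.ext fun x => ?_
  obtain ⟨t, ht⟩ : ∃ t : Finset (W × W), H.comul x = ∑ p ∈ t, p.1 ⊗ₜ[k] p.2 := ⟨_, rep_spec _⟩
  rw [mulD_eq]
  have hhead : ∀ w : W,
      (LinearMap.lTensor (W ⊗[k] W) Sinv ∘ₗ LinearMap.rTensor W H.comul ∘ₗ H.comul ∘ₗ unitD H) w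
        = H.counit w •
            (LinearMap.lTensor (W ⊗[k] W) Sinv) ((H.comul.rTensor W) (H.comul 1)) := by
    intro w
    simp only [LinearMap.coe_comp, Function.comp_apply, unitD, rkOne_apply]
    rw [map_smul, map_smul, map_smul]
  have hstep : (LinearMap.rTensor W
        (LinearMap.lTensor (W ⊗[k] W) Sinv ∘ₗ LinearMap.rTensor W H.comul ∘ₗ H.comul ∘ₗ unitD H))
        (H.comul x)
      = ((LinearMap.lTensor (W ⊗[k] W) Sinv) ((H.comul.rTensor W) (H.comul 1))) ⊗ₜ[k] x := by
    rw [ht, map_sum]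
    simp only [LinearMap.rTensor_tmul, hhead]
    calc ∑ q ∈ t, (H.counit q.1 •
            (LinearMap.lTensor (W ⊗[k] W) Sinv) ((H.comul.rTensor W) (H.comul 1))) ⊗ₜ[k] q.2
        = ((LinearMap.lTensor (W ⊗[k] W) Sinv) ((H.comul.rTensor W) (H.comul 1)))
            ⊗ₜ[k] ∑ q ∈ t, H.counit q.1 • q.2 := by
          rw [TensorProduct.tmul_sum]
          refine Finset.sum_congr rfl fun q _ => ?_
          rw [TensorProduct.tmul_smul, TensorProduct.smul_tmul']
      _ = _ := by rw [counit_fold_left H ht]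
  rw [hstep, comul2_one_twist H hs]
  rw [map_sum]
  simp only [map_sum, LinearMap.lTensor_tmul, TensorProduct.sum_tmul]
  simp only [tailD_tmul, LinearMap.sum_apply, Finset.sum_apply]
  refine Finset.sum_congr rfl fun p _ => Finset.sum_congr rfl fun q _ => ?_
  rw [rkOne_apply]
  simp only [LinearMap.coe_comp, Function.comp_apply, LinearMap.mulLeft_apply,
    LinearMap.mulRight_apply, rkOne_apply]
  rw [mul_smul_comm]

lemma right_formula (Sinv : W →ₗ[k] W) (φ : Module.Dual k W) (h : W)
    {t' : Finset (W × W)} (ht' : H.comul h = ∑ m ∈ t', m.1 ⊗ₜ[k] m.2)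
    {σ : W × W → Finset (W × W)}
    (hσ : ∀ m ∈ t', H.comul m.1 = ∑ n ∈ σ m, n.1 ⊗ₜ[k] n.2) :
    H.mulD Sinv (rkOne φ h) (unitD H)
      = ∑ m ∈ t', ∑ n ∈ σ m,
          rkOne (H.cmul φ
              (H.counit ∘ₗ LinearMap.mulRight k n.1 ∘ₗ LinearMap.mulLeft k (Sinv m.2))) n.2 := by
  refine LinearMap.ext fun x => ?_
  obtain ⟨t, ht⟩ : ∃ t : Finset (W × W), H.comul x = ∑ p ∈ t, p.1 ⊗ₜ[k] p.2 := ⟨_, rep_spec _⟩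
  rw [mulD_eq]
  have hE4 : (LinearMap.lTensor (W ⊗[k] W) Sinv) ((H.comul.rTensor W) (H.comul h))
      = ∑ m ∈ t', ∑ n ∈ σ m, (n.1 ⊗ₜ[k] n.2) ⊗ₜ[k] Sinv m.2 := by
    have e0 : (H.comul.rTensor W) (H.comul h)
        = ∑ m ∈ t', ∑ n ∈ σ m, (n.1 ⊗ₜ[k] n.2) ⊗ₜ[k] m.2 := by
      rw [ht', map_sum]
      refine Finset.sum_congr rfl fun m hm => ?_
      rw [LinearMap.rTensor_tmul, hσ m hm, TensorProduct.sum_tmul]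
    rw [e0]
    simp [map_sum]
  have hhead : ∀ w : W,
      (LinearMap.lTensor (W ⊗[k] W) Sinv ∘ₗ LinearMap.rTensor W H.comul ∘ₗ H.comul ∘ₗ rkOne φ h) w
        = φ w • (LinearMap.lTensor (W ⊗[k] W) Sinv) ((H.comul.rTensor W) (H.comul h)) := by
    intro w
    simp only [LinearMap.coe_comp, Function.comp_apply, rkOne_apply]
    rw [map_smul, map_smul, map_smul]
  have hstep : (LinearMap.rTensor W
        (LinearMap.lTensor (W ⊗[k] W) Sinv ∘ₗ LinearMap.rTensor W H.comul ∘ₗ H.comul ∘ₗ rkOne φ h))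
        (H.comul x)
      = ∑ q ∈ t, φ q.1 •
          (((LinearMap.lTensor (W ⊗[k] W) Sinv) ((H.comul.rTensor W) (H.comul h))) ⊗ₜ[k] q.2) := by
    rw [ht, map_sum]
    refine Finset.sum_congr rfl fun q _ => ?_
    rw [LinearMap.rTensor_tmul, hhead, TensorProduct.smul_tmul']
  rw [hstep, hE4]
  rw [map_sum]
  simp only [TensorProduct.sum_tmul, map_sum, map_smul, tailD_tmul, LinearMap.sum_apply,
    Finset.sum_apply, Finset.smul_sum]
  rw [Finset.sum_comm]
  refine Finset.sum_congr rfl fun m _ => ?_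
  rw [Finset.sum_comm]
  refine Finset.sum_congr rfl fun n _ => ?_
  rw [rkOne_apply, cmul_apply H _ _ ht, Finset.sum_smul]
  refine Finset.sum_congr rfl fun q _ => ?_
  simp only [unitD, rkOne_apply, LinearMap.coe_comp, Function.comp_apply,
    LinearMap.mulLeft_apply, LinearMap.mulRight_apply]
  rw [mul_smul_comm, mul_one, smul_smul]


lemma rkOne_sum2 {ι : Type*} (s : Finset ι) (φ : Module.Dual k W) (v : ι → W) :
    ∑ i ∈ s, rkOne φ (v i) = rkOne φ (∑ i ∈ s, v i) := by
  refine LinearMap.ext fun w => ?_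
  simp [rkOne_apply, Finset.sum_apply, Finset.smul_sum]

lemma PhiEq (Sinv : W →ₗ[k] W)
    (hS₁ : Sinv ∘ₗ H.antipode = LinearMap.id) (hS₂ : H.antipode ∘ₗ Sinv = LinearMap.id)
    (φ : Module.Dual k W) {s : Finset (W × W)} (hs : H.comul 1 = ∑ p ∈ s, p.1 ⊗ₜ[k] p.2) :
    ∑ p ∈ s, ∑ q ∈ s,
        H.cmul (H.cmul (φ ∘ₗ LinearMap.mulRight k p.1 ∘ₗ LinearMap.mulLeft k (Sinv q.2))
            (H.counit ∘ₗ LinearMap.mulRight k (H.epsL p.2)))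
          (H.counit ∘ₗ LinearMap.mulLeft k (H.epsR q.1)) = φ := by
  refine LinearMap.ext fun w => ?_
  obtain ⟨t, ht⟩ : ∃ t : Finset (W × W), H.comul w = ∑ p ∈ t, p.1 ⊗ₜ[k] p.2 := ⟨_, rep_spec _⟩
  simp only [LinearMap.sum_apply, Finset.sum_apply]
  have expand : ∀ p q : W × W,
      (H.cmul (H.cmul (φ ∘ₗ LinearMap.mulRight k p.1 ∘ₗ LinearMap.mulLeft k (Sinv q.2))
            (H.counit ∘ₗ LinearMap.mulRight k (H.epsL p.2)))
          (H.counit ∘ₗ LinearMap.mulLeft k (H.epsR q.1))) w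
        = ∑ a ∈ t, ∑ b ∈ rep (H.comul a.1),
            (φ (Sinv q.2 * b.1 * p.1) * H.counit (b.2 * p.2)) * H.counit (q.1 * a.2) := by
    intro p q
    rw [cmul_apply H _ _ ht]
    refine Finset.sum_congr rfl fun a _ => ?_
    rw [cmul_apply H _ _ (rep_spec (H.comul a.1)), Finset.sum_mul]
    refine Finset.sum_congr rfl fun b _ => ?_
    simp only [LinearMap.coe_comp, Function.comp_apply, LinearMap.mulLeft_apply,
      LinearMap.mulRight_apply]
    rw [counit_mul_epsL H, counit_epsR_mul H]
  simp only [expand]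
  have reorder : ∑ p ∈ s, ∑ q ∈ s, ∑ a ∈ t, ∑ b ∈ rep (H.comul a.1),
        (φ (Sinv q.2 * b.1 * p.1) * H.counit (b.2 * p.2)) * H.counit (q.1 * a.2)
      = ∑ a ∈ t, ∑ q ∈ s, ∑ b ∈ rep (H.comul a.1), ∑ p ∈ s,
        (φ (Sinv q.2 * b.1 * p.1) * H.counit (b.2 * p.2)) * H.counit (q.1 * a.2) := by
    calc ∑ p ∈ s, ∑ q ∈ s, ∑ a ∈ t, ∑ b ∈ rep (H.comul a.1),
          (φ (Sinv q.2 * b.1 * p.1) * H.counit (b.2 * p.2)) * H.counit (q.1 * a.2)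
        = ∑ q ∈ s, ∑ p ∈ s, ∑ a ∈ t, ∑ b ∈ rep (H.comul a.1),
          (φ (Sinv q.2 * b.1 * p.1) * H.counit (b.2 * p.2)) * H.counit (q.1 * a.2) :=
          Finset.sum_comm
      _ = ∑ q ∈ s, ∑ a ∈ t, ∑ p ∈ s, ∑ b ∈ rep (H.comul a.1),
          (φ (Sinv q.2 * b.1 * p.1) * H.counit (b.2 * p.2)) * H.counit (q.1 * a.2) :=
          Finset.sum_congr rfl fun q _ => Finset.sum_comm
      _ = ∑ a ∈ t, ∑ q ∈ s, ∑ p ∈ s, ∑ b ∈ rep (H.comul a.1),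
          (φ (Sinv q.2 * b.1 * p.1) * H.counit (b.2 * p.2)) * H.counit (q.1 * a.2) :=
          Finset.sum_comm
      _ = ∑ a ∈ t, ∑ q ∈ s, ∑ b ∈ rep (H.comul a.1), ∑ p ∈ s,
          (φ (Sinv q.2 * b.1 * p.1) * H.counit (b.2 * p.2)) * H.counit (q.1 * a.2) :=
          Finset.sum_congr rfl fun a _ => Finset.sum_congr rfl fun q _ => Finset.sum_comm
  rw [reorder]
  have merge : ∀ y : W, ∀ a ∈ t,
      ∑ b ∈ rep (H.comul a.1), ∑ p ∈ s, φ (Sinv y * b.1 * p.1) * H.counit (b.2 * p.2)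
        = φ (Sinv y * a.1) := by
    intro y a _
    have hprod : H.comul a.1 * H.comul 1
        = ∑ b ∈ rep (H.comul a.1), ∑ p ∈ s, (b.1 * p.1) ⊗ₜ[k] (b.2 * p.2) := by
      conv_lhs => rw [rep_spec (H.comul a.1), hs]
      rw [Finset.sum_mul_sum]
      simp [Algebra.TensorProduct.tmul_mul_tmul]
    have habs := c2_comul H a.1
    rw [← comul_mul_one H a.1, hprod] at habs
    simp only [map_sum, LinearMap.coe_comp, LinearEquiv.coe_coe, Function.comp_apply,
      LinearMap.lTensor_tmul, TensorProduct.rid_tmul] at habs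
    calc ∑ b ∈ rep (H.comul a.1), ∑ p ∈ s, φ (Sinv y * b.1 * p.1) * H.counit (b.2 * p.2)
        = ∑ b ∈ rep (H.comul a.1), ∑ p ∈ s,
            φ (Sinv y * (H.counit (b.2 * p.2) • (b.1 * p.1))) := by
          refine Finset.sum_congr rfl fun b _ => Finset.sum_congr rfl fun p _ => ?_
          rw [mul_smul_comm, map_smul, smul_eq_mul, mul_comm, mul_assoc]
      _ = φ (Sinv y * a.1) := by
          conv_rhs => rw [← habs]
          simp only [Finset.mul_sum, map_sum, Finset.smul_sum]
  have key2 : ∀ a ∈ t,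
      ∑ q ∈ s, φ (Sinv q.2 * a.1) * H.counit (q.1 * a.2) = φ (Sinv (H.epsL a.2) * a.1) := by
    intro a _
    have hL : Sinv (H.epsL a.2) = ∑ q ∈ s, H.counit (q.1 * a.2) • Sinv q.2 := by
      rw [epsL_repr H hs a.2, map_sum]
      simp [map_smul]
    rw [hL, Finset.sum_mul, map_sum]
    refine Finset.sum_congr rfl fun q _ => ?_
    rw [smul_mul_assoc, map_smul, smul_eq_mul, mul_comm]
  calc ∑ a ∈ t, ∑ q ∈ s, ∑ b ∈ rep (H.comul a.1), ∑ p ∈ s,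
        (φ (Sinv q.2 * b.1 * p.1) * H.counit (b.2 * p.2)) * H.counit (q.1 * a.2)
      = ∑ a ∈ t, ∑ q ∈ s, φ (Sinv q.2 * a.1) * H.counit (q.1 * a.2) := by
        refine Finset.sum_congr rfl fun a ha => Finset.sum_congr rfl fun q _ => ?_
        rw [← merge q.2 a ha]
        rw [Finset.sum_mul]
        refine Finset.sum_congr rfl fun b _ => ?_
        rw [Finset.sum_mul]
    _ = ∑ a ∈ t, φ (Sinv (H.epsL a.2) * a.1) := by
        exact Finset.sum_congr rfl fun a ha => key2 a ha
    _ = φ w := by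
        rw [← TL H Sinv hS₁ hS₂ ht, map_sum]

lemma KappaEq (Sinv : W →ₗ[k] W) (φ : Module.Dual k W) (a c : W) :
    H.cmul φ (H.counit ∘ₗ LinearMap.mulRight k a ∘ₗ LinearMap.mulLeft k (Sinv c))
      = H.cmul (H.cmul φ (H.counit ∘ₗ LinearMap.mulRight k (H.epsL a)))
          (H.counit ∘ₗ LinearMap.mulLeft k (H.epsR (Sinv c))) := by
  refine LinearMap.ext fun w => ?_
  obtain ⟨t, ht⟩ : ∃ t : Finset (W × W), H.comul w = ∑ p ∈ t, p.1 ⊗ₜ[k] p.2 := ⟨_, rep_spec _⟩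
  set C : ((W ⊗[k] W) ⊗[k] W) →ₗ[k] k :=
    LinearMap.mul' k k ∘ₗ
      TensorProduct.map (LinearMap.mul' k k ∘ₗ
          TensorProduct.map φ (H.counit ∘ₗ LinearMap.mulRight k a))
        (H.counit ∘ₗ LinearMap.mulLeft k (Sinv c)) with hC
  have hCt : ∀ x y z : W, C ((x ⊗ₜ[k] y) ⊗ₜ[k] z)
      = (φ x * H.counit (y * a)) * H.counit (Sinv c * z) := by
    intro x y z; simp [hC]
  have lhs_eq : (H.cmul φ
        (H.counit ∘ₗ LinearMap.mulRight k a ∘ₗ LinearMap.mulLeft k (Sinv c))) w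
      = ∑ m ∈ t, ∑ n ∈ rep (H.comul m.2), C ((m.1 ⊗ₜ[k] n.1) ⊗ₜ[k] n.2) := by
    rw [cmul_apply H _ _ ht]
    refine Finset.sum_congr rfl fun m _ => ?_
    simp only [LinearMap.coe_comp, Function.comp_apply, LinearMap.mulLeft_apply,
      LinearMap.mulRight_apply]
    have h1 := H.weak_counit_mul' (Sinv c) m.2 a
    rw [rep_spec (H.comul m.2)] at h1
    simp only [map_sum, TensorProduct.comm_tmul, TensorProduct.map_tmul,
      LinearMap.mul'_apply, LinearMap.coe_comp, Function.comp_apply,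
      LinearMap.mulLeft_apply, LinearMap.mulRight_apply, smul_eq_mul] at h1
    rw [h1, Finset.mul_sum]
    refine Finset.sum_congr rfl fun n _ => ?_
    rw [hCt]
    ring
  have rhs_eq : (H.cmul (H.cmul φ (H.counit ∘ₗ LinearMap.mulRight k (H.epsL a)))
        (H.counit ∘ₗ LinearMap.mulLeft k (H.epsR (Sinv c)))) w
      = ∑ m ∈ t, ∑ n ∈ rep (H.comul m.1), C ((n.1 ⊗ₜ[k] n.2) ⊗ₜ[k] m.2) := by
    rw [cmul_apply H _ _ ht]
    refine Finset.sum_congr rfl fun m _ => ?_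
    rw [cmul_apply H _ _ (rep_spec (H.comul m.1)), Finset.sum_mul]
    refine Finset.sum_congr rfl fun n _ => ?_
    rw [hCt]
    simp only [LinearMap.coe_comp, Function.comp_apply, LinearMap.mulLeft_apply,
      LinearMap.mulRight_apply]
    rw [counit_mul_epsL H, counit_epsR_mul H]
  rw [lhs_eq, rhs_eq,
    reblock3 H C ht (fun r _ => rep_spec _) (fun r _ => rep_spec _)]


lemma mk_sum2 {ι κ : Type*} (s : Finset ι) (τ : ι → Finset κ) (f : ι → κ → (W →ₗ[k] W)) :
    (Submodule.Quotient.mk (∑ i ∈ s, ∑ j ∈ τ i, f i j) : (W →ₗ[k] W) ⧸ H.Jideal)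
      = ∑ i ∈ s, ∑ j ∈ τ i,
          (Submodule.Quotient.mk (f i j) : (W →ₗ[k] W) ⧸ H.Jideal) := by
  rw [← Submodule.mkQ_apply, map_sum]
  refine Finset.sum_congr rfl fun i _ => ?_
  rw [map_sum]
  rfl

end WeakHopf

theorem quantumDouble_unit' {k : Type*} {W : Type*} [Field k] [Ring W] [Algebra k W]
    (H : WeakHopf k W) (Sinv : W →ₗ[k] W)
    (hS₁ : Sinv ∘ₗ H.antipode = LinearMap.id) (hS₂ : H.antipode ∘ₗ Sinv = LinearMap.id) :
    ∀ (φ : Module.Dual k W) (h : W),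
      (Submodule.Quotient.mk (H.mulD Sinv (WeakHopf.unitD H) (WeakHopf.rkOne φ h)) :
          (W →ₗ[k] W) ⧸ WeakHopf.Jideal H)
        = Submodule.Quotient.mk (WeakHopf.rkOne φ h)
      ∧ (Submodule.Quotient.mk (H.mulD Sinv (WeakHopf.rkOne φ h) (WeakHopf.unitD H)) :
          (W →ₗ[k] W) ⧸ WeakHopf.Jideal H)
        = Submodule.Quotient.mk (WeakHopf.rkOne φ h) := by
  intro φ h
  obtain ⟨s, hs⟩ : ∃ s : Finset (W × W), H.comul 1 = ∑ p ∈ s, p.1 ⊗ₜ[k] p.2 :=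
    ⟨_, WeakHopf.rep_spec _⟩
  constructor
  · rw [H.left_formula Sinv φ h hs, WeakHopf.mk_sum2]
    calc ∑ p ∈ s, ∑ q ∈ s, (Submodule.Quotient.mk
          (WeakHopf.rkOne (φ ∘ₗ LinearMap.mulRight k p.1 ∘ₗ LinearMap.mulLeft k (Sinv q.2))
            ((H.epsL p.2 * H.epsR q.1) * h)) : (W →ₗ[k] W) ⧸ WeakHopf.Jideal H)
        = ∑ p ∈ s, ∑ q ∈ s, (Submodule.Quotient.mk
            (WeakHopf.rkOne
              (H.cmul (H.cmul (φ ∘ₗ LinearMap.mulRight k p.1 ∘ₗ LinearMap.mulLeft k (Sinv q.2))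
                  (H.counit ∘ₗ LinearMap.mulRight k (H.epsL p.2)))
                (H.counit ∘ₗ LinearMap.mulLeft k (H.epsR q.1))) h) :
            (W →ₗ[k] W) ⧸ WeakHopf.Jideal H) := by
          refine Finset.sum_congr rfl fun p _ => Finset.sum_congr rfl fun q _ => ?_
          rw [mul_assoc, H.strip1 _ _ _ ⟨p.2, rfl⟩, H.strip2 _ _ _ ⟨q.1, rfl⟩]
      _ = Submodule.Quotient.mk (WeakHopf.rkOne φ h) := by
          rw [← WeakHopf.mk_sum2]
          congr 1
          calc ∑ p ∈ s, ∑ q ∈ s, WeakHopf.rkOne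
                (H.cmul (H.cmul (φ ∘ₗ LinearMap.mulRight k p.1 ∘ₗ LinearMap.mulLeft k (Sinv q.2))
                  (H.counit ∘ₗ LinearMap.mulRight k (H.epsL p.2)))
                  (H.counit ∘ₗ LinearMap.mulLeft k (H.epsR q.1))) h
              = ∑ p ∈ s, WeakHopf.rkOne (∑ q ∈ s,
                  H.cmul (H.cmul (φ ∘ₗ LinearMap.mulRight k p.1 ∘ₗ LinearMap.mulLeft k (Sinv q.2))
                    (H.counit ∘ₗ LinearMap.mulRight k (H.epsL p.2)))
                    (H.counit ∘ₗ LinearMap.mulLeft k (H.epsR q.1))) h :=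
                Finset.sum_congr rfl fun p _ => WeakHopf.rkOne_sum _ _ _
            _ = WeakHopf.rkOne (∑ p ∈ s, ∑ q ∈ s,
                  H.cmul (H.cmul (φ ∘ₗ LinearMap.mulRight k p.1 ∘ₗ LinearMap.mulLeft k (Sinv q.2))
                    (H.counit ∘ₗ LinearMap.mulRight k (H.epsL p.2)))
                    (H.counit ∘ₗ LinearMap.mulLeft k (H.epsR q.1))) h :=
                WeakHopf.rkOne_sum _ _ _
            _ = WeakHopf.rkOne φ h := by rw [H.PhiEq Sinv hS₁ hS₂ φ hs]
  · obtain ⟨t', ht'⟩ : ∃ t' : Finset (W × W), H.comul h = ∑ m ∈ t', m.1 ⊗ₜ[k] m.2 :=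
      ⟨_, WeakHopf.rep_spec _⟩
    rw [H.right_formula Sinv φ h ht' (σ := fun m => WeakHopf.rep (H.comul m.1))
      (fun m _ => WeakHopf.rep_spec _), WeakHopf.mk_sum2]
    calc ∑ m ∈ t', ∑ n ∈ WeakHopf.rep (H.comul m.1), (Submodule.Quotient.mk
          (WeakHopf.rkOne (H.cmul φ
            (H.counit ∘ₗ LinearMap.mulRight k n.1 ∘ₗ LinearMap.mulLeft k (Sinv m.2))) n.2) :
            (W →ₗ[k] W) ⧸ WeakHopf.Jideal H)
        = ∑ m ∈ t', ∑ n ∈ WeakHopf.rep (H.comul m.1), (Submodule.Quotient.mk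
            (WeakHopf.rkOne φ (H.epsL n.1 * (H.epsR (Sinv m.2) * n.2))) :
              (W →ₗ[k] W) ⧸ WeakHopf.Jideal H) := by
          refine Finset.sum_congr rfl fun m _ => Finset.sum_congr rfl fun n _ => ?_
          rw [H.KappaEq Sinv φ n.1 m.2,
            ← H.strip2 (H.cmul φ (H.counit ∘ₗ LinearMap.mulRight k (H.epsL n.1)))
              (H.epsR (Sinv m.2)) n.2 ⟨Sinv m.2, rfl⟩,
            ← H.strip1 φ (H.epsL n.1) (H.epsR (Sinv m.2) * n.2) ⟨n.1, rfl⟩]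
      _ = Submodule.Quotient.mk (WeakHopf.rkOne φ h) := by
          rw [← WeakHopf.mk_sum2]
          congr 1
          calc ∑ m ∈ t', ∑ n ∈ WeakHopf.rep (H.comul m.1),
                WeakHopf.rkOne φ (H.epsL n.1 * (H.epsR (Sinv m.2) * n.2))
              = ∑ m ∈ t', WeakHopf.rkOne φ
                  (∑ n ∈ WeakHopf.rep (H.comul m.1),
                    H.epsL n.1 * (H.epsR (Sinv m.2) * n.2)) :=
                Finset.sum_congr rfl fun m _ => WeakHopf.rkOne_sum2 _ _ _
            _ = WeakHopf.rkOne φ (∑ m ∈ t', ∑ n ∈ WeakHopf.rep (H.comul m.1),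
                  H.epsL n.1 * (H.epsR (Sinv m.2) * n.2)) := WeakHopf.rkOne_sum2 _ _ _
            _ = WeakHopf.rkOne φ h := by
                congr 1
                calc ∑ m ∈ t', ∑ n ∈ WeakHopf.rep (H.comul m.1),
                      H.epsL n.1 * (H.epsR (Sinv m.2) * n.2)
                    = ∑ m ∈ t', ∑ n ∈ WeakHopf.rep (H.comul m.1),
                        H.epsL n.1 * H.epsR (Sinv m.2) * n.2 :=
                      Finset.sum_congr rfl fun m _ => Finset.sum_congr rfl fun n _ =>
                        (mul_assoc _ _ _).symm
                  _ = h := H.TRfinal Sinv hS₁ hS₂ ht' (fun m _ => WeakHopf.rep_spec _)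

/-- In the quantum double `D(W) = (Ŵ^{cop} ⊗ W)/J` of a weak Hopf algebra `W`, the element
`[ε ⊗ 1_W]` is a two-sided unit: `[ε⊗1_W][φ⊗h] = [φ⊗h] = [φ⊗h][ε⊗1_W]` for all
`φ ∈ Ŵ`, `h ∈ W`. -/
theorem quantumDouble_unit {k : Type*} {W : Type*} [Field k] [Ring W] [Algebra k W]
    (H : WeakHopf k W) (Sinv : W →ₗ[k] W)
    (hS₁ : Sinv ∘ₗ H.antipode = LinearMap.id) (hS₂ : H.antipode ∘ₗ Sinv = LinearMap.id) :
    ∀ (φ : Module.Dual k W) (h : W),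
      (Submodule.Quotient.mk (H.mulD Sinv (WeakHopf.unitD H) (WeakHopf.rkOne φ h)) :
          (W →ₗ[k] W) ⧸ WeakHopf.Jideal H)
        = Submodule.Quotient.mk (WeakHopf.rkOne φ h)
      ∧ (Submodule.Quotient.mk (H.mulD Sinv (WeakHopf.rkOne φ h) (WeakHopf.unitD H)) :
          (W →ₗ[k] W) ⧸ WeakHopf.Jideal H)
        = Submodule.Quotient.mk (WeakHopf.rkOne φ h) := quantumDouble_unit' H Sinv hS₁ hS₂
end

section
/- Let W be a weak Hopf algebra with Haar integral h_K of a weak Hopf subalgebra K ⊂ W. Then λ = Σ_{(h_K)} h_K⁽¹⁾ ⊗ S(h_K⁽²⁾) is a symmetric separability idempotent of K: (i) Σ xλ^{<1>}⊗λ^{<2>} = Σ λ^{<1>}⊗λ^{<2>}x for all x ∈ K; (ii) Σ λ^{<1>}λ^{<2>} = 1; (iii) Σ λ^{<1>}⊗λ^{<2>} = Σ λ^{<2>}⊗λ^{<1>}, assuming S(h_K) = h_K and Δ^{op}(h_K) = Δ(h_K). -/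
open TensorProduct

namespace WeakHopfProof
open TensorProduct LinearMap

section Generic
variable {R K : Type*} [CommRing R] [Ring K] [Algebra R K]

lemma tmul_one_mul (x : K) (t : K ⊗[R] K) :
    (x ⊗ₜ[R] (1:K)) * t = rTensor K (mulLeft R x) t := by
  induction t using TensorProduct.induction_on with
  | zero => simp
  | tmul a b => simp [Algebra.TensorProduct.tmul_mul_tmul]
  | add a b ha hb => simp [mul_add, ha, hb]

lemma one_tmul_mul (x : K) (t : K ⊗[R] K) :
    ((1:K) ⊗ₜ[R] x) * t = lTensor K (mulLeft R x) t := by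
  induction t using TensorProduct.induction_on with
  | zero => simp
  | tmul a b => simp [Algebra.TensorProduct.tmul_mul_tmul]
  | add a b ha hb => simp [mul_add, ha, hb]

lemma mul_tmul_one (x : K) (t : K ⊗[R] K) :
    t * (x ⊗ₜ[R] (1:K)) = rTensor K (mulRight R x) t := by
  induction t using TensorProduct.induction_on with
  | zero => simp
  | tmul a b => simp [Algebra.TensorProduct.tmul_mul_tmul]
  | add a b ha hb => simp [add_mul, ha, hb]

lemma mul_one_tmul (x : K) (t : K ⊗[R] K) :
    t * ((1:K) ⊗ₜ[R] x) = lTensor K (mulRight R x) t := by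
  induction t using TensorProduct.induction_on with
  | zero => simp
  | tmul a b => simp [Algebra.TensorProduct.tmul_mul_tmul]
  | add a b ha hb => simp [add_mul, ha, hb]

lemma comm_mul (s t : K ⊗[R] K) :
    (TensorProduct.comm R K K) (s*t)
      = (TensorProduct.comm R K K) s * (TensorProduct.comm R K K) t := by
  induction s using TensorProduct.induction_on with
  | zero => simp
  | tmul a b =>
    induction t using TensorProduct.induction_on with
    | zero => simp
    | tmul c d => simp [Algebra.TensorProduct.tmul_mul_tmul]
    | add c d hc hd => simp [mul_add, hc, hd]
  | add a b ha hb => simp [add_mul, ha, hb]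

lemma comm_lTensor (f : K →ₗ[R] K) (t : K ⊗[R] K) :
    (TensorProduct.comm R K K) (lTensor K f t) = rTensor K f ((TensorProduct.comm R K K) t) := by
  induction t using TensorProduct.induction_on with
  | zero => simp
  | tmul a b => simp
  | add a b ha hb => simp [ha, hb]

end Generic
end WeakHopfProof
namespace WeakHopfProof
section Basic
open TensorProduct LinearMap
variable {R K : Type*} [CommRing R] [Ring K] [Algebra R K] (H : WeakHopf R K)

lemma epsL_apply (z : K) :
    H.epsL z = (TensorProduct.lid R K) ((H.counit.rTensor K) (H.comul 1 * (z ⊗ₜ[R] (1:K)))) := rfl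

lemma epsR_apply (z : K) :
    H.epsR z = (TensorProduct.rid R K) ((H.counit.lTensor K) (((1:K) ⊗ₜ[R] z) * H.comul 1)) := rfl

lemma comul_one_mul (x : K) : H.comul 1 * H.comul x = H.comul x := by
  rw [← H.comul_mul, one_mul]

lemma comul_mul_one (x : K) : H.comul x * H.comul 1 = H.comul x := by
  rw [← H.comul_mul, mul_one]

lemma eqL (z : K) :
    LinearMap.mul' R K ((H.antipode.lTensor K) (H.comul z)) = H.epsL z := by
  rw [H.antipode_left z, epsL_apply]

lemma eqR (z : K) :
    LinearMap.mul' R K ((H.antipode.rTensor K) (H.comul z)) = H.epsR z := by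
  rw [H.antipode_right z, epsR_apply]

end Basic
end WeakHopfProof
namespace WeakHopfProof
section Eps
open TensorProduct LinearMap
variable {R K : Type*} [CommRing R] [Ring K] [Algebra R K] (H : WeakHopf R K)

lemma ce_genL (a b : K) (t : K ⊗[R] K) :
    H.counit (a * ((TensorProduct.lid R K) ((H.counit.rTensor K) (t * (b ⊗ₜ[R] (1:K))))))
      = LinearMap.mul' R R
          ((TensorProduct.map (H.counit ∘ₗ LinearMap.mulLeft R a)
            (H.counit ∘ₗ LinearMap.mulRight R b)) ((TensorProduct.comm R K K) t)) := by
  induction t using TensorProduct.induction_on with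
  | zero => simp
  | tmul p q =>
    simp [Algebra.TensorProduct.tmul_mul_tmul, mul_smul_comm, mul_comm]
  | add s t hs ht => simp only [add_mul, map_add, mul_add, hs, ht]

lemma ce1 (a b : K) : H.counit (a * H.epsL b) = H.counit (a * b) := by
  have h1 := ce_genL H a b (H.comul 1)
  have h2 := H.weak_counit_mul' a 1 b
  rw [mul_one] at h2
  rw [epsL_apply, h1, ← h2]

lemma ce_genR (a b : K) (t : K ⊗[R] K) :
    H.counit (((TensorProduct.rid R K) ((H.counit.lTensor K) ((((1:K) ⊗ₜ[R] a)) * t))) * b)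
      = LinearMap.mul' R R
          ((TensorProduct.map (H.counit ∘ₗ LinearMap.mulLeft R a)
            (H.counit ∘ₗ LinearMap.mulRight R b)) ((TensorProduct.comm R K K) t)) := by
  induction t using TensorProduct.induction_on with
  | zero => simp
  | tmul p q =>
    simp [Algebra.TensorProduct.tmul_mul_tmul, smul_mul_assoc, mul_comm]
  | add s t hs ht => simp only [mul_add, add_mul, map_add, hs, ht]

lemma ce2 (a b : K) : H.counit (H.epsR a * b) = H.counit (a * b) := by
  have h1 := ce_genR H a b (H.comul 1)
  have h2 := H.weak_counit_mul' a 1 b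
  rw [mul_one] at h2
  rw [epsR_apply, h1, ← h2]

lemma epsL_congr (c d : K) (hcd : ∀ p : K, H.counit (p * c) = H.counit (p * d)) :
    H.epsL c = H.epsL d := by
  rw [epsL_apply, epsL_apply]
  induction (H.comul 1 : K ⊗[R] K) using TensorProduct.induction_on with
  | zero => simp
  | tmul p q => simp [Algebra.TensorProduct.tmul_mul_tmul, hcd p]
  | add s t hs ht => simp only [add_mul, map_add, hs, ht]

lemma epsR_congr (c d : K) (hcd : ∀ q : K, H.counit (c * q) = H.counit (d * q)) :
    H.epsR c = H.epsR d := by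
  rw [epsR_apply, epsR_apply]
  induction (H.comul 1 : K ⊗[R] K) using TensorProduct.induction_on with
  | zero => simp
  | tmul p q => simp [Algebra.TensorProduct.tmul_mul_tmul, hcd q]
  | add s t hs ht => simp only [mul_add, map_add, hs, ht]

lemma epsL_mul (a b : K) : H.epsL (a * H.epsL b) = H.epsL (a * b) := by
  refine epsL_congr H _ _ (fun p => ?_)
  rw [← mul_assoc, ← mul_assoc, ce1]

lemma epsR_mul (a b : K) : H.epsR (H.epsR a * b) = H.epsR (a * b) := by
  refine epsR_congr H _ _ (fun q => ?_)
  rw [mul_assoc, mul_assoc, ce2]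

end Eps
end WeakHopfProof
namespace WeakHopfProof
section OneForms
open TensorProduct LinearMap
variable {R K : Type*} [CommRing R] [Ring K] [Algebra R K] (H : WeakHopf R K)

/-- coassociativity at the element level -/
lemma coassoc_el (z : K) :
    (TensorProduct.assoc R K K K) ((H.comul.rTensor K) (H.comul z))
      = (H.comul.lTensor K) (H.comul z) := by
  have := congrFun (congrArg DFunLike.coe H.coassoc) z
  simpa using this

/-- `Ω_y` for the Et-forms -/
noncomputable def OmL (y : K) : K ⊗[R] (K ⊗[R] K) →ₗ[R] K ⊗[R] K :=
  (TensorProduct.lid R (K ⊗[R] K)).toLinearMap ∘ₗ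
    LinearMap.rTensor (K ⊗[R] K) (H.counit ∘ₗ LinearMap.mulRight R y)

lemma OmL_tmul (y a : K) (s : K ⊗[R] K) :
    OmL H y (a ⊗ₜ[R] s) = H.counit (a * y) • s := by
  simp [OmL]

noncomputable def OmR (y : K) : (K ⊗[R] K) ⊗[R] K →ₗ[R] K ⊗[R] K :=
  (TensorProduct.rid R (K ⊗[R] K)).toLinearMap ∘ₗ
    LinearMap.lTensor (K ⊗[R] K) (H.counit ∘ₗ LinearMap.mulLeft R y)

lemma OmR_tmul (y c : K) (s : K ⊗[R] K) :
    OmR H y (s ⊗ₜ[R] c) = H.counit (y * c) • s := by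
  simp [OmR]

lemma gen_Et0 (y : K) (t : K ⊗[R] K) :
    H.comul ((TensorProduct.lid R K) ((H.counit.rTensor K) (t * (y ⊗ₜ[R] (1:K)))))
      = OmL H y ((H.comul.lTensor K) t) := by
  induction t using TensorProduct.induction_on with
  | zero => simp
  | tmul p q => simp [Algebra.TensorProduct.tmul_mul_tmul, OmL_tmul]
  | add s t hs ht => simp only [add_mul, map_add, hs, ht]

lemma gen_Es0 (y : K) (t : K ⊗[R] K) :
    H.comul ((TensorProduct.rid R K) ((H.counit.lTensor K) (((1:K) ⊗ₜ[R] y) * t)))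
      = OmR H y ((H.comul.rTensor K) t) := by
  induction t using TensorProduct.induction_on with
  | zero => simp
  | tmul p q => simp [Algebra.TensorProduct.tmul_mul_tmul, OmR_tmul]
  | add s t hs ht => simp only [mul_add, map_add, hs, ht]

lemma gen_Et1 (y : K) (s t : K ⊗[R] K) :
    OmL H y ((TensorProduct.assoc R K K K)
        ((s ⊗ₜ[R] (1:K)) * ((TensorProduct.assoc R K K K).symm ((1:K) ⊗ₜ[R] t))))
      = (((TensorProduct.lid R K) ((H.counit.rTensor K) (s * (y ⊗ₜ[R] (1:K))))) ⊗ₜ[R] (1:K)) * t := by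
  induction s using TensorProduct.induction_on with
  | zero => simp
  | tmul a b =>
    induction t using TensorProduct.induction_on with
    | zero => simp
    | tmul c d =>
      simp [Algebra.TensorProduct.tmul_mul_tmul, OmL_tmul, smul_mul_assoc, TensorProduct.smul_tmul']
    | add c d hc hd => simp only [mul_add, add_mul, tmul_add, add_tmul, map_add, hc, hd]
  | add a b ha hb => simp only [mul_add, add_mul, tmul_add, add_tmul, map_add, ha, hb]

lemma gen_Et2 (y : K) (s t : K ⊗[R] K) :
    OmL H y ((TensorProduct.assoc R K K K)
        (((TensorProduct.assoc R K K K).symm ((1:K) ⊗ₜ[R] t)) * (s ⊗ₜ[R] (1:K))))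
      = t * (((TensorProduct.lid R K) ((H.counit.rTensor K) (s * (y ⊗ₜ[R] (1:K))))) ⊗ₜ[R] (1:K)) := by
  induction s using TensorProduct.induction_on with
  | zero => simp
  | tmul a b =>
    induction t using TensorProduct.induction_on with
    | zero => simp
    | tmul c d =>
      simp [Algebra.TensorProduct.tmul_mul_tmul, OmL_tmul, mul_smul_comm, TensorProduct.smul_tmul']
    | add c d hc hd => simp only [mul_add, add_mul, tmul_add, add_tmul, map_add, hc, hd]
  | add a b ha hb => simp only [mul_add, add_mul, tmul_add, add_tmul, map_add, ha, hb]

lemma comul_epsL₁ (y : K) :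
    H.comul (H.epsL y) = (H.epsL y ⊗ₜ[R] (1:K)) * H.comul 1 := by
  rw [epsL_apply, gen_Et0, ← coassoc_el, H.weak_comul_one, gen_Et1]

lemma comul_epsL₂ (y : K) :
    H.comul (H.epsL y) = H.comul 1 * (H.epsL y ⊗ₜ[R] (1:K)) := by
  rw [epsL_apply, gen_Et0, ← coassoc_el, H.weak_comul_one', gen_Et2]

lemma gen_Es1 (y : K) (s t : K ⊗[R] K) :
    OmR H y ((s ⊗ₜ[R] (1:K)) * ((TensorProduct.assoc R K K K).symm ((1:K) ⊗ₜ[R] t)))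
      = s * ((1:K) ⊗ₜ[R] ((TensorProduct.rid R K) ((H.counit.lTensor K) (((1:K) ⊗ₜ[R] y) * t)))) := by
  induction s using TensorProduct.induction_on with
  | zero => simp
  | tmul a b =>
    induction t using TensorProduct.induction_on with
    | zero => simp
    | tmul c d =>
      simp [Algebra.TensorProduct.tmul_mul_tmul, OmR_tmul, mul_smul_comm, TensorProduct.smul_tmul]
    | add c d hc hd => simp only [mul_add, add_mul, tmul_add, add_tmul, map_add, hc, hd]
  | add a b ha hb => simp only [mul_add, add_mul, tmul_add, add_tmul, map_add, ha, hb]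

lemma gen_Es2 (y : K) (s t : K ⊗[R] K) :
    OmR H y (((TensorProduct.assoc R K K K).symm ((1:K) ⊗ₜ[R] t)) * (s ⊗ₜ[R] (1:K)))
      = ((1:K) ⊗ₜ[R] ((TensorProduct.rid R K) ((H.counit.lTensor K) (((1:K) ⊗ₜ[R] y) * t)))) * s := by
  induction s using TensorProduct.induction_on with
  | zero => simp
  | tmul a b =>
    induction t using TensorProduct.induction_on with
    | zero => simp
    | tmul c d =>
      simp [Algebra.TensorProduct.tmul_mul_tmul, OmR_tmul, smul_mul_assoc, TensorProduct.smul_tmul]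
    | add c d hc hd => simp only [mul_add, add_mul, tmul_add, add_tmul, map_add, hc, hd]
  | add a b ha hb => simp only [mul_add, add_mul, tmul_add, add_tmul, map_add, ha, hb]

lemma comul_epsR₁ (y : K) :
    H.comul (H.epsR y) = H.comul 1 * ((1:K) ⊗ₜ[R] H.epsR y) := by
  rw [epsR_apply, gen_Es0, H.weak_comul_one, gen_Es1]

lemma comul_epsR₂ (y : K) :
    H.comul (H.epsR y) = ((1:K) ⊗ₜ[R] H.epsR y) * H.comul 1 := by
  rw [epsR_apply, gen_Es0, H.weak_comul_one', gen_Es2]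

/-- functional for the commutation lemma -/
noncomputable def PsiC (v w : K) : (K ⊗[R] K) ⊗[R] K →ₗ[R] K :=
  (TensorProduct.lid R K).toLinearMap ∘ₗ
    LinearMap.rTensor K (H.counit ∘ₗ LinearMap.mulRight R v) ∘ₗ
    (TensorProduct.rid R (K ⊗[R] K)).toLinearMap ∘ₗ
    LinearMap.lTensor (K ⊗[R] K) (H.counit ∘ₗ LinearMap.mulLeft R w)

lemma PsiC_tmul (v w a b c : K) :
    PsiC H v w ((a ⊗ₜ[R] b) ⊗ₜ[R] c) = (H.counit (a * v) * H.counit (w * c)) • b := by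
  simp [PsiC, TensorProduct.smul_tmul', smul_smul, mul_comm]

lemma gen_comm1 (v w : K) (s t : K ⊗[R] K) :
    PsiC H v w ((s ⊗ₜ[R] (1:K)) * ((TensorProduct.assoc R K K K).symm ((1:K) ⊗ₜ[R] t)))
      = ((TensorProduct.lid R K) ((H.counit.rTensor K) (s * (v ⊗ₜ[R] (1:K)))))
          * ((TensorProduct.rid R K) ((H.counit.lTensor K) (((1:K) ⊗ₜ[R] w) * t))) := by
  induction s using TensorProduct.induction_on with
  | zero => simp
  | tmul a b =>
    induction t using TensorProduct.induction_on with
    | zero => simp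
    | tmul c d =>
      simp [Algebra.TensorProduct.tmul_mul_tmul, PsiC_tmul, smul_mul_assoc, mul_smul_comm, smul_smul, mul_comm]
    | add c d hc hd => simp only [mul_add, add_mul, tmul_add, add_tmul, map_add, hc, hd]
  | add a b ha hb => simp only [mul_add, add_mul, tmul_add, add_tmul, map_add, ha, hb]

lemma gen_comm2 (v w : K) (s t : K ⊗[R] K) :
    PsiC H v w (((TensorProduct.assoc R K K K).symm ((1:K) ⊗ₜ[R] t)) * (s ⊗ₜ[R] (1:K)))
      = ((TensorProduct.rid R K) ((H.counit.lTensor K) (((1:K) ⊗ₜ[R] w) * t)))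
          * ((TensorProduct.lid R K) ((H.counit.rTensor K) (s * (v ⊗ₜ[R] (1:K))))) := by
  induction s using TensorProduct.induction_on with
  | zero => simp
  | tmul a b =>
    induction t using TensorProduct.induction_on with
    | zero => simp
    | tmul c d =>
      simp [Algebra.TensorProduct.tmul_mul_tmul, PsiC_tmul, smul_mul_assoc, mul_smul_comm, smul_smul, mul_comm]
    | add c d hc hd => simp only [mul_add, add_mul, tmul_add, add_tmul, map_add, hc, hd]
  | add a b ha hb => simp only [mul_add, add_mul, tmul_add, add_tmul, map_add, ha, hb]

lemma comm_epsLR (v w : K) : H.epsL v * H.epsR w = H.epsR w * H.epsL v := by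
  have h1 := gen_comm1 H v w (H.comul 1) (H.comul 1)
  have h2 := gen_comm2 H v w (H.comul 1) (H.comul 1)
  rw [← H.weak_comul_one] at h1
  rw [← H.weak_comul_one'] at h2
  rw [epsL_apply, epsR_apply, ← h1, h2]

end OneForms
end WeakHopfProof
set_option maxHeartbeats 1000000
set_option synthInstance.maxHeartbeats 200000
namespace WeakHopfProof
section AB
open TensorProduct LinearMap
variable {R K : Type*} [CommRing R] [Ring K] [Algebra R K] (H : WeakHopf R K)

noncomputable def cLm : K ⊗[R] K →ₗ[R] K :=
  (TensorProduct.lid R K).toLinearMap ∘ₗ H.counit.rTensor K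

noncomputable def cRm : K ⊗[R] K →ₗ[R] K :=
  (TensorProduct.rid R K).toLinearMap ∘ₗ H.counit.lTensor K

@[simp] lemma cLm_tmul (a b : K) : cLm H (a ⊗ₜ[R] b) = H.counit a • b := by simp [cLm]
@[simp] lemma cRm_tmul (a b : K) : cRm H (a ⊗ₜ[R] b) = H.counit b • a := by simp [cRm]

lemma cLm_comul (z : K) : cLm H (H.comul z) = z := by
  have := congrFun (congrArg DFunLike.coe H.counit_comul_left) z
  simpa [cLm] using this

lemma cRm_comul (z : K) : cRm H (H.comul z) = z := by
  have := congrFun (congrArg DFunLike.coe H.counit_comul_right) z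
  simpa [cRm] using this

/-- `ρ_A((b'⊗e)⊗x₂) = ε(e·x₂)•b'` -/
noncomputable def rhoA : (K ⊗[R] K) ⊗[R] K →ₗ[R] K :=
  (TensorProduct.rid R K).toLinearMap ∘ₗ
    LinearMap.lTensor K (H.counit ∘ₗ LinearMap.mul' R K) ∘ₗ
    (TensorProduct.assoc R K K K).toLinearMap

@[simp] lemma rhoA_tmul (b' e x₂ : K) :
    rhoA H ((b' ⊗ₜ[R] e) ⊗ₜ[R] x₂) = H.counit (e * x₂) • b' := by simp [rhoA]

noncomputable def XiA : (K ⊗[R] (K ⊗[R] K)) ⊗[R] (K ⊗[R] K) →ₗ[R] K ⊗[R] K :=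
  (TensorProduct.map (LinearMap.mul' R K) (rhoA H)) ∘ₗ
    (TensorProduct.tensorTensorTensorComm R K (K ⊗[R] K) K K).toLinearMap

@[simp] lemma XiA_tmul (c b' e x₁ x₂ : K) :
    XiA H ((c ⊗ₜ[R] (b' ⊗ₜ[R] e)) ⊗ₜ[R] (x₁ ⊗ₜ[R] x₂))
      = H.counit (e * x₂) • ((c * x₁) ⊗ₜ[R] b') := by
  simp [XiA, TensorProduct.tensorTensorTensorComm_tmul, tmul_smul]

noncomputable def Pmap (t : K ⊗[R] K) : K →ₗ[R] K :=
  (TensorProduct.lid R K).toLinearMap ∘ₗ H.counit.rTensor K ∘ₗ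
    LinearMap.mulLeft R t ∘ₗ (TensorProduct.mk R K K).flip 1

lemma Pmap_e1 : Pmap H (H.comul 1) = H.epsL := rfl

@[simp] lemma Pmap_tmul (a b z : K) :
    Pmap H (a ⊗ₜ[R] b) z = H.counit (a * z) • b := by
  simp [Pmap, Algebra.TensorProduct.tmul_mul_tmul]

noncomputable def VA (t u : K ⊗[R] K) : K ⊗[R] (K ⊗[R] K) :=
  LinearMap.lTensor K (TensorProduct.comm R K K).toLinearMap
    ((TensorProduct.assoc R K K K)
      (((TensorProduct.assoc R K K K).symm ((1:K) ⊗ₜ[R] t)) * (u ⊗ₜ[R] (1:K))))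

lemma gen_A1 (t u s : K ⊗[R] K) :
    LinearMap.lTensor K (Pmap H t) (u * s) = XiA H ((VA t u) ⊗ₜ[R] s) := by
  induction t using TensorProduct.induction_on with
  | zero =>
    have : Pmap H (0 : K ⊗[R] K) = 0 := by ext z; simp [Pmap]
    simp [this, VA]
  | tmul a b =>
    induction u using TensorProduct.induction_on with
    | zero => simp [VA]
    | tmul c d =>
      induction s using TensorProduct.induction_on with
      | zero => simp
      | tmul x₁ x₂ =>
        simp [VA, Algebra.TensorProduct.tmul_mul_tmul, mul_assoc]
      | add s₁ s₂ h1 h2 => simp only [mul_add, map_add, tmul_add, h1, h2]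
    | add u₁ u₂ h1 h2 =>
      simp only [VA, add_mul, map_add, tmul_add, add_tmul, mul_add] at h1 h2 ⊢
      simp [h1, h2]
  | add t₁ t₂ h1 h2 =>
    have hP : ∀ z, Pmap H (t₁ + t₂) z = Pmap H t₁ z + Pmap H t₂ z := by
      intro z; simp [Pmap, add_mul]
    have hl : LinearMap.lTensor K (Pmap H (t₁ + t₂)) (u*s)
        = LinearMap.lTensor K (Pmap H t₁) (u*s) + LinearMap.lTensor K (Pmap H t₂) (u*s) := by
      have : Pmap H (t₁ + t₂) = Pmap H t₁ + Pmap H t₂ := by ext z; simp [hP z]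
      rw [this]
      induction (u*s) using TensorProduct.induction_on with
      | zero => simp
      | tmul p q => simp [tmul_add]
      | add w₁ w₂ g1 g2 => simp only [map_add, g1, g2]; abel
    rw [hl, h1, h2]
    have : VA (t₁ + t₂) u = VA t₁ u + VA t₂ u := by
      simp [VA, tmul_add, add_mul, map_add]
    rw [this, add_tmul, map_add]

noncomputable def rhoB : (K ⊗[R] K) ⊗[R] K →ₗ[R] K :=
  (TensorProduct.rid R K).toLinearMap ∘ₗ
    LinearMap.lTensor K (H.counit ∘ₗ LinearMap.mul' R K) ∘ₗ
    (TensorProduct.assoc R K K K).toLinearMap ∘ₗ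
    LinearMap.rTensor K (TensorProduct.comm R K K).toLinearMap

@[simp] lemma rhoB_tmul (q r x₂ : K) :
    rhoB H ((q ⊗ₜ[R] r) ⊗ₜ[R] x₂) = H.counit (q * x₂) • r := by simp [rhoB]

noncomputable def XiB : ((K ⊗[R] K) ⊗[R] K) ⊗[R] (K ⊗[R] K) →ₗ[R] K ⊗[R] K :=
  (TensorProduct.map (LinearMap.mul' R K) (rhoB H)) ∘ₗ
    (TensorProduct.tensorTensorTensorComm R K (K ⊗[R] K) K K).toLinearMap ∘ₗ
    LinearMap.rTensor (K ⊗[R] K) (TensorProduct.assoc R K K K).toLinearMap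

@[simp] lemma XiB_tmul (p q r x₁ x₂ : K) :
    XiB H (((p ⊗ₜ[R] q) ⊗ₜ[R] r) ⊗ₜ[R] (x₁ ⊗ₜ[R] x₂))
      = H.counit (q * x₂) • ((p * x₁) ⊗ₜ[R] r) := by
  simp [XiB, TensorProduct.tensorTensorTensorComm_tmul, tmul_smul]

lemma gen_A3 (W : (K ⊗[R] K) ⊗[R] K) (s : K ⊗[R] K) :
    XiA H ((LinearMap.lTensor K (TensorProduct.comm R K K).toLinearMap
        ((TensorProduct.assoc R K K K) W)) ⊗ₜ[R] s)
      = XiB H (W ⊗ₜ[R] s) := by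
  induction W using TensorProduct.induction_on with
  | zero => simp
  | tmul pq r =>
    induction pq using TensorProduct.induction_on with
    | zero => simp
    | tmul p q =>
      induction s using TensorProduct.induction_on with
      | zero => simp
      | tmul x₁ x₂ => simp
      | add s₁ s₂ h1 h2 => simp only [tmul_add, map_add, h1, h2]
    | add p₁ p₂ h1 h2 =>
      simp only [add_tmul, map_add, tmul_add] at h1 h2 ⊢
      simp [h1, h2]
  | add W₁ W₂ h1 h2 => simp only [map_add, add_tmul, h1, h2]

lemma gen_A4 (w : K ⊗[R] K) (r : K) (s : K ⊗[R] K) :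
    XiB H ((w ⊗ₜ[R] r) ⊗ₜ[R] s) = (cRm H (w * s)) ⊗ₜ[R] r := by
  induction w using TensorProduct.induction_on with
  | zero => simp
  | tmul p q =>
    induction s using TensorProduct.induction_on with
    | zero => simp
    | tmul x₁ x₂ => simp [Algebra.TensorProduct.tmul_mul_tmul, TensorProduct.smul_tmul']
    | add s₁ s₂ h1 h2 => simp only [tmul_add, map_add, mul_add, add_tmul, h1, h2]
  | add w₁ w₂ h1 h2 => simp only [add_tmul, map_add, add_mul, h1, h2]

lemma gen_A5 (z : K) (t : K ⊗[R] K) :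
    XiB H (((H.comul.rTensor K) t) ⊗ₜ[R] (H.comul z)) = LinearMap.rTensor K (LinearMap.mulRight R z) t := by
  induction t using TensorProduct.induction_on with
  | zero => simp
  | tmul p r =>
    have : (H.comul.rTensor K) (p ⊗ₜ[R] r) = (H.comul p) ⊗ₜ[R] r := by simp
    rw [this, gen_A4, ← H.comul_mul, cRm_comul]
    simp
  | add t₁ t₂ h1 h2 => simp only [map_add, add_tmul, h1, h2]

/-- identity (A): `Σ z⁽¹⁾ ⊗ ε_L(z⁽²⁾) = Δ(1)(z⊗1)` -/
lemma idA (z : K) :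
    LinearMap.lTensor K H.epsL (H.comul z) = H.comul 1 * (z ⊗ₜ[R] (1:K)) := by
  have h0 := gen_A1 H (H.comul 1) (H.comul 1) (H.comul z)
  rw [comul_one_mul, Pmap_e1] at h0
  rw [h0]
  have hV : VA (H.comul 1) (H.comul 1)
      = LinearMap.lTensor K (TensorProduct.comm R K K).toLinearMap
          ((TensorProduct.assoc R K K K) ((H.comul.rTensor K) (H.comul 1))) := by
    rw [VA, H.weak_comul_one']
  rw [hV, gen_A3, gen_A5, mul_tmul_one]

end AB
end WeakHopfProof
set_option maxHeartbeats 1000000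
set_option synthInstance.maxHeartbeats 200000
namespace WeakHopfProof
section Bside
open TensorProduct LinearMap
variable {R K : Type*} [CommRing R] [Ring K] [Algebra R K] (H : WeakHopf R K)

noncomputable def Qmap (t : K ⊗[R] K) : K →ₗ[R] K :=
  (TensorProduct.rid R K).toLinearMap ∘ₗ H.counit.lTensor K ∘ₗ
    LinearMap.mulRight R t ∘ₗ TensorProduct.mk R K K 1

lemma Qmap_e1 : Qmap H (H.comul 1) = H.epsR := rfl

@[simp] lemma Qmap_tmul (a b z : K) :
    Qmap H (a ⊗ₜ[R] b) z = H.counit (z * b) • a := by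
  simp [Qmap, Algebra.TensorProduct.tmul_mul_tmul]

/-- `α((a⊗m)⊗x₁) = ε(x₁·m)•a` -/
noncomputable def alphaB : (K ⊗[R] K) ⊗[R] K →ₗ[R] K :=
  (TensorProduct.rid R K).toLinearMap ∘ₗ
    LinearMap.lTensor K (H.counit ∘ₗ LinearMap.mul' R K ∘ₗ (TensorProduct.comm R K K).toLinearMap) ∘ₗ
    (TensorProduct.assoc R K K K).toLinearMap

@[simp] lemma alphaB_tmul (a m x₁ : K) :
    alphaB H ((a ⊗ₜ[R] m) ⊗ₜ[R] x₁) = H.counit (x₁ * m) • a := by simp [alphaB]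

noncomputable def XiB' : (K ⊗[R] (K ⊗[R] K)) ⊗[R] (K ⊗[R] K) →ₗ[R] K ⊗[R] K :=
  (TensorProduct.map (alphaB H) (LinearMap.mul' R K ∘ₗ (TensorProduct.comm R K K).toLinearMap)) ∘ₗ
    (TensorProduct.tensorTensorTensorComm R (K ⊗[R] K) K K K).toLinearMap ∘ₗ
    LinearMap.rTensor (K ⊗[R] K) (TensorProduct.assoc R K K K).symm.toLinearMap

@[simp] lemma XiB'_tmul (a m d x₁ x₂ : K) :
    XiB' H ((a ⊗ₜ[R] (m ⊗ₜ[R] d)) ⊗ₜ[R] (x₁ ⊗ₜ[R] x₂))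
      = (H.counit (x₁ * m) • a) ⊗ₜ[R] (x₂ * d) := by
  simp [XiB', TensorProduct.tensorTensorTensorComm_tmul, TensorProduct.smul_tmul']

noncomputable def VB (t u : K ⊗[R] K) : K ⊗[R] (K ⊗[R] K) :=
  (TensorProduct.assoc R K K K)
    (((TensorProduct.assoc R K K K).symm ((1:K) ⊗ₜ[R] u)) * (t ⊗ₜ[R] (1:K)))

lemma gen_B1 (t u s : K ⊗[R] K) :
    LinearMap.rTensor K (Qmap H t) (s * u) = XiB' H ((VB t u) ⊗ₜ[R] s) := by
  induction t using TensorProduct.induction_on with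
  | zero =>
    have : Qmap H (0 : K ⊗[R] K) = 0 := by ext z; simp [Qmap]
    simp [this, VB]
  | tmul a b =>
    induction u using TensorProduct.induction_on with
    | zero => simp [VB]
    | tmul c d =>
      induction s using TensorProduct.induction_on with
      | zero => simp
      | tmul x₁ x₂ =>
        simp [VB, Algebra.TensorProduct.tmul_mul_tmul, mul_assoc, TensorProduct.smul_tmul']
      | add s₁ s₂ h1 h2 => simp only [add_mul, map_add, tmul_add, h1, h2]
    | add u₁ u₂ h1 h2 =>
      simp only [VB, mul_add, map_add, tmul_add, add_tmul, add_mul] at h1 h2 ⊢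
      simp [h1, h2]
  | add t₁ t₂ h1 h2 =>
    have hQ : Qmap H (t₁ + t₂) = Qmap H t₁ + Qmap H t₂ := by
      ext z; simp [Qmap, mul_add]
    have hl : LinearMap.rTensor K (Qmap H (t₁ + t₂)) (s*u)
        = LinearMap.rTensor K (Qmap H t₁) (s*u) + LinearMap.rTensor K (Qmap H t₂) (s*u) := by
      rw [hQ]
      induction (s*u) using TensorProduct.induction_on with
      | zero => simp
      | tmul p q => simp [add_tmul]
      | add w₁ w₂ g1 g2 => simp only [map_add, g1, g2]; abel
    rw [hl, h1, h2]
    have : VB (t₁ + t₂) u = VB t₁ u + VB t₂ u := by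
      simp [VB, add_tmul, mul_add, map_add]
    rw [this, add_tmul, map_add]

lemma gen_B2 (a : K) (w s : K ⊗[R] K) :
    XiB' H ((a ⊗ₜ[R] w) ⊗ₜ[R] s) = a ⊗ₜ[R] (cLm H (s * w)) := by
  induction w using TensorProduct.induction_on with
  | zero => simp
  | tmul m d =>
    induction s using TensorProduct.induction_on with
    | zero => simp
    | tmul x₁ x₂ =>
      simp [Algebra.TensorProduct.tmul_mul_tmul, TensorProduct.smul_tmul', tmul_smul]
    | add s₁ s₂ h1 h2 => simp only [tmul_add, add_tmul, map_add, add_mul, h1, h2]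
  | add w₁ w₂ h1 h2 => simp only [tmul_add, add_tmul, map_add, mul_add, h1, h2]

lemma gen_B5 (z : K) (t : K ⊗[R] K) :
    XiB' H (((H.comul.lTensor K) t) ⊗ₜ[R] (H.comul z)) = LinearMap.lTensor K (LinearMap.mulLeft R z) t := by
  induction t using TensorProduct.induction_on with
  | zero => simp
  | tmul a b =>
    have : (H.comul.lTensor K) (a ⊗ₜ[R] b) = a ⊗ₜ[R] (H.comul b) := by simp
    rw [this, gen_B2, ← H.comul_mul, cLm_comul]
    simp
  | add t₁ t₂ h1 h2 => simp only [map_add, add_tmul, h1, h2]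

/-- identity (B): `Σ ε_R(z⁽¹⁾) ⊗ z⁽²⁾ = (1⊗z)Δ(1)` -/
lemma idB (z : K) :
    LinearMap.rTensor K H.epsR (H.comul z) = ((1:K) ⊗ₜ[R] z) * H.comul 1 := by
  have h0 := gen_B1 H (H.comul 1) (H.comul 1) (H.comul z)
  rw [comul_mul_one, Qmap_e1] at h0
  rw [h0]
  have hV : VB (H.comul 1) (H.comul 1)
      = (TensorProduct.assoc R K K K) ((H.comul.rTensor K) (H.comul 1)) := by
    rw [VB, H.weak_comul_one']
  rw [hV, coassoc_el, gen_B5, one_tmul_mul]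

end Bside
end WeakHopfProof
set_option maxHeartbeats 1000000
set_option synthInstance.maxHeartbeats 200000
namespace WeakHopfProof
section Vlemmas
open TensorProduct LinearMap
variable {R K : Type*} [CommRing R] [Ring K] [Algebra R K] (H : WeakHopf R K)

lemma eqLmap : LinearMap.mul' R K ∘ₗ LinearMap.lTensor K H.antipode ∘ₗ H.comul = H.epsL := by
  ext z; simpa using eqL H z

lemma eqRmap : LinearMap.mul' R K ∘ₗ LinearMap.rTensor K H.antipode ∘ₗ H.comul = H.epsR := by
  ext z; simpa using eqR H z

lemma gen_mapS_lTensor (f : K ⊗[R] K →ₗ[R] K) (g : K →ₗ[R] K) (t : K ⊗[R] K) :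
    TensorProduct.map g f ((LinearMap.lTensor K H.comul) t)
      = TensorProduct.map g (f ∘ₗ H.comul) t := by
  induction t using TensorProduct.induction_on with
  | zero => simp
  | tmul u v => simp
  | add a b ha hb => simp only [map_add, ha, hb]

lemma gen_mapS_rTensor (f : K ⊗[R] K →ₗ[R] K) (g : K →ₗ[R] K) (t : K ⊗[R] K) :
    TensorProduct.map f g ((LinearMap.rTensor K H.comul) t)
      = TensorProduct.map (f ∘ₗ H.comul) g t := by
  induction t using TensorProduct.induction_on with
  | zero => simp
  | tmul u v => simp
  | add a b ha hb => simp only [map_add, ha, hb]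

lemma gen_V3a (W : (K ⊗[R] K) ⊗[R] K) :
    LinearMap.mul' R K ((TensorProduct.map H.antipode
        (LinearMap.mul' R K ∘ₗ LinearMap.lTensor K H.antipode))
          ((TensorProduct.assoc R K K K) W))
      = LinearMap.mul' R K ((LinearMap.rTensor K (LinearMap.mul' R K))
          ((TensorProduct.map (LinearMap.rTensor K H.antipode) H.antipode) W)) := by
  induction W using TensorProduct.induction_on with
  | zero => simp
  | tmul uv w =>
    induction uv using TensorProduct.induction_on with
    | zero => simp
    | tmul u v => simp [mul_assoc]
    | add a b ha hb => simp only [add_tmul, map_add, ha, hb]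
  | add a b ha hb => simp only [map_add, ha, hb]

/-- `Σ S(z⁽¹⁾)·ε_L(z⁽²⁾) = S(z)` -/
lemma idV3 (z : K) :
    LinearMap.mul' R K ((TensorProduct.map H.antipode H.epsL) (H.comul z)) = H.antipode z := by
  rw [← eqLmap]
  have h1 : TensorProduct.map H.antipode
        (LinearMap.mul' R K ∘ₗ LinearMap.lTensor K H.antipode ∘ₗ H.comul) (H.comul z)
      = TensorProduct.map H.antipode
        ((LinearMap.mul' R K ∘ₗ LinearMap.lTensor K H.antipode) ∘ₗ H.comul) (H.comul z) := rfl
  rw [h1, ← gen_mapS_lTensor, ← coassoc_el, gen_V3a]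
  have h2 : TensorProduct.map (LinearMap.rTensor K H.antipode) H.antipode
      = TensorProduct.map (TensorProduct.map H.antipode LinearMap.id) H.antipode := rfl
  rw [h2, ← H.antipode_mid z]

lemma gen_V4a (t : K ⊗[R] K) :
    LinearMap.mul' R K ((TensorProduct.map
        (LinearMap.mul' R K ∘ₗ LinearMap.rTensor K H.antipode ∘ₗ H.comul) H.antipode) t)
      = LinearMap.mul' R K ((LinearMap.rTensor K (LinearMap.mul' R K))
          ((TensorProduct.map (LinearMap.rTensor K H.antipode) H.antipode)
            ((H.comul.rTensor K) t))) := by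
  induction t using TensorProduct.induction_on with
  | zero => simp
  | tmul u v => simp
  | add a b ha hb => simp only [map_add, ha, hb]

/-- `Σ ε_R(z⁽¹⁾)·S(z⁽²⁾) = S(z)` -/
lemma idV4 (z : K) :
    LinearMap.mul' R K ((TensorProduct.map H.epsR H.antipode) (H.comul z)) = H.antipode z := by
  rw [← eqRmap, gen_V4a]
  have h2 : TensorProduct.map (LinearMap.rTensor K H.antipode) H.antipode
      = TensorProduct.map (TensorProduct.map H.antipode LinearMap.id) H.antipode := rfl
  rw [h2, ← H.antipode_mid z]

end Vlemmas
end WeakHopfProof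
set_option maxHeartbeats 1000000
set_option synthInstance.maxHeartbeats 200000
namespace WeakHopfProof
section Conv
open TensorProduct LinearMap
variable {R K : Type*} [CommRing R] [Ring K] [Algebra R K] (H : WeakHopf R K)

/-- `N(u⊗v) = S(v)·S(u)` -/
noncomputable def Nmap : K ⊗[R] K →ₗ[R] K :=
  LinearMap.mul' R K ∘ₗ (TensorProduct.map H.antipode H.antipode) ∘ₗ
    (TensorProduct.comm R K K).toLinearMap

@[simp] lemma Nmap_tmul (u v : K) : Nmap H (u ⊗ₜ[R] v) = H.antipode v * H.antipode u := by
  simp [Nmap]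

/-- `G(u⊗v) = S(u·v)` -/
noncomputable def Gmap : K ⊗[R] K →ₗ[R] K := H.antipode ∘ₗ LinearMap.mul' R K

@[simp] lemma Gmap_tmul (u v : K) : Gmap H (u ⊗ₜ[R] v) = H.antipode (u * v) := by
  simp [Gmap]

noncomputable def ttcK : (K ⊗[R] K) ⊗[R] (K ⊗[R] K) →ₗ[R] (K ⊗[R] K) ⊗[R] (K ⊗[R] K) :=
  (TensorProduct.tensorTensorTensorComm R K K K K).toLinearMap

@[simp] lemma ttcK_tmul (a b c d : K) :
    ttcK (R := R) ((a ⊗ₜ[R] b) ⊗ₜ[R] (c ⊗ₜ[R] d)) = (a ⊗ₜ[R] c) ⊗ₜ[R] (b ⊗ₜ[R] d) := by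
  simp [ttcK]

lemma gen_c1 (s t : K ⊗[R] K) :
    LinearMap.mul' R K ((TensorProduct.map (LinearMap.mul' R K) (Gmap H)) (ttcK (s ⊗ₜ[R] t)))
      = LinearMap.mul' R K ((LinearMap.lTensor K H.antipode) (s * t)) := by
  induction s using TensorProduct.induction_on with
  | zero => simp
  | tmul a b =>
    induction t using TensorProduct.induction_on with
    | zero => simp
    | tmul c d => simp [Algebra.TensorProduct.tmul_mul_tmul]
    | add c d hc hd => simp only [tmul_add, map_add, mul_add, hc, hd]
  | add a b ha hb => simp only [add_tmul, map_add, add_mul, ha, hb]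

lemma gen_L1a (s t : K ⊗[R] K) :
    LinearMap.mul' R K ((TensorProduct.map (LinearMap.mul' R K) (Nmap H)) (ttcK (s ⊗ₜ[R] t)))
      = LinearMap.mul' R K ((LinearMap.lTensor K H.antipode)
          (s * ((LinearMap.mul' R K ((LinearMap.lTensor K H.antipode) t)) ⊗ₜ[R] (1:K)))) := by
  induction s using TensorProduct.induction_on with
  | zero => simp
  | tmul a b =>
    induction t using TensorProduct.induction_on with
    | zero => simp
    | tmul c d => simp [Algebra.TensorProduct.tmul_mul_tmul, mul_assoc]
    | add c d hc hd =>
      simp only [tmul_add, map_add, mul_add, add_tmul, tmul_add, hc, hd]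
  | add a b ha hb => simp only [add_tmul, map_add, add_mul, ha, hb]

lemma gen_L2a (s t : K ⊗[R] K) :
    LinearMap.mul' R K ((TensorProduct.map (Nmap H) (LinearMap.mul' R K)) (ttcK (s ⊗ₜ[R] t)))
      = LinearMap.mul' R K ((LinearMap.rTensor K H.antipode)
          ((((1:K) ⊗ₜ[R] (LinearMap.mul' R K ((LinearMap.rTensor K H.antipode) s)))) * t)) := by
  induction s using TensorProduct.induction_on with
  | zero => simp
  | tmul a b =>
    induction t using TensorProduct.induction_on with
    | zero => simp
    | tmul c d => simp [Algebra.TensorProduct.tmul_mul_tmul, mul_assoc]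
    | add c d hc hd => simp only [tmul_add, map_add, mul_add, hc, hd]
  | add a b ha hb =>
    simp only [add_tmul, map_add, add_mul, tmul_add, mul_add, ha, hb]

lemma gen_cD (s t : K ⊗[R] K) :
    LinearMap.mul' R K ((TensorProduct.map (H.epsR ∘ₗ LinearMap.mul' R K) (Gmap H)) (ttcK (s ⊗ₜ[R] t)))
      = LinearMap.mul' R K ((TensorProduct.map H.epsR H.antipode) (s * t)) := by
  induction s using TensorProduct.induction_on with
  | zero => simp
  | tmul a b =>
    induction t using TensorProduct.induction_on with
    | zero => simp
    | tmul c d => simp [Algebra.TensorProduct.tmul_mul_tmul]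
    | add c d hc hd => simp only [tmul_add, map_add, mul_add, hc, hd]
  | add a b ha hb => simp only [add_tmul, map_add, add_mul, ha, hb]

noncomputable def convFN : K ⊗[R] K →ₗ[R] K :=
  LinearMap.mul' R K ∘ₗ TensorProduct.map (LinearMap.mul' R K) (Nmap H) ∘ₗ
    ttcK ∘ₗ TensorProduct.map H.comul H.comul

noncomputable def convNF : K ⊗[R] K →ₗ[R] K :=
  LinearMap.mul' R K ∘ₗ TensorProduct.map (Nmap H) (LinearMap.mul' R K) ∘ₗ
    ttcK ∘ₗ TensorProduct.map H.comul H.comul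

noncomputable def convFG : K ⊗[R] K →ₗ[R] K :=
  LinearMap.mul' R K ∘ₗ TensorProduct.map (LinearMap.mul' R K) (Gmap H) ∘ₗ
    ttcK ∘ₗ TensorProduct.map H.comul H.comul

lemma convFG_eq : convFG H = H.epsL ∘ₗ LinearMap.mul' R K := by
  apply TensorProduct.ext'
  intro x y
  simp only [convFG, LinearMap.comp_apply, TensorProduct.map_tmul, LinearMap.mul'_apply]
  rw [gen_c1, ← H.comul_mul, eqL]

lemma convFN_eq : convFN H = H.epsL ∘ₗ LinearMap.mul' R K := by
  apply TensorProduct.ext'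
  intro x y
  simp only [convFN, LinearMap.comp_apply, TensorProduct.map_tmul, LinearMap.mul'_apply]
  rw [gen_L1a, eqL]
  have : H.comul x * (H.epsL y ⊗ₜ[R] (1:K)) = H.comul x * H.comul (H.epsL y) := by
    rw [comul_epsL₂, ← mul_assoc, comul_mul_one]
  rw [this, ← H.comul_mul, eqL, epsL_mul]

lemma convNF_eq : convNF H = H.epsR ∘ₗ LinearMap.mul' R K := by
  apply TensorProduct.ext'
  intro x y
  simp only [convNF, LinearMap.comp_apply, TensorProduct.map_tmul, LinearMap.mul'_apply]
  rw [gen_L2a, eqR]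
  have : ((1:K) ⊗ₜ[R] H.epsR x) * H.comul y = H.comul (H.epsR x) * H.comul y := by
    rw [comul_epsR₂, mul_assoc, comul_one_mul]
  rw [this, ← H.comul_mul, eqR, epsR_mul]

end Conv
end WeakHopfProof
set_option maxHeartbeats 1000000
set_option synthInstance.maxHeartbeats 200000
namespace WeakHopfProof
section L5sec
open TensorProduct LinearMap
variable {R K : Type*} [CommRing R] [Ring K] [Algebra R K] (H : WeakHopf R K)

noncomputable def etaMap : K ⊗[R] (K ⊗[R] K) →ₗ[R] K :=
  LinearMap.mul' R K ∘ₗ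
    TensorProduct.map (H.epsR ∘ₗ LinearMap.mul' R K) H.antipode ∘ₗ
    (TensorProduct.assoc R K K K).symm.toLinearMap

@[simp] lemma etaMap_tmul (z c d : K) :
    etaMap H (z ⊗ₜ[R] (c ⊗ₜ[R] d)) = H.epsR (z * c) * H.antipode d := by
  simp [etaMap]

lemma gen_eta (z : K) (t : K ⊗[R] K) :
    etaMap H (z ⊗ₜ[R] t)
      = LinearMap.mul' R K ((TensorProduct.map (H.epsR ∘ₗ LinearMap.mulLeft R z) H.antipode) t) := by
  induction t using TensorProduct.induction_on with
  | zero => simp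
  | tmul c d => simp
  | add c d hc hd => simp only [tmul_add, map_add, hc, hd]

lemma L5b : H.epsR ∘ₗ LinearMap.mulLeft R z = H.epsR ∘ₗ LinearMap.mulLeft R (H.epsR z) := by
  ext u
  simp only [LinearMap.comp_apply, LinearMap.mulLeft_apply]
  rw [epsR_mul]

lemma L5d : H.epsR ∘ₗ LinearMap.mulLeft R (H.epsR z)
    = LinearMap.mul' R K ∘ₗ LinearMap.rTensor K H.antipode ∘ₗ
        LinearMap.mulLeft R ((1:K) ⊗ₜ[R] H.epsR z) ∘ₗ H.comul := by
  ext u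
  simp only [LinearMap.comp_apply, LinearMap.mulLeft_apply]
  have h1 : ((1:K) ⊗ₜ[R] H.epsR z) * H.comul u = H.comul (H.epsR z * u) := by
    rw [H.comul_mul, comul_epsR₂, mul_assoc, comul_one_mul]
  rw [h1, eqR]

lemma gen_L5core (q1 : K) (w : K ⊗[R] K) (z : K) :
    LinearMap.mul' R K ((TensorProduct.map
        (LinearMap.mul' R K ∘ₗ LinearMap.rTensor K H.antipode ∘ₗ
          LinearMap.mulLeft R ((1:K) ⊗ₜ[R] H.epsR z)) H.antipode)
        ((TensorProduct.assoc R K K K).symm (q1 ⊗ₜ[R] w)))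
      = H.antipode q1 * (H.epsR z * LinearMap.mul' R K ((LinearMap.lTensor K H.antipode) w)) := by
  induction w using TensorProduct.induction_on with
  | zero => simp
  | tmul u v =>
    simp [Algebra.TensorProduct.tmul_mul_tmul, mul_assoc]
  | add u v hu hv => simp only [tmul_add, map_add, mul_add, hu, hv]

lemma gen_L5h (z : K) (t : K ⊗[R] K) :
    LinearMap.mul' R K ((TensorProduct.map
        (LinearMap.mul' R K ∘ₗ LinearMap.rTensor K H.antipode ∘ₗ
          LinearMap.mulLeft R ((1:K) ⊗ₜ[R] H.epsR z)) H.antipode)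
        ((TensorProduct.assoc R K K K).symm ((H.comul.lTensor K) t)))
      = LinearMap.mul' R K ((TensorProduct.map H.antipode
          (LinearMap.mulLeft R (H.epsR z) ∘ₗ H.epsL)) t) := by
  induction t using TensorProduct.induction_on with
  | zero => simp
  | tmul q1 q2 =>
    have : (H.comul.lTensor K) (q1 ⊗ₜ[R] q2) = q1 ⊗ₜ[R] H.comul q2 := by simp
    rw [this, gen_L5core, eqL]
    simp
  | add a b ha hb => simp only [map_add, tmul_add, ha, hb]

lemma gen_pull_right (f g : K →ₗ[R] K) (c : K) (s : K ⊗[R] K) :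
    LinearMap.mul' R K ((TensorProduct.map f (LinearMap.mulRight R c ∘ₗ g)) s)
      = LinearMap.mul' R K ((TensorProduct.map f g) s) * c := by
  induction s using TensorProduct.induction_on with
  | zero => simp
  | tmul a b => simp [mul_assoc]
  | add a b ha hb => simp only [map_add, add_mul, ha, hb]

lemma gen_pull_left (f g : K →ₗ[R] K) (c : K) (s : K ⊗[R] K) :
    LinearMap.mul' R K ((TensorProduct.map (LinearMap.mulLeft R c ∘ₗ f) g) s)
      = c * LinearMap.mul' R K ((TensorProduct.map f g) s) := by
  induction s using TensorProduct.induction_on with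
  | zero => simp
  | tmul a b => simp [mul_assoc]
  | add a b ha hb => simp only [map_add, mul_add, ha, hb]

/-- key lemma L5: `Σ ε_R(z·y⁽¹⁾)·S(y⁽²⁾) = S(y)·ε_R(z)` -/
lemma idL5 (z y : K) :
    etaMap H (z ⊗ₜ[R] H.comul y) = H.antipode y * H.epsR z := by
  rw [gen_eta, L5b, L5d]
  have h1 : TensorProduct.map
        (LinearMap.mul' R K ∘ₗ LinearMap.rTensor K H.antipode ∘ₗ
          LinearMap.mulLeft R ((1:K) ⊗ₜ[R] H.epsR z) ∘ₗ H.comul) H.antipode (H.comul y)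
      = TensorProduct.map
        ((LinearMap.mul' R K ∘ₗ LinearMap.rTensor K H.antipode ∘ₗ
          LinearMap.mulLeft R ((1:K) ⊗ₜ[R] H.epsR z)) ∘ₗ H.comul) H.antipode (H.comul y) := rfl
  rw [h1, ← gen_mapS_rTensor]
  have h2 : (H.comul.rTensor K) (H.comul y)
      = (TensorProduct.assoc R K K K).symm ((H.comul.lTensor K) (H.comul y)) := by
    rw [← coassoc_el]
    simp
  rw [h2, gen_L5h]
  have h3 : LinearMap.mulLeft R (H.epsR z) ∘ₗ H.epsL
      = LinearMap.mulRight R (H.epsR z) ∘ₗ H.epsL := by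
    ext u
    simp only [LinearMap.comp_apply, LinearMap.mulLeft_apply, LinearMap.mulRight_apply]
    rw [← comm_epsLR]
  rw [h3, gen_pull_right, idV3]

lemma gen_A3conv_pure (a b : K) (t : K ⊗[R] K) :
    LinearMap.mul' R K ((TensorProduct.map (H.epsR ∘ₗ LinearMap.mul' R K) (Nmap H))
        (ttcK ((a ⊗ₜ[R] b) ⊗ₜ[R] t)))
      = etaMap H (a ⊗ₜ[R] t) * H.antipode b := by
  induction t using TensorProduct.induction_on with
  | zero => simp
  | tmul c d => simp [mul_assoc]
  | add c d hc hd => simp only [tmul_add, map_add, mul_add, add_mul, hc, hd]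

lemma gen_A3conv' (y : K) (s : K ⊗[R] K) :
    LinearMap.mul' R K ((TensorProduct.map (H.epsR ∘ₗ LinearMap.mul' R K) (Nmap H))
        (ttcK (s ⊗ₜ[R] H.comul y)))
      = LinearMap.mul' R K ((TensorProduct.map
          (LinearMap.mulLeft R (H.antipode y) ∘ₗ H.epsR) H.antipode) s) := by
  induction s using TensorProduct.induction_on with
  | zero => simp
  | tmul a b => rw [gen_A3conv_pure, idL5]; simp [mul_assoc]
  | add a b ha hb => simp only [add_tmul, map_add, ha, hb]

lemma stepA (x y : K) :
    LinearMap.mul' R K ((TensorProduct.map (H.epsR ∘ₗ LinearMap.mul' R K) (Nmap H))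
        (ttcK (H.comul x ⊗ₜ[R] H.comul y)))
      = H.antipode y * H.antipode x := by
  rw [gen_A3conv', gen_pull_left, idV4]

end L5sec
end WeakHopfProof
set_option maxHeartbeats 1000000
set_option synthInstance.maxHeartbeats 200000
namespace WeakHopfProof
section Antimul
open TensorProduct LinearMap
variable {R K : Type*} [CommRing R] [Ring K] [Algebra R K] (H : WeakHopf R K)

noncomputable def sh3 : ((K ⊗[R] K) ⊗[R] K) ⊗[R] ((K ⊗[R] K) ⊗[R] K)
    →ₗ[R] ((K ⊗[R] K) ⊗[R] (K ⊗[R] K)) ⊗[R] (K ⊗[R] K) :=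
  LinearMap.rTensor (K ⊗[R] K) (ttcK (R := R) (K := K)) ∘ₗ
    (TensorProduct.tensorTensorTensorComm R (K ⊗[R] K) K (K ⊗[R] K) K).toLinearMap

lemma sh3_tmul (s' t' : K ⊗[R] K) (b d : K) :
    sh3 (R := R) ((s' ⊗ₜ[R] b) ⊗ₜ[R] (t' ⊗ₜ[R] d))
      = (ttcK (s' ⊗ₜ[R] t')) ⊗ₜ[R] (b ⊗ₜ[R] d) := by
  simp [sh3, TensorProduct.tensorTensorTensorComm_tmul]

lemma gen_HS (g k : K ⊗[R] K →ₗ[R] K) (s t : K ⊗[R] K) :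
    LinearMap.mul' R K ((TensorProduct.map
        (LinearMap.mul' R K ∘ₗ TensorProduct.map g (LinearMap.mul' R K)) k)
        (sh3 (((H.comul.rTensor K) s) ⊗ₜ[R] ((H.comul.rTensor K) t))))
      = LinearMap.mul' R K ((TensorProduct.map
          (LinearMap.mul' R K ∘ₗ TensorProduct.map g (LinearMap.mul' R K) ∘ₗ
            ttcK ∘ₗ TensorProduct.map H.comul H.comul) k)
          (ttcK (s ⊗ₜ[R] t))) := by
  induction s using TensorProduct.induction_on with
  | zero => simp
  | tmul a b =>
    induction t using TensorProduct.induction_on with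
    | zero => simp
    | tmul c d =>
      have h1 : (H.comul.rTensor K) (a ⊗ₜ[R] b) = (H.comul a) ⊗ₜ[R] b := by simp
      have h2 : (H.comul.rTensor K) (c ⊗ₜ[R] d) = (H.comul c) ⊗ₜ[R] d := by simp
      rw [h1, h2, sh3_tmul]
      simp
    | add c d hc hd => simp only [tmul_add, map_add, hc, hd]
  | add a b ha hb => simp only [add_tmul, map_add, ha, hb]

lemma gen_TS_core (g k : K ⊗[R] K →ₗ[R] K) (a c : K) (w v : K ⊗[R] K) :
    LinearMap.mul' R K ((TensorProduct.map
        (LinearMap.mul' R K ∘ₗ TensorProduct.map g (LinearMap.mul' R K)) k)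
        (sh3 (((TensorProduct.assoc R K K K).symm (a ⊗ₜ[R] w))
              ⊗ₜ[R] ((TensorProduct.assoc R K K K).symm (c ⊗ₜ[R] v)))))
      = g (a ⊗ₜ[R] c)
          * LinearMap.mul' R K ((TensorProduct.map (LinearMap.mul' R K) k) (ttcK (w ⊗ₜ[R] v))) := by
  induction w using TensorProduct.induction_on with
  | zero => simp
  | tmul w₁ w₂ =>
    induction v using TensorProduct.induction_on with
    | zero => simp
    | tmul v₁ v₂ =>
      rw [TensorProduct.assoc_symm_tmul, TensorProduct.assoc_symm_tmul, sh3_tmul]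
      simp [mul_assoc]
    | add v₁ v₂ h1 h2 => simp only [tmul_add, map_add, mul_add, h1, h2]
  | add w₁ w₂ h1 h2 => simp only [tmul_add, add_tmul, map_add, mul_add, add_mul, h1, h2]

lemma gen_TS (g k : K ⊗[R] K →ₗ[R] K) (s t : K ⊗[R] K) :
    LinearMap.mul' R K ((TensorProduct.map
        (LinearMap.mul' R K ∘ₗ TensorProduct.map g (LinearMap.mul' R K)) k)
        (sh3 (((TensorProduct.assoc R K K K).symm ((H.comul.lTensor K) s))
              ⊗ₜ[R] ((TensorProduct.assoc R K K K).symm ((H.comul.lTensor K) t)))))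
      = LinearMap.mul' R K ((TensorProduct.map g
          (LinearMap.mul' R K ∘ₗ TensorProduct.map (LinearMap.mul' R K) k ∘ₗ
            ttcK ∘ₗ TensorProduct.map H.comul H.comul))
          (ttcK (s ⊗ₜ[R] t))) := by
  induction s using TensorProduct.induction_on with
  | zero => simp
  | tmul a b =>
    induction t using TensorProduct.induction_on with
    | zero => simp
    | tmul c d =>
      have h1 : (H.comul.lTensor K) (a ⊗ₜ[R] b) = a ⊗ₜ[R] (H.comul b) := by simp
      have h2 : (H.comul.lTensor K) (c ⊗ₜ[R] d) = c ⊗ₜ[R] (H.comul d) := by simp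
      rw [h1, h2, gen_TS_core]
      simp
    | add c d hc hd => simp only [tmul_add, map_add, hc, hd]
  | add a b ha hb => simp only [add_tmul, map_add, ha, hb]

lemma coassoc_el' (z : K) :
    (H.comul.rTensor K) (H.comul z)
      = (TensorProduct.assoc R K K K).symm ((H.comul.lTensor K) (H.comul z)) := by
  rw [← coassoc_el]; simp

/-- THE antipode anti-multiplicativity -/
lemma antipode_mul (x y : K) : H.antipode (x * y) = H.antipode y * H.antipode x := by
  have hNF : convNF H = LinearMap.mul' R K ∘ₗ TensorProduct.map (Nmap H) (LinearMap.mul' R K) ∘ₗ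
      ttcK ∘ₗ TensorProduct.map H.comul H.comul := rfl
  have hFN : convFN H = LinearMap.mul' R K ∘ₗ TensorProduct.map (LinearMap.mul' R K) (Nmap H) ∘ₗ
      ttcK ∘ₗ TensorProduct.map H.comul H.comul := rfl
  have hFG : convFG H = LinearMap.mul' R K ∘ₗ TensorProduct.map (LinearMap.mul' R K) (Gmap H) ∘ₗ
      ttcK ∘ₗ TensorProduct.map H.comul H.comul := rfl
  have step1 :
      LinearMap.mul' R K ((TensorProduct.map (H.epsR ∘ₗ LinearMap.mul' R K) (Nmap H))
        (ttcK (H.comul x ⊗ₜ[R] H.comul y)))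
      = LinearMap.mul' R K ((TensorProduct.map (H.epsR ∘ₗ LinearMap.mul' R K) (Gmap H))
        (ttcK (H.comul x ⊗ₜ[R] H.comul y))) := by
    rw [← convNF_eq, hNF, ← gen_HS, coassoc_el', coassoc_el', gen_TS, ← hFN, convFN_eq,
      ← convFG_eq, hFG, ← gen_TS, ← coassoc_el', ← coassoc_el', gen_HS, ← hNF, convNF_eq]
  have := stepA H x y
  rw [step1, gen_cD, ← H.comul_mul, idV4] at this
  exact this

end Antimul
end WeakHopfProof
set_option maxHeartbeats 1000000
set_option synthInstance.maxHeartbeats 200000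
namespace WeakHopfProof
section Haar
open TensorProduct LinearMap
variable {R K : Type*} [CommRing R] [Ring K] [Algebra R K] (H : WeakHopf R K)

noncomputable def PhiC (t0 : K ⊗[R] K) : (K ⊗[R] K) ⊗[R] K →ₗ[R] K ⊗[R] K :=
  LinearMap.mul' R (K ⊗[R] K) ∘ₗ
    TensorProduct.map ((TensorProduct.mk R K K).flip 1 ∘ₗ H.antipode) (LinearMap.mulRight R t0) ∘ₗ
    (TensorProduct.assoc R K K K).toLinearMap

@[simp] lemma PhiC_tmul (t0 : K ⊗[R] K) (u v w : K) :
    PhiC H t0 ((u ⊗ₜ[R] v) ⊗ₜ[R] w)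
      = (H.antipode u ⊗ₜ[R] (1:K)) * ((v ⊗ₜ[R] w) * t0) := by
  simp [PhiC]

lemma gen_C1 (t0 : K ⊗[R] K) (W : (K ⊗[R] K) ⊗[R] K) :
    ((LinearMap.rTensor K (LinearMap.mul' R K ∘ₗ LinearMap.rTensor K H.antipode)) W) * t0
      = PhiC H t0 W := by
  induction W using TensorProduct.induction_on with
  | zero => simp
  | tmul s' w =>
    induction s' using TensorProduct.induction_on with
    | zero => simp
    | tmul u v =>
      simp only [LinearMap.rTensor_tmul, LinearMap.comp_apply, LinearMap.mul'_apply, PhiC_tmul]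
      rw [← mul_assoc, Algebra.TensorProduct.tmul_mul_tmul, one_mul]
    | add a b ha hb => simp only [add_tmul, map_add, add_mul, ha, hb]
  | add a b ha hb => simp only [map_add, add_mul, ha, hb]

lemma gen_C2core (t0 : K ⊗[R] K) (a : K) (w : K ⊗[R] K) :
    PhiC H t0 ((TensorProduct.assoc R K K K).symm (a ⊗ₜ[R] w))
      = (H.antipode a ⊗ₜ[R] (1:K)) * (w * t0) := by
  induction w using TensorProduct.induction_on with
  | zero => simp
  | tmul v w₂ => simp
  | add a' b' ha hb => simp only [tmul_add, map_add, add_mul, mul_add, ha, hb]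

lemma gen_C5 (h : K) (hint : H.IsLeftIntegral h) (t : K ⊗[R] K) :
    PhiC H (H.comul h) ((TensorProduct.assoc R K K K).symm ((H.comul.lTensor K) t))
      = ((LinearMap.mul' R K ((TensorProduct.map H.antipode H.epsL) t)) ⊗ₜ[R] (1:K))
          * H.comul h := by
  induction t using TensorProduct.induction_on with
  | zero => simp
  | tmul a b =>
    have h1 : (H.comul.lTensor K) (a ⊗ₜ[R] b) = a ⊗ₜ[R] H.comul b := by simp
    rw [h1, gen_C2core, ← H.comul_mul, hint b, H.comul_mul, comul_epsL₁,
      mul_assoc (H.epsL b ⊗ₜ[R] (1:K)) (H.comul 1) (H.comul h), comul_one_mul,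
      ← mul_assoc, Algebra.TensorProduct.tmul_mul_tmul, one_mul]
    simp
  | add a b ha hb => simp only [map_add, tmul_add, add_tmul, add_mul, ha, hb]

/-- identity (C) : `(1⊗y)·Δh = (S(y)⊗1)·Δh` for a left integral `h` -/
lemma idC (h : K) (hint : H.IsLeftIntegral h) (y : K) :
    ((1:K) ⊗ₜ[R] y) * H.comul h = (H.antipode y ⊗ₜ[R] (1:K)) * H.comul h := by
  have e1 : ((1:K) ⊗ₜ[R] y) * H.comul h
      = (((1:K) ⊗ₜ[R] y) * H.comul 1) * H.comul h := by
    rw [mul_assoc, comul_one_mul]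
  rw [e1, ← idB, ← eqRmap]
  have e2 : LinearMap.rTensor K (LinearMap.mul' R K ∘ₗ LinearMap.rTensor K H.antipode ∘ₗ H.comul)
      = LinearMap.rTensor K (LinearMap.mul' R K ∘ₗ LinearMap.rTensor K H.antipode) ∘ₗ
        LinearMap.rTensor K H.comul := by
    rw [← LinearMap.rTensor_comp]; rfl
  rw [e2, LinearMap.comp_apply, gen_C1, coassoc_el', gen_C5 H h hint, idV3]

noncomputable def PhiC' (t0 : K ⊗[R] K) : K ⊗[R] (K ⊗[R] K) →ₗ[R] K ⊗[R] K :=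
  LinearMap.mul' R (K ⊗[R] K) ∘ₗ
    TensorProduct.map (LinearMap.mulLeft R t0) (TensorProduct.mk R K K 1 ∘ₗ H.antipode) ∘ₗ
    (TensorProduct.assoc R K K K).symm.toLinearMap

@[simp] lemma PhiC'_tmul (t0 : K ⊗[R] K) (u v w : K) :
    PhiC' H t0 (u ⊗ₜ[R] (v ⊗ₜ[R] w))
      = (t0 * (u ⊗ₜ[R] v)) * ((1:K) ⊗ₜ[R] H.antipode w) := by
  simp [PhiC']

lemma gen_C1' (t0 : K ⊗[R] K) (W : K ⊗[R] (K ⊗[R] K)) :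
    t0 * ((LinearMap.lTensor K (LinearMap.mul' R K ∘ₗ LinearMap.lTensor K H.antipode)) W)
      = PhiC' H t0 W := by
  induction W using TensorProduct.induction_on with
  | zero => simp
  | tmul u s' =>
    induction s' using TensorProduct.induction_on with
    | zero => simp
    | tmul v w =>
      simp only [LinearMap.lTensor_tmul, LinearMap.comp_apply, LinearMap.mul'_apply, PhiC'_tmul]
      rw [mul_assoc, Algebra.TensorProduct.tmul_mul_tmul, mul_one]
    | add a b ha hb => simp only [tmul_add, map_add, mul_add, ha, hb]
  | add a b ha hb => simp only [map_add, mul_add, ha, hb]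

lemma gen_C2core' (t0 : K ⊗[R] K) (b : K) (w : K ⊗[R] K) :
    PhiC' H t0 ((TensorProduct.assoc R K K K) (w ⊗ₜ[R] b))
      = (t0 * w) * ((1:K) ⊗ₜ[R] H.antipode b) := by
  induction w using TensorProduct.induction_on with
  | zero => simp
  | tmul u v => simp
  | add a' b' ha hb => simp only [add_tmul, map_add, add_mul, mul_add, ha, hb]

lemma gen_C5' (h : K) (hint : H.IsRightIntegral h) (t : K ⊗[R] K) :
    PhiC' H (H.comul h) ((TensorProduct.assoc R K K K) ((H.comul.rTensor K) t))
      = H.comul h * ((1:K) ⊗ₜ[R] (LinearMap.mul' R K ((TensorProduct.map H.epsR H.antipode) t))) := by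
  induction t using TensorProduct.induction_on with
  | zero => simp
  | tmul a b =>
    have h1 : (H.comul.rTensor K) (a ⊗ₜ[R] b) = H.comul a ⊗ₜ[R] b := by simp
    rw [h1, gen_C2core', ← H.comul_mul, hint a, H.comul_mul, comul_epsR₁,
      ← mul_assoc (H.comul h), comul_mul_one]
    rw [mul_assoc, Algebra.TensorProduct.tmul_mul_tmul, one_mul]
    simp
  | add a b ha hb => simp only [map_add, tmul_add, add_tmul, add_mul, mul_add, ha, hb]

end Haar
end WeakHopfProof
set_option maxHeartbeats 1000000
set_option synthInstance.maxHeartbeats 200000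
namespace WeakHopfProof
section Final
open TensorProduct LinearMap
variable {R K : Type*} [CommRing R] [Ring K] [Algebra R K] (H : WeakHopf R K)

/-- identity (C') : `Δh·(y⊗1) = Δh·(1⊗S y)` for a right integral `h` -/
lemma idC' (h : K) (hint : H.IsRightIntegral h) (y : K) :
    H.comul h * (y ⊗ₜ[R] (1:K)) = H.comul h * ((1:K) ⊗ₜ[R] H.antipode y) := by
  have e1 : H.comul h * (y ⊗ₜ[R] (1:K))
      = H.comul h * (H.comul 1 * (y ⊗ₜ[R] (1:K))) := by
    rw [← mul_assoc, comul_mul_one]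
  rw [e1, ← idA, ← eqLmap]
  have e2 : LinearMap.lTensor K (LinearMap.mul' R K ∘ₗ LinearMap.lTensor K H.antipode ∘ₗ H.comul)
      = LinearMap.lTensor K (LinearMap.mul' R K ∘ₗ LinearMap.lTensor K H.antipode) ∘ₗ
        LinearMap.lTensor K H.comul := by
    rw [← LinearMap.lTensor_comp]; rfl
  rw [e2, LinearMap.comp_apply, gen_C1', ← coassoc_el, gen_C5' H h hint, idV4]

/-- flipped version using cocommutativity -/
lemma idC2' (h : K) (hint : H.IsRightIntegral h)
    (hcocomm : (TensorProduct.comm R K K) (H.comul h) = H.comul h) (y : K) :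
    H.comul h * ((1:K) ⊗ₜ[R] y) = H.comul h * (H.antipode y ⊗ₜ[R] (1:K)) := by
  have := congrArg (TensorProduct.comm R K K) (idC' H h hint y)
  rw [comm_mul, comm_mul, hcocomm] at this
  simpa using this

lemma gen_S2a (t : K ⊗[R] K) (z : K) :
    LinearMap.mul' R K ((LinearMap.rTensor K H.antipode) (t * ((1:K) ⊗ₜ[R] z)))
      = LinearMap.mul' R K ((LinearMap.rTensor K H.antipode) t) * z := by
  induction t using TensorProduct.induction_on with
  | zero => simp
  | tmul u v => simp [Algebra.TensorProduct.tmul_mul_tmul, mul_assoc]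
  | add a b ha hb => simp only [add_mul, map_add, ha, hb]

lemma gen_S2b (t : K ⊗[R] K) (z : K) :
    LinearMap.mul' R K ((LinearMap.rTensor K H.antipode) (t * (z ⊗ₜ[R] (1:K))))
      = H.antipode z * LinearMap.mul' R K ((LinearMap.rTensor K H.antipode) t) := by
  induction t using TensorProduct.induction_on with
  | zero => simp
  | tmul u v =>
    simp only [Algebra.TensorProduct.tmul_mul_tmul, mul_one, LinearMap.rTensor_tmul,
      LinearMap.mul'_apply]
    rw [antipode_mul, mul_assoc]
  | add a b ha hb => simp only [add_mul, map_add, mul_add, ha, hb]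

/-- `S ∘ S = id` in presence of a suitable Haar integral -/
lemma antipode_sq (h : K) (hint : H.IsRightIntegral h)
    (hcocomm : (TensorProduct.comm R K K) (H.comul h) = H.comul h)
    (hRn : H.epsR h = 1) (y : K) :
    H.antipode (H.antipode y) = y := by
  have e := idC2' H h hint hcocomm y
  have e2 := congrArg (fun t => LinearMap.mul' R K ((LinearMap.rTensor K H.antipode) t)) e
  simp only [gen_S2a, gen_S2b] at e2
  rw [eqR, hRn] at e2
  rw [one_mul, mul_one] at e2
  exact e2.symm

lemma gen_AMa (t : K ⊗[R] K) (z : K) :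
    (z ⊗ₜ[R] (1:K)) * ((LinearMap.lTensor K H.antipode) t)
      = (LinearMap.lTensor K H.antipode) ((z ⊗ₜ[R] (1:K)) * t) := by
  induction t using TensorProduct.induction_on with
  | zero => simp
  | tmul u v => simp [Algebra.TensorProduct.tmul_mul_tmul]
  | add a b ha hb => simp only [mul_add, map_add, ha, hb]

lemma gen_AM2 (t : K ⊗[R] K) (z : K) :
    (LinearMap.lTensor K H.antipode) (((1:K) ⊗ₜ[R] z) * t)
      = ((LinearMap.lTensor K H.antipode) t) * ((1:K) ⊗ₜ[R] H.antipode z) := by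
  induction t using TensorProduct.induction_on with
  | zero => simp
  | tmul u v =>
    simp only [Algebra.TensorProduct.tmul_mul_tmul, one_mul, mul_one, LinearMap.lTensor_tmul]
    rw [antipode_mul]
  | add a b ha hb => simp only [mul_add, map_add, add_mul, ha, hb]

/-- centrality of `λ = (id⊗S)Δh` -/
lemma centrality (h : K) (hintL : H.IsLeftIntegral h) (hintR : H.IsRightIntegral h)
    (hcocomm : (TensorProduct.comm R K K) (H.comul h) = H.comul h)
    (hRn : H.epsR h = 1) (x : K) :
    (x ⊗ₜ[R] (1:K)) * ((LinearMap.lTensor K H.antipode) (H.comul h))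
      = ((LinearMap.lTensor K H.antipode) (H.comul h)) * ((1:K) ⊗ₜ[R] x) := by
  have hx : x = H.antipode (H.antipode x) := (antipode_sq H h hintR hcocomm hRn x).symm
  rw [hx, gen_AMa, ← idC H h hintL, gen_AM2]

/-- the `q`-contraction for the symmetry argument -/
noncomputable def qMap : (K ⊗[R] K) ⊗[R] (K ⊗[R] K) →ₗ[R] K ⊗[R] K :=
  TensorProduct.map (LinearMap.mul' R K)
      (LinearMap.mul' R K ∘ₗ (TensorProduct.comm R K K).toLinearMap) ∘ₗ ttcK

@[simp] lemma qMap_tmul (a b c d : K) :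
    qMap (R := R) (K := K) ((a ⊗ₜ[R] b) ⊗ₜ[R] (c ⊗ₜ[R] d)) = (a * c) ⊗ₜ[R] (d * b) := by
  simp [qMap]

lemma gen_q1 (u v : K) (t : K ⊗[R] K) :
    qMap (R := R) ((u ⊗ₜ[R] v) ⊗ₜ[R] t) = ((u ⊗ₜ[R] (1:K)) * t) * ((1:K) ⊗ₜ[R] v) := by
  induction t using TensorProduct.induction_on with
  | zero => simp
  | tmul c d => simp [Algebra.TensorProduct.tmul_mul_tmul]
  | add a b ha hb => simp only [tmul_add, map_add, mul_add, add_mul, ha, hb]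

lemma gen_q2 (c d : K) (s : K ⊗[R] K) :
    qMap (R := R) (s ⊗ₜ[R] (c ⊗ₜ[R] d)) = (((1:K) ⊗ₜ[R] d) * s) * (c ⊗ₜ[R] (1:K)) := by
  induction s using TensorProduct.induction_on with
  | zero => simp
  | tmul a b => simp [Algebra.TensorProduct.tmul_mul_tmul]
  | add a b ha hb => simp only [add_tmul, map_add, mul_add, add_mul, ha, hb]

end Final
end WeakHopfProof

set_option maxHeartbeats 1000000
set_option synthInstance.maxHeartbeats 200000
open WeakHopfProof in
/-- Let `K` be a weak Hopf algebra with a cocommutative, `S`-invariant Haar integral `h_K`.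
Then `λ = Σ_{(h_K)} h_K⁽¹⁾ ⊗ S(h_K⁽²⁾)` is a symmetric separability idempotent of `K`:
(i) `Σ x·λ⁽¹⁾ ⊗ λ⁽²⁾ = Σ λ⁽¹⁾ ⊗ λ⁽²⁾·x` for all `x ∈ K`;
(ii) `Σ λ⁽¹⁾·λ⁽²⁾ = 1`;
(iii) `Σ λ⁽¹⁾ ⊗ λ⁽²⁾ = Σ λ⁽²⁾ ⊗ λ⁽¹⁾`. -/
theorem haar_symmetric_separability_idempotent {R : Type*} {K : Type*}
    [CommRing R] [Ring K] [Algebra R K]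
    (H : WeakHopf R K) (h : K) (hhaar : H.IsHaar h)
    (hS : H.antipode h = h)
    (hcocomm : (TensorProduct.comm R K K) (H.comul h) = H.comul h) :
    (∀ x : K,
        (LinearMap.rTensor K (LinearMap.mulLeft R x))
            ((LinearMap.lTensor K H.antipode) (H.comul h))
          = (LinearMap.lTensor K (LinearMap.mulRight R x))
              ((LinearMap.lTensor K H.antipode) (H.comul h)))
    ∧ LinearMap.mul' R K ((LinearMap.lTensor K H.antipode) (H.comul h)) = 1
    ∧ (TensorProduct.comm R K K) ((LinearMap.lTensor K H.antipode) (H.comul h))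
        = (LinearMap.lTensor K H.antipode) (H.comul h) := by
  
  obtain ⟨hL, hR, hLn, hRn⟩ := hhaar
  set L : K ⊗[R] K := (LinearMap.lTensor K H.antipode) (H.comul h) with hLdef
  have cent : ∀ x : K, (x ⊗ₜ[R] (1:K)) * L = L * ((1:K) ⊗ₜ[R] x) :=
    fun x => centrality H h hL hR hcocomm hRn x
  have part2 : LinearMap.mul' R K L = 1 := by
    rw [hLdef, eqL, hLn]
  have hM : (TensorProduct.comm R K K) L = (LinearMap.rTensor K H.antipode) (H.comul h) := by
    rw [hLdef, comm_lTensor, hcocomm]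
  have mflip : LinearMap.mul' R K ((TensorProduct.comm R K K) L) = 1 := by
    rw [hM, eqR, hRn]
  set M : K ⊗[R] K := (TensorProduct.comm R K K) L with hMdef
  have wayA : ∀ s : K ⊗[R] K, qMap (R := R) (s ⊗ₜ[R] L)
      = L * ((1:K) ⊗ₜ[R] (LinearMap.mul' R K s)) := by
    intro s
    induction s using TensorProduct.induction_on with
    | zero => simp
    | tmul u v =>
      rw [gen_q1, cent u, mul_assoc, Algebra.TensorProduct.tmul_mul_tmul, one_mul,
        LinearMap.mul'_apply]
    | add a b ha hb =>
      simp only [add_tmul, map_add, ha, hb, tmul_add, mul_add]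
  have opcent : ∀ d : K, ((1:K) ⊗ₜ[R] d) * M = M * (d ⊗ₜ[R] (1:K)) := by
    intro d
    have h0 := congrArg (TensorProduct.comm R K K) (cent d)
    rw [comm_mul, comm_mul] at h0
    rw [hMdef]
    simpa using h0
  have wayB : ∀ t : K ⊗[R] K, qMap (R := R) (M ⊗ₜ[R] t)
      = M * ((LinearMap.mul' R K ((TensorProduct.comm R K K) t)) ⊗ₜ[R] (1:K)) := by
    intro t
    induction t using TensorProduct.induction_on with
    | zero => simp
    | tmul c d =>
      rw [gen_q2, opcent d, mul_assoc, Algebra.TensorProduct.tmul_mul_tmul, mul_one]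
      simp
    | add a b ha hb =>
      simp only [tmul_add, map_add, ha, hb, add_tmul, mul_add]
  have hq1 : qMap (R := R) (M ⊗ₜ[R] L) = L := by
    rw [wayA M, mflip]
    have : ((1:K) ⊗ₜ[R] (1:K)) = (1 : K ⊗[R] K) := rfl
    rw [this, mul_one]
  have hq2 : qMap (R := R) (M ⊗ₜ[R] L) = M := by
    rw [wayB L, ← hMdef, mflip]
    have : ((1:K) ⊗ₜ[R] (1:K)) = (1 : K ⊗[R] K) := rfl
    rw [this, mul_one]
  have part3 : M = L := hq2 ▸ hq1
  refine ⟨fun x => ?_, part2, part3⟩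
  rw [← tmul_one_mul (R := R) x L, ← mul_one_tmul (R := R) x L]
  exact cent x
end
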